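/- arXiv:2201.11545 — 8 statements merged into one kernel-verified Lean document; each statement's English description precedes it below -/
import Mathlib

section
/- If a rectangle is tiled by finitely many axis-parallel squares, then the ratio of the side lengths of the rectangle is a rational number. -/
open Set MeasureTheory Filter Topology

/-- Upper bound: squares with disjoint interiors inside a rectangle have total area
at most the rectangle's area. -/
lemma dehn_area_sum_le (n : ℕ) (x y s : Fin n → ℝ) (a b c d : ℝ)
    (hab : a ≤ b) (hcd : c ≤ d) (hs : ∀ i, 0 ≤ s i)
    (hc : ∀ i, a ≤ x i ∧ x i + s i ≤ b ∧ c ≤ y i ∧ y i + s i ≤ d)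
    (hd : ∀ i j, i ≠ j →
      x i + s i ≤ x j ∨ x j + s j ≤ x i ∨ y i + s i ≤ y j ∨ y j + s j ≤ y i) :
    ∑ i, s i ^ 2 ≤ (b - a) * (d - c) := by
  set U : Fin n → Set (ℝ × ℝ) :=
    fun i => Ioo (x i) (x i + s i) ×ˢ Ioo (y i) (y i + s i) with hU
  have hmeas : ∀ i, MeasurableSet (U i) := fun i =>
    measurableSet_Ioo.prod measurableSet_Ioo
  have hdisj : Pairwise (Function.onFun Disjoint U) := by
    intro i j hij
    rw [Function.onFun, Set.disjoint_left]
    rintro ⟨px, py⟩ hpi hpj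
    simp only [hU, Set.mem_prod, Set.mem_Ioo] at hpi hpj
    rcases hd i j hij with h | h | h | h <;>
      [linarith [hpi.1.2, hpj.1.1]; linarith [hpj.1.2, hpi.1.1];
       linarith [hpi.2.2, hpj.2.1]; linarith [hpj.2.2, hpi.2.1]]
  have hsub : (⋃ i, U i) ⊆ Icc a b ×ˢ Icc c d := by
    rintro ⟨px, py⟩ hp
    simp only [Set.mem_iUnion] at hp
    obtain ⟨i, hpi⟩ := hp
    simp only [hU, Set.mem_prod, Set.mem_Ioo] at hpi
    obtain ⟨h1, h2, h3, h4⟩ := hc i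
    exact ⟨⟨by linarith [hpi.1.1], by linarith [hpi.1.2]⟩,
      ⟨by linarith [hpi.2.1], by linarith [hpi.2.2]⟩⟩
  have hUvol : ∀ i, volume (U i) = ENNReal.ofReal (s i ^ 2) := by
    intro i
    rw [hU]
    rw [Measure.volume_eq_prod, Measure.prod_prod, Real.volume_Ioo, Real.volume_Ioo]
    rw [show x i + s i - x i = s i by ring, show y i + s i - y i = s i by ring,
      ← ENNReal.ofReal_mul (hs i), sq]
  have key : ENNReal.ofReal (∑ i, s i ^ 2) ≤ ENNReal.ofReal ((b - a) * (d - c)) := by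
    calc ENNReal.ofReal (∑ i, s i ^ 2)
        = ∑ i, ENNReal.ofReal (s i ^ 2) :=
          ENNReal.ofReal_sum_of_nonneg (fun i _ => sq_nonneg _)
      _ = ∑' i, volume (U i) := by
          rw [tsum_fintype]
          exact Finset.sum_congr rfl (fun i _ => (hUvol i).symm)
      _ = volume (⋃ i, U i) := (measure_iUnion hdisj hmeas).symm
      _ ≤ volume (Icc a b ×ˢ Icc c d) := measure_mono hsub
      _ = ENNReal.ofReal ((b - a) * (d - c)) := by
          rw [Measure.volume_eq_prod, Measure.prod_prod, Real.volume_Icc, Real.volume_Icc,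
            ← ENNReal.ofReal_mul (by linarith)]
  exact (ENNReal.ofReal_le_ofReal_iff
    (mul_nonneg (by linarith) (by linarith))).1 key

/-- Lower bound: if the closed squares cover the rectangle, total area is at least
the rectangle's area. -/
lemma dehn_area_le_sum (n : ℕ) (x y s : Fin n → ℝ) (a b c d : ℝ)
    (hab : a ≤ b) (hcd : c ≤ d) (hs : ∀ i, 0 ≤ s i)
    (hunion : (⋃ i, Set.Icc (x i) (x i + s i) ×ˢ Set.Icc (y i) (y i + s i))
      = Set.Icc a b ×ˢ Set.Icc c d) :
    (b - a) * (d - c) ≤ ∑ i, s i ^ 2 := by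
  have h1 : volume (Icc a b ×ˢ Icc c d : Set (ℝ × ℝ))
      ≤ ∑ i, volume (Icc (x i) (x i + s i) ×ˢ Icc (y i) (y i + s i) : Set (ℝ × ℝ)) := by
    rw [← hunion]
    exact measure_iUnion_fintype_le volume _
  have h2 : ∀ i, volume (Icc (x i) (x i + s i) ×ˢ Icc (y i) (y i + s i) : Set (ℝ × ℝ))
      = ENNReal.ofReal (s i ^ 2) := by
    intro i
    rw [Measure.volume_eq_prod, Measure.prod_prod, Real.volume_Icc, Real.volume_Icc,
      show x i + s i - x i = s i by ring, show y i + s i - y i = s i by ring,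
      ← ENNReal.ofReal_mul (hs i), sq]
  have h3 : volume (Icc a b ×ˢ Icc c d : Set (ℝ × ℝ))
      = ENNReal.ofReal ((b - a) * (d - c)) := by
    rw [Measure.volume_eq_prod, Measure.prod_prod, Real.volume_Icc, Real.volume_Icc,
      ← ENNReal.ofReal_mul (by linarith)]
  have key : ENNReal.ofReal ((b - a) * (d - c)) ≤ ENNReal.ofReal (∑ i, s i ^ 2) := by
    rw [← h3, ENNReal.ofReal_sum_of_nonneg (fun i _ => sq_nonneg _)]
    calc volume (Icc a b ×ˢ Icc c d : Set (ℝ × ℝ)) ≤ _ := h1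
      _ = ∑ i, ENNReal.ofReal (s i ^ 2) := Finset.sum_congr rfl (fun i _ => h2 i)
  exact (ENNReal.ofReal_le_ofReal_iff
    (Finset.sum_nonneg (fun i _ => sq_nonneg _))).1 key

/-- If a rectangle is tiled by finitely many axis-parallel squares, then the ratio of
the side lengths of the rectangle is rational. -/
theorem rect_tiled_by_squares_ratio_rational
    (a b c d : ℝ) (hab : a < b) (hcd : c < d)
    (n : ℕ) (x y s : Fin n → ℝ) (hs : ∀ i, 0 < s i)
    (hdisj : ∀ i j, i ≠ j →
      (Set.Ioo (x i) (x i + s i) ×ˢ Set.Ioo (y i) (y i + s i)) ∩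
      (Set.Ioo (x j) (x j + s j) ×ˢ Set.Ioo (y j) (y j + s j)) = ∅)
    (hunion : (⋃ i, Set.Icc (x i) (x i + s i) ×ˢ Set.Icc (y i) (y i + s i))
      = Set.Icc a b ×ˢ Set.Icc c d) :
    ∃ q : ℚ, (d - c) / (b - a) = q := by
  by_contra hcon
  push_neg at hcon
  set u : ℝ := b - a with hu_def
  set v : ℝ := d - c with hv_def
  have hu : 0 < u := by simp [hu_def]; linarith
  have hv : 0 < v := by simp [hv_def]; linarith
  -- v and u are linearly independent over ℚ
  have hvu : v ≠ u := by
    intro h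
    exact hcon 1 (by rw [h]; field_simp; norm_num)
  have hli : LinearIndependent ℚ ![u, v] := by
    rw [LinearIndependent.pair_iff]
    intro p q hpq
    rw [Rat.smul_def, Rat.smul_def] at hpq
    rcases eq_or_ne q 0 with hq0 | hq0
    · subst hq0
      simp at hpq
      rcases hpq with h | h
      · exact ⟨by exact_mod_cast h, rfl⟩
      · exact absurd h hu.ne'
    · exfalso
      apply hcon (-(p / q))
      have hq0' : (q : ℝ) ≠ 0 := by exact_mod_cast hq0
      push_cast
      rw [div_eq_iff hu.ne']
      field_simp
      linear_combination hpq
  have hrange : Set.range ![u, v] = ({u, v} : Set ℝ) := by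
    simp only [Matrix.range_cons, Matrix.range_empty, Set.union_empty,
      Set.union_singleton]
    exact Set.pair_comm v u
  have hset : LinearIndepOn ℚ id ({u, v} : Set ℝ) := by
    rw [← hrange]; exact (linearIndepOn_id_range_iff hli.injective).mpr hli
  -- extend to a basis and build a ℚ-linear functional g with g u = 1, g v = -1
  set B := Module.Basis.extend hset with hB
  have humem : u ∈ hset.extend (Set.subset_univ _) :=
    hset.subset_extend _ (by simp)
  have hvmem : v ∈ hset.extend (Set.subset_univ _) :=
    hset.subset_extend _ (by simp)
  set g : ℝ →ₗ[ℚ] ℝ :=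
    B.constr ℚ (fun i => if (i : ℝ) = u then (1 : ℝ) else -1) with hg
  have hgu : g u = 1 := by
    have h1 : g (B ⟨u, humem⟩) = if ((⟨u, humem⟩ : hset.extend _) : ℝ) = u
        then (1 : ℝ) else -1 := Module.Basis.constr_basis B ℚ _ _
    rw [Module.Basis.extend_apply_self] at h1
    simpa using h1
  have hgv : g v = -1 := by
    have h1 : g (B ⟨v, hvmem⟩)
        = (fun i : hset.extend (Set.subset_univ _) =>
            if (i : ℝ) = u then (1 : ℝ) else -1) ⟨v, hvmem⟩ :=
      Module.Basis.constr_basis B ℚ _ _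
    rw [Module.Basis.extend_apply_self] at h1
    simpa [hvu] using h1
  -- containment of each square in the rectangle
  have hcont : ∀ i, a ≤ x i ∧ x i + s i ≤ b ∧ c ≤ y i ∧ y i + s i ≤ d := by
    intro i
    have hsub : Set.Icc (x i) (x i + s i) ×ˢ Set.Icc (y i) (y i + s i)
        ⊆ Set.Icc a b ×ˢ Set.Icc c d := by
      rw [← hunion]
      exact Set.subset_iUnion
        (fun j => Set.Icc (x j) (x j + s j) ×ˢ Set.Icc (y j) (y j + s j)) i
    have h1 := hsub (Set.mk_mem_prod
      (Set.mem_Icc.2 ⟨le_rfl, by linarith [hs i]⟩)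
      (Set.mem_Icc.2 ⟨le_rfl, by linarith [hs i]⟩))
    have h2 := hsub (Set.mk_mem_prod
      (Set.mem_Icc.2 ⟨by linarith [hs i], le_rfl⟩)
      (Set.mem_Icc.2 ⟨by linarith [hs i], le_rfl⟩))
    simp only [Set.mem_prod, Set.mem_Icc] at h1 h2
    exact ⟨h1.1.1, h2.1.2, h1.2.1, h2.2.2⟩
  -- order-form of disjointness
  have hsep : ∀ i j, i ≠ j →
      x i + s i ≤ x j ∨ x j + s j ≤ x i ∨ y i + s i ≤ y j ∨ y j + s j ≤ y i := by
    intro i j hij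
    by_contra hcon4
    push_neg at hcon4
    obtain ⟨h1, h2, h3, h4⟩ := hcon4
    have hx1 : max (x i) (x j) < min (x i + s i) (x j + s j) :=
      max_lt (lt_min (by linarith [hs i]) h2) (lt_min h1 (by linarith [hs j]))
    have hy1 : max (y i) (y j) < min (y i + s i) (y j + s j) :=
      max_lt (lt_min (by linarith [hs i]) h4) (lt_min h3 (by linarith [hs j]))
    set px := (max (x i) (x j) + min (x i + s i) (x j + s j)) / 2
    set py := (max (y i) (y j) + min (y i + s i) (y j + s j)) / 2
    have hmem : ((px, py) : ℝ × ℝ) ∈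
        (Set.Ioo (x i) (x i + s i) ×ˢ Set.Ioo (y i) (y i + s i)) ∩
        (Set.Ioo (x j) (x j + s j) ×ˢ Set.Ioo (y j) (y j + s j)) := by
      refine ⟨⟨⟨?_, ?_⟩, ?_, ?_⟩, ⟨?_, ?_⟩, ?_, ?_⟩ <;>
        simp only [px, py] <;>
        [linarith [le_max_left (x i) (x j)];
         linarith [min_le_left (x i + s i) (x j + s j)];
         linarith [le_max_left (y i) (y j)];
         linarith [min_le_left (y i + s i) (y j + s j)];
         linarith [le_max_right (x i) (x j)];
         linarith [min_le_right (x i + s i) (x j + s j)];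
         linarith [le_max_right (y i) (y j)];
         linarith [min_le_right (y i + s i) (y j + s j)]]
    rw [hdisj i j hij] at hmem
    exact hmem
  -- equality of areas at ε = 0
  have hE : ∑ i, s i ^ 2 = u * v := by
    refine le_antisymm ?_ (dehn_area_le_sum n x y s a b c d hab.le hcd.le (fun i => (hs i).le) hunion)
    exact dehn_area_sum_le n x y s a b c d hab.le hcd.le (fun i => (hs i).le) hcont hsep
  -- monotonicity is eventually preserved under perturbation
  have hmono : ∀ t w : ℝ, t ≤ w →
      ∀ᶠ ε in 𝓝 (0 : ℝ), t + ε * g t ≤ w + ε * g w := by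
    intro t w htw
    rcases eq_or_lt_of_le htw with rfl | hlt
    · exact Eventually.of_forall (fun ε => le_rfl)
    · have hcont2 : Continuous fun ε : ℝ => (w + ε * g w) - (t + ε * g t) := by
        fun_prop
      have htend : Tendsto (fun ε : ℝ => (w + ε * g w) - (t + ε * g t))
          (𝓝 0) (𝓝 (w - t)) := by
        have := hcont2.tendsto 0
        simpa using this
      have := htend.eventually (eventually_gt_nhds (show (0:ℝ) < w - t by linarith))
      filter_upwards [this] with ε hε
      linarith
  -- the eventual area inequality for the perturbed configuration
  have hkey : ∀ᶠ ε in 𝓝 (0 : ℝ),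
      ∑ i, (s i + ε * g (s i)) ^ 2 ≤ (u + ε * g u) * (v + ε * g v) := by
    have E1 : ∀ᶠ ε in 𝓝 (0 : ℝ), ∀ i, 0 ≤ s i + ε * g (s i) := by
      rw [eventually_all]
      intro i
      have := hmono 0 (s i) (hs i).le
      filter_upwards [this] with ε hε
      simpa using hε
    have E2 : ∀ᶠ ε in 𝓝 (0 : ℝ), a + ε * g a ≤ b + ε * g b := hmono a b hab.le
    have E3 : ∀ᶠ ε in 𝓝 (0 : ℝ), c + ε * g c ≤ d + ε * g d := hmono c d hcd.le
    have E4 : ∀ᶠ ε in 𝓝 (0 : ℝ), ∀ i,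
        a + ε * g a ≤ x i + ε * g (x i) ∧
        (x i + s i) + ε * g (x i + s i) ≤ b + ε * g b ∧
        c + ε * g c ≤ y i + ε * g (y i) ∧
        (y i + s i) + ε * g (y i + s i) ≤ d + ε * g d := by
      rw [eventually_all]
      intro i
      obtain ⟨h1, h2, h3, h4⟩ := hcont i
      filter_upwards [hmono a (x i) h1, hmono (x i + s i) b h2,
        hmono c (y i) h3, hmono (y i + s i) d h4] with ε a1 a2 a3 a4
      exact ⟨a1, a2, a3, a4⟩
    have E5 : ∀ᶠ ε in 𝓝 (0 : ℝ), ∀ i j, i ≠ j →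
        (x i + s i) + ε * g (x i + s i) ≤ x j + ε * g (x j) ∨
        (x j + s j) + ε * g (x j + s j) ≤ x i + ε * g (x i) ∨
        (y i + s i) + ε * g (y i + s i) ≤ y j + ε * g (y j) ∨
        (y j + s j) + ε * g (y j + s j) ≤ y i + ε * g (y i) := by
      rw [eventually_all]
      intro i
      rw [eventually_all]
      intro j
      rcases eq_or_ne i j with rfl | hij
      · exact Eventually.of_forall (fun ε h => absurd rfl h)
      · rcases hsep i j hij with h | h | h | h
        · filter_upwards [hmono _ _ h] with ε hε _; exact Or.inl hε
        · filter_upwards [hmono _ _ h] with ε hε _; exact Or.inr (Or.inl hε)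
        · filter_upwards [hmono _ _ h] with ε hε _; exact Or.inr (Or.inr (Or.inl hε))
        · filter_upwards [hmono _ _ h] with ε hε _; exact Or.inr (Or.inr (Or.inr hε))
    filter_upwards [E1, E2, E3, E4, E5] with ε h1 h2 h3 h4 h5
    have hmain := dehn_area_sum_le n
      (fun i => x i + ε * g (x i)) (fun i => y i + ε * g (y i))
      (fun i => s i + ε * g (s i))
      (a + ε * g a) (b + ε * g b) (c + ε * g c) (d + ε * g d)
      h2 h3 h1
      (fun i => by
        obtain ⟨a1, a2, a3, a4⟩ := h4 i
        rw [map_add g] at a2 a4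
        exact ⟨a1, by linarith, a3, by linarith⟩)
      (fun i j hij => by
        rcases h5 i j hij with h | h | h | h <;> rw [map_add g] at h
        · exact Or.inl (by linarith)
        · exact Or.inr (Or.inl (by linarith))
        · exact Or.inr (Or.inr (Or.inl (by linarith)))
        · exact Or.inr (Or.inr (Or.inr (by linarith))))
    calc ∑ i, (s i + ε * g (s i)) ^ 2 ≤ _ := hmain
      _ = (u + ε * g u) * (v + ε * g v) := by
        rw [hu_def, hv_def]
        rw [show g (b - a) = g b - g a from map_sub g b a,
          show g (d - c) = g d - g c from map_sub g d c]
        ring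
  -- extract a concrete δ and derive the contradiction
  rw [Metric.eventually_nhds_iff] at hkey
  obtain ⟨δ, hδ, hP⟩ := hkey
  set t := δ / 2 with ht_def
  have ht : 0 < t := by positivity
  have hd1 : dist t (0 : ℝ) < δ := by
    rw [Real.dist_eq]
    rw [sub_zero, abs_of_pos ht]
    linarith
  have hd2 : dist (-t) (0 : ℝ) < δ := by
    rw [Real.dist_eq, sub_zero, abs_neg, abs_of_pos ht]
    linarith
  have I1 := hP hd1
  have I2 := hP hd2
  rw [hgu, hgv] at I1 I2
  have hsum1 : ∑ i, (s i + t * g (s i)) ^ 2 + ∑ i, (s i + -t * g (s i)) ^ 2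
      = 2 * (∑ i, s i ^ 2) + 2 * t ^ 2 * (∑ i, (g (s i)) ^ 2) := by
    rw [← Finset.sum_add_distrib, Finset.mul_sum, Finset.mul_sum, ← Finset.sum_add_distrib]
    exact Finset.sum_congr rfl (fun i _ => by ring)
  have hnn : 0 ≤ ∑ i, (g (s i)) ^ 2 := Finset.sum_nonneg (fun i _ => sq_nonneg _)
  nlinarith [I1, I2, hsum1, hE, sq_nonneg t]
end

section
/- Let R = [a,b]×[c,d] be a rectangle tiled by axis-parallel squares. Suppose (i) at least one vertical line of the form x = k + 1/2 (k an integer) intersects R, (ii) no line of the form x = k + 1/2 or y = k + 1/2 contains a vertex of any square tile, and (iii) for each square tile, the number of lines x = k + 1/2 passing through it equals the number of lines y = k + 1/2 passing through it. Then (d-c)/(b-a) is rational. -/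
open Set MeasureTheory

private lemma ioo_cases {u v u' v' : ℝ} (hu : u < v) (hu' : u' < v')
    (h : Set.Ioo u v ∩ Set.Ioo u' v' = ∅) : v ≤ u' ∨ v' ≤ u := by
  by_contra hc
  push_neg at hc
  obtain ⟨h1, h2⟩ := hc
  have hm : max u u' < min v v' := by
    simp only [max_lt_iff, lt_min_iff]
    refine ⟨⟨?_, ?_⟩, ?_, ?_⟩ <;> linarith
  obtain ⟨p, hp1, hp2⟩ := exists_between hm
  have : p ∈ Set.Ioo u v ∩ Set.Ioo u' v' :=
    ⟨⟨(le_max_left _ _).trans_lt hp1, hp2.trans_le (min_le_left _ _)⟩,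
     ⟨(le_max_right _ _).trans_lt hp1, hp2.trans_le (min_le_right _ _)⟩⟩
  rw [h] at this
  exact this

private lemma aux_sum (a b c d : ℝ) (hcd : c < d) (n : ℕ) (x y s : Fin n → ℝ)
    (hs : ∀ i, 0 < s i)
    (hdisj : ∀ i j, i ≠ j →
      (Set.Ioo (x i) (x i + s i) ×ˢ Set.Ioo (y i) (y i + s i)) ∩
      (Set.Ioo (x j) (x j + s j) ×ˢ Set.Ioo (y j) (y j + s j)) = ∅)
    (hunion : (⋃ i, Set.Icc (x i) (x i + s i) ×ˢ Set.Icc (y i) (y i + s i))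
      = Set.Icc a b ×ˢ Set.Icc c d)
    (hii : ∀ i, ∀ k : ℤ, x i ≠ (k : ℝ) + 1/2 ∧ x i + s i ≠ (k : ℝ) + 1/2) :
    ({k : ℤ | a < (k : ℝ) + 1/2 ∧ (k : ℝ) + 1/2 < b}.ncard : ℝ) * (d - c)
      = ∑ i, ({k : ℤ | x i < (k : ℝ) + 1/2 ∧ (k : ℝ) + 1/2 < x i + s i}.ncard : ℝ) * s i := by
  -- each square is inside the rectangle
  have hsub : ∀ i, a ≤ x i ∧ x i + s i ≤ b ∧ c ≤ y i ∧ y i + s i ≤ d := by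
    intro i
    have h1 : Set.Icc (x i) (x i + s i) ×ˢ Set.Icc (y i) (y i + s i)
        ⊆ Set.Icc a b ×ˢ Set.Icc c d := by
      rw [← hunion]
      exact Set.subset_iUnion
        (fun j => Set.Icc (x j) (x j + s j) ×ˢ Set.Icc (y j) (y j + s j)) i
    have hx : 0 ≤ s i := (hs i).le
    have hc1 := h1 (Set.mk_mem_prod (Set.mem_Icc.mpr ⟨le_refl _, by linarith⟩)
      (Set.mem_Icc.mpr ⟨le_refl _, by linarith⟩))
    have hc2 := h1 (Set.mk_mem_prod (Set.mem_Icc.mpr ⟨by linarith, le_refl _⟩)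
      (Set.mem_Icc.mpr ⟨by linarith, le_refl _⟩))
    exact ⟨hc1.1.1, hc2.1.2, hc1.2.1, hc2.2.2⟩
  -- the finite set of relevant vertical lines
  set Tx : Finset ℤ := (Finset.Icc ⌈a - 1/2⌉ ⌊b⌋).filter
    (fun k => a < (k : ℝ) + 1/2 ∧ (k : ℝ) + 1/2 < b) with hTx
  have hTmem : ∀ k : ℤ, k ∈ Tx ↔ a < (k : ℝ) + 1/2 ∧ (k : ℝ) + 1/2 < b := by
    intro k
    simp only [hTx, Finset.mem_filter, Finset.mem_Icc, and_iff_right_iff_imp]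
    rintro ⟨h1, h2⟩
    constructor
    · exact Int.ceil_le.mpr (by linarith)
    · exact Int.le_floor.mpr (by linarith)
  have hTset : {k : ℤ | a < (k : ℝ) + 1/2 ∧ (k : ℝ) + 1/2 < b} = ↑Tx := by
    ext k; simp [hTmem k]
  -- slice identity: for each line in Tx the crossed squares tile the segment
  have hslice : ∀ k ∈ Tx, d - c =
      ∑ i ∈ Finset.univ.filter
        (fun i => x i < (k : ℝ) + 1/2 ∧ (k : ℝ) + 1/2 < x i + s i), s i := by
    intro k hk
    rw [hTmem] at hk
    set t : ℝ := (k : ℝ) + 1/2 with ht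
    set S : Finset (Fin n) := Finset.univ.filter (fun i => x i < t ∧ t < x i + s i) with hS
    have hcover : Set.Icc c d = ⋃ i ∈ S, Set.Icc (y i) (y i + s i) := by
      ext p
      constructor
      · intro hp
        have hmem : ((t, p) : ℝ × ℝ) ∈ Set.Icc a b ×ˢ Set.Icc c d :=
          ⟨⟨hk.1.le, hk.2.le⟩, hp⟩
        rw [← hunion] at hmem
        obtain ⟨i, hxi, hyi⟩ := Set.mem_iUnion.mp hmem
        refine Set.mem_biUnion (Finset.mem_filter.mpr ⟨Finset.mem_univ _, ?_, ?_⟩) hyi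
        · exact lt_of_le_of_ne hxi.1 (by rw [ht]; exact (hii i k).1)
        · exact lt_of_le_of_ne hxi.2 (by rw [ht]; exact ((hii i k).2).symm)
      · intro hp
        obtain ⟨i, _, hp⟩ := Set.mem_iUnion₂.mp hp
        exact ⟨(hsub i).2.2.1.trans hp.1, hp.2.trans (hsub i).2.2.2⟩
    have hmeas : volume (Set.Icc c d) = ∑ i ∈ S, volume (Set.Icc (y i) (y i + s i)) := by
      rw [hcover]
      refine measure_biUnion_finset₀ ?_ (fun i _ => measurableSet_Icc.nullMeasurableSet)
      intro i hi j hj hij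
      simp only [hS, Finset.coe_filter, Set.mem_setOf_eq] at hi hj
      have hdy : Set.Ioo (y i) (y i + s i) ∩ Set.Ioo (y j) (y j + s j) = ∅ := by
        by_contra hne
        obtain ⟨p, hp⟩ := Set.nonempty_iff_ne_empty.mpr hne
        have : ((t, p) : ℝ × ℝ) ∈
            (Set.Ioo (x i) (x i + s i) ×ˢ Set.Ioo (y i) (y i + s i)) ∩
            (Set.Ioo (x j) (x j + s j) ×ˢ Set.Ioo (y j) (y j + s j)) :=
          ⟨⟨⟨hi.2.1, hi.2.2⟩, hp.1⟩, ⟨⟨hj.2.1, hj.2.2⟩, hp.2⟩⟩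
        rw [hdisj i j hij] at this
        exact this
      have hcases := ioo_cases (by linarith [hs i]) (by linarith [hs j]) hdy
      have : volume (Set.Icc (y i) (y i + s i) ∩ Set.Icc (y j) (y j + s j)) = 0 := by
        rw [Set.Icc_inter_Icc, Real.volume_Icc, ENNReal.ofReal_eq_zero]
        rcases hcases with h | h
        · have h1 : min (y i + s i) (y j + s j) ≤ y i + s i := min_le_left _ _
          have h2 : y j ≤ max (y i) (y j) := le_max_right _ _
          linarith
        · have h1 : min (y i + s i) (y j + s j) ≤ y j + s j := min_le_right _ _
          have h2 : y i ≤ max (y i) (y j) := le_max_left _ _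
          linarith
      exact this
    rw [Real.volume_Icc] at hmeas
    have hvols : ∀ i ∈ S, volume (Set.Icc (y i) (y i + s i)) = ENNReal.ofReal (s i) := by
      intro i _
      rw [Real.volume_Icc]
      congr 1
      ring
    rw [Finset.sum_congr rfl hvols, ← ENNReal.ofReal_sum_of_nonneg
      (fun i _ => (hs i).le)] at hmeas
    have := (ENNReal.ofReal_eq_ofReal_iff (by linarith) (Finset.sum_nonneg
      (fun i _ => (hs i).le))).mp hmeas
    exact this
  -- for each square, the set of lines through it is the corresponding filter of Tx
  have hcnt : ∀ i, {k : ℤ | x i < (k : ℝ) + 1/2 ∧ (k : ℝ) + 1/2 < x i + s i}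
      = ↑(Tx.filter (fun k : ℤ => x i < (k : ℝ) + 1/2 ∧ (k : ℝ) + 1/2 < x i + s i)) := by
    intro i
    ext k
    simp only [Set.mem_setOf_eq, Finset.coe_filter, hTmem]
    constructor
    · rintro ⟨h1, h2⟩
      exact ⟨⟨(hsub i).1.trans_lt h1, h2.trans_le (hsub i).2.1⟩, h1, h2⟩
    · exact fun h => h.2
  -- double counting
  rw [hTset, Set.ncard_coe_finset]
  calc (Tx.card : ℝ) * (d - c) = ∑ _k ∈ Tx, (d - c) := by
        rw [Finset.sum_const, nsmul_eq_mul]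
    _ = ∑ k ∈ Tx, ∑ i ∈ Finset.univ.filter
          (fun i => x i < (k : ℝ) + 1/2 ∧ (k : ℝ) + 1/2 < x i + s i), s i :=
        Finset.sum_congr rfl hslice
    _ = ∑ k ∈ Tx, ∑ i,
          if x i < (k : ℝ) + 1/2 ∧ (k : ℝ) + 1/2 < x i + s i then s i else 0 := by
        refine Finset.sum_congr rfl fun k _ => ?_
        rw [Finset.sum_filter]
    _ = ∑ i, ∑ k ∈ Tx,
          if x i < (k : ℝ) + 1/2 ∧ (k : ℝ) + 1/2 < x i + s i then s i else 0 :=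
        Finset.sum_comm
    _ = ∑ i, ({k : ℤ | x i < (k : ℝ) + 1/2 ∧ (k : ℝ) + 1/2 < x i + s i}.ncard : ℝ) * s i := by
        refine Finset.sum_congr rfl fun i _ => ?_
        rw [← Finset.sum_filter, Finset.sum_const, nsmul_eq_mul, hcnt i,
          Set.ncard_coe_finset]


/-- Observation: if a tiled rectangle meets at least one 1/2-shifted vertical grid line,
no vertex of any square tile lies on a 1/2-shifted grid line, and each square tile is
crossed by equally many 1/2-shifted vertical and horizontal grid lines, then the aspect
ratio of the rectangle is rational. -/
theorem rect_tiled_shifted_lines_ratio_rational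
    (a b c d : ℝ) (hab : a < b) (hcd : c < d)
    (n : ℕ) (x y s : Fin n → ℝ) (hs : ∀ i, 0 < s i)
    (hdisj : ∀ i j, i ≠ j →
      (Set.Ioo (x i) (x i + s i) ×ˢ Set.Ioo (y i) (y i + s i)) ∩
      (Set.Ioo (x j) (x j + s j) ×ˢ Set.Ioo (y j) (y j + s j)) = ∅)
    (hunion : (⋃ i, Set.Icc (x i) (x i + s i) ×ˢ Set.Icc (y i) (y i + s i))
      = Set.Icc a b ×ˢ Set.Icc c d)
    -- (i) at least one 1/2-shifted vertical grid line intersects R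
    (hi : ∃ k : ℤ, a ≤ (k : ℝ) + 1/2 ∧ (k : ℝ) + 1/2 ≤ b)
    -- (ii) no 1/2-shifted grid line contains a vertex of any square tile
    (hii : ∀ i, ∀ k : ℤ,
      x i ≠ (k : ℝ) + 1/2 ∧ x i + s i ≠ (k : ℝ) + 1/2 ∧
      y i ≠ (k : ℝ) + 1/2 ∧ y i + s i ≠ (k : ℝ) + 1/2)
    -- (iii) equal numbers of shifted vertical and horizontal grid lines through each square
    (hiii : ∀ i,
      {k : ℤ | x i < (k : ℝ) + 1/2 ∧ (k : ℝ) + 1/2 < x i + s i}.ncard =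
      {k : ℤ | y i < (k : ℝ) + 1/2 ∧ (k : ℝ) + 1/2 < y i + s i}.ncard) :
    ∃ q : ℚ, (d - c) / (b - a) = q := by
  -- swapped hypotheses
  have hdisj' : ∀ i j, i ≠ j →
      (Set.Ioo (y i) (y i + s i) ×ˢ Set.Ioo (x i) (x i + s i)) ∩
      (Set.Ioo (y j) (y j + s j) ×ˢ Set.Ioo (x j) (x j + s j)) = ∅ := by
    intro i j hij
    ext ⟨p, q⟩
    simp only [Set.mem_inter_iff, Set.mem_prod, Set.mem_empty_iff_false, iff_false]
    rintro ⟨⟨h1, h2⟩, h3, h4⟩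
    have : ((q, p) : ℝ × ℝ) ∈
        (Set.Ioo (x i) (x i + s i) ×ˢ Set.Ioo (y i) (y i + s i)) ∩
        (Set.Ioo (x j) (x j + s j) ×ˢ Set.Ioo (y j) (y j + s j)) :=
      ⟨⟨h2, h1⟩, ⟨h4, h3⟩⟩
    rw [hdisj i j hij] at this
    exact this
  have hunion' : (⋃ i, Set.Icc (y i) (y i + s i) ×ˢ Set.Icc (x i) (x i + s i))
      = Set.Icc c d ×ˢ Set.Icc a b := by
    have := congrArg (fun u => Prod.swap ⁻¹' u) hunion
    simpa only [Set.preimage_iUnion, Set.preimage_swap_prod] using this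
  have H1 := aux_sum a b c d hcd n x y s hs hdisj hunion
    (fun i k => ⟨(hii i k).1, (hii i k).2.1⟩)
  have H2 := aux_sum c d a b hab n y x s hs hdisj' hunion'
    (fun i k => ⟨(hii i k).2.2.1, (hii i k).2.2.2⟩)
  have hEq : ({k : ℤ | a < (k : ℝ) + 1/2 ∧ (k : ℝ) + 1/2 < b}.ncard : ℝ) * (d - c)
      = ({k : ℤ | c < (k : ℝ) + 1/2 ∧ (k : ℝ) + 1/2 < d}.ncard : ℝ) * (b - a) := by
    rw [H1, H2]
    refine Finset.sum_congr rfl fun i _ => ?_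
    rw [hiii i]
  -- the vertical line count is positive
  have hsub : ∀ i, a ≤ x i ∧ x i + s i ≤ b := by
    intro i
    have h1 : Set.Icc (x i) (x i + s i) ×ˢ Set.Icc (y i) (y i + s i)
        ⊆ Set.Icc a b ×ˢ Set.Icc c d := by
      rw [← hunion]
      exact Set.subset_iUnion
        (fun j => Set.Icc (x j) (x j + s j) ×ˢ Set.Icc (y j) (y j + s j)) i
    have hx : 0 ≤ s i := (hs i).le
    have hc1 := h1 (Set.mk_mem_prod (Set.mem_Icc.mpr ⟨le_refl _, by linarith⟩)
      (Set.mem_Icc.mpr ⟨le_refl _, by linarith⟩))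
    have hc2 := h1 (Set.mk_mem_prod (Set.mem_Icc.mpr ⟨by linarith, le_refl _⟩)
      (Set.mem_Icc.mpr ⟨by linarith, le_refl _⟩))
    exact ⟨hc1.1.1, hc2.1.2⟩
  have ha : ∃ i, x i = a := by
    have : ((a, c) : ℝ × ℝ) ∈ Set.Icc a b ×ˢ Set.Icc c d :=
      ⟨⟨le_refl _, hab.le⟩, ⟨le_refl _, hcd.le⟩⟩
    rw [← hunion] at this
    obtain ⟨i, hxi, _⟩ := Set.mem_iUnion.mp this
    exact ⟨i, le_antisymm hxi.1 (hsub i).1⟩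
  have hb : ∃ i, x i + s i = b := by
    have : ((b, c) : ℝ × ℝ) ∈ Set.Icc a b ×ˢ Set.Icc c d :=
      ⟨⟨hab.le, le_refl _⟩, ⟨le_refl _, hcd.le⟩⟩
    rw [← hunion] at this
    obtain ⟨i, hxi, _⟩ := Set.mem_iUnion.mp this
    exact ⟨i, le_antisymm (hsub i).2 hxi.2⟩
  have hNv : 1 ≤ {k : ℤ | a < (k : ℝ) + 1/2 ∧ (k : ℝ) + 1/2 < b}.ncard := by
    obtain ⟨k, hk1, hk2⟩ := hi
    obtain ⟨i0, hi0⟩ := ha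
    obtain ⟨i1, hi1⟩ := hb
    have hk1' : a < (k : ℝ) + 1/2 :=
      lt_of_le_of_ne hk1 (by rw [← hi0]; exact (hii i0 k).1)
    have hk2' : (k : ℝ) + 1/2 < b :=
      lt_of_le_of_ne hk2 (fun h => (hii i1 k).2.1 (hi1.trans h.symm))
    have hfin : {k : ℤ | a < (k : ℝ) + 1/2 ∧ (k : ℝ) + 1/2 < b}.Finite := by
      apply Set.Finite.subset (Set.finite_Icc (⌈a - 1/2⌉) ⌊b⌋)
      rintro m ⟨h1, h2⟩
      exact ⟨Int.ceil_le.mpr (by linarith), Int.le_floor.mpr (by linarith)⟩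
    rw [Nat.one_le_iff_ne_zero]
    intro h0
    have := (Set.ncard_eq_zero hfin).mp h0
    have : k ∈ {k : ℤ | a < (k : ℝ) + 1/2 ∧ (k : ℝ) + 1/2 < b} := ⟨hk1', hk2'⟩
    simp_all
  -- conclude
  set Nv := {k : ℤ | a < (k : ℝ) + 1/2 ∧ (k : ℝ) + 1/2 < b}.ncard
  set Nh := {k : ℤ | c < (k : ℝ) + 1/2 ∧ (k : ℝ) + 1/2 < d}.ncard
  refine ⟨(Nh : ℚ) / (Nv : ℚ), ?_⟩
  have hNv' : (0 : ℝ) < (Nv : ℝ) := by exact_mod_cast Nat.lt_of_lt_of_le Nat.zero_lt_one hNv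
  have hba : (0 : ℝ) < b - a := by linarith
  push_cast
  rw [div_eq_div_iff hba.ne' hNv'.ne']
  linarith [hEq]
end

section
/- Suppose a rectangle [a,b]×[c,d] is tiled by rectangles Rᵢ = [aᵢ,bᵢ]×[cᵢ,dᵢ] for i = 1,…,n, and r : ℝ → ℝ is a function satisfying r(c) = c, r(d) = d, and (bᵢ - aᵢ)·(r(dᵢ) - r(cᵢ)) = (r(bᵢ) - r(aᵢ))·(dᵢ - cᵢ) for all i. Then r(cᵢ) = cᵢ and r(dᵢ) = dᵢ for every i. -/
open Finset Set

/-- Telescoping sum over `Ico`. -/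
lemma tele_Ico (f : ℕ → ℝ) : ∀ n m, m ≤ n → ∑ i ∈ Finset.Ico m n, (f (i+1) - f i) = f n - f m := by
  intro n
  induction n with
  | zero => intro m hm; interval_cases m; simp
  | succ n IH =>
    intro m hm
    rcases Nat.lt_or_ge m (n+1) with h | h
    · have hmn : m ≤ n := Nat.lt_succ_iff.mp h
      rw [Finset.sum_Ico_succ_top hmn, IH m hmn]; ring
    · have : m = n + 1 := le_antisymm hm h
      subst this; simp

/-- Structure of a 1-D tiling of `[u,v]` by closed intervals with disjoint interiors:
telescoping sums and propagation of values. -/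
lemma tile1d {ι : Type*} [DecidableEq ι] :
    ∀ (s : Finset ι) (P Q : ι → ℝ) (u v : ℝ),
    (∀ i ∈ s, P i < Q i) →
    (∀ i ∈ s, ∀ j ∈ s, i ≠ j → Set.Ioo (P i) (Q i) ∩ Set.Ioo (P j) (Q j) = ∅) →
    u ≤ v → (⋃ i ∈ s, Set.Icc (P i) (Q i)) = Set.Icc u v →
    (∀ f : ℝ → ℝ, ∑ i ∈ s, (f (Q i) - f (P i)) = f v - f u) ∧
    (∀ e : ℝ → ℝ, (∀ i ∈ s, e (P i) = e (Q i)) → ∀ i ∈ s, e (P i) = e u ∧ e (Q i) = e u) := by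
  intro s
  induction s using Finset.strongInduction with
  | _ s IH =>
    intro P Q u v hPQ hdisj huv hun
    have hsubIcc : ∀ i ∈ s, Set.Icc (P i) (Q i) ⊆ Set.Icc u v := by
      intro i hi
      rw [← hun]; intro x hx; exact Set.mem_biUnion hi hx
    -- find the tile starting at u
    have hu : u ∈ ⋃ i ∈ s, Set.Icc (P i) (Q i) := by rw [hun]; exact ⟨le_refl u, huv⟩
    obtain ⟨i₀, hi₀s, hui₀⟩ := Set.mem_iUnion₂.mp hu
    have hP0 : P i₀ = u := by
      have h1 : P i₀ ≤ u := hui₀.1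
      have h2 : u ≤ P i₀ := (hsubIcc i₀ hi₀s ⟨le_refl _, (hPQ i₀ hi₀s).le⟩).1
      linarith
    have hQ0v : Q i₀ ≤ v := (hsubIcc i₀ hi₀s ⟨(hPQ i₀ hi₀s).le, le_refl _⟩).2
    -- every other tile starts at or after Q i₀
    have hge : ∀ j ∈ s, j ≠ i₀ → Q i₀ ≤ P j := by
      intro j hj hne
      by_contra hlt
      push_neg at hlt
      have huPj : u ≤ P j := (hsubIcc j hj ⟨le_refl _, (hPQ j hj).le⟩).1
      have : P j < min (Q j) (Q i₀) := lt_min (hPQ j hj) hlt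
      obtain ⟨t, ht1, ht2⟩ := exists_between this
      have hmem : t ∈ Set.Ioo (P i₀) (Q i₀) ∩ Set.Ioo (P j) (Q j) := by
        constructor
        · exact ⟨by rw [hP0]; exact lt_of_le_of_lt huPj ht1, lt_of_lt_of_le ht2 (min_le_right _ _)⟩
        · exact ⟨ht1, lt_of_lt_of_le ht2 (min_le_left _ _)⟩
      rw [hdisj i₀ hi₀s j hj (Ne.symm hne)] at hmem
      exact hmem
    by_cases hQv : Q i₀ = v
    · -- s = {i₀}
      have hs : s = {i₀} := by
        apply Finset.eq_singleton_iff_unique_mem.mpr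
        refine ⟨hi₀s, ?_⟩
        intro j hj
        by_contra hne
        have h1 := hge j hj hne
        have h2 : Q j ≤ v := (hsubIcc j hj ⟨(hPQ j hj).le, le_refl _⟩).2
        have := hPQ j hj
        rw [hQv] at h1
        linarith
      constructor
      · intro f; rw [hs, Finset.sum_singleton, hP0, hQv]
      · intro e he i hi
        rw [hs, Finset.mem_singleton] at hi
        subst hi
        have h := he i hi₀s
        rw [hP0] at h
        exact ⟨by rw [hP0], h.symm⟩
    · have hQ0v' : Q i₀ < v := lt_of_le_of_ne hQ0v hQv
      set s' := s.erase i₀ with hs'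
      have hss : s' ⊂ s := Finset.erase_ssubset hi₀s
      have hun' : (⋃ i ∈ s', Set.Icc (P i) (Q i)) = Set.Icc (Q i₀) v := by
        apply Set.Subset.antisymm
        · intro x hx
          obtain ⟨j, hj, hxj⟩ := Set.mem_iUnion₂.mp hx
          have hjs : j ∈ s := Finset.mem_of_mem_erase hj
          have hjne : j ≠ i₀ := Finset.ne_of_mem_erase hj
          exact ⟨le_trans (hge j hjs hjne) hxj.1, le_trans hxj.2 (hsubIcc j hjs ⟨(hPQ j hjs).le, le_refl _⟩).2⟩
        · have hclosed : IsClosed (⋃ i ∈ s', Set.Icc (P i) (Q i)) := by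
            apply Set.Finite.isClosed_biUnion (Finset.finite_toSet s')
            intro i _; exact isClosed_Icc
          have hIoc : Set.Ioc (Q i₀) v ⊆ ⋃ i ∈ s', Set.Icc (P i) (Q i) := by
            intro x hx
            have hxuv : x ∈ Set.Icc u v := ⟨le_trans (hP0 ▸ (hPQ i₀ hi₀s).le) hx.1.le, hx.2⟩
            rw [← hun] at hxuv
            obtain ⟨j, hj, hxj⟩ := Set.mem_iUnion₂.mp hxuv
            have hjne : j ≠ i₀ := by
              intro h; subst h; exact absurd hxj.2 (not_le.mpr hx.1)
            exact Set.mem_biUnion (Finset.mem_erase.mpr ⟨hjne, hj⟩) hxj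
          calc Set.Icc (Q i₀) v = closure (Set.Ioc (Q i₀) v) := (closure_Ioc (ne_of_lt hQ0v')).symm
            _ ⊆ closure (⋃ i ∈ s', Set.Icc (P i) (Q i)) := closure_mono hIoc
            _ = _ := hclosed.closure_eq
      obtain ⟨Hf, He⟩ := IH s' hss P Q (Q i₀) v
        (fun i hi => hPQ i (Finset.mem_of_mem_erase hi))
        (fun i hi j hj hne => hdisj i (Finset.mem_of_mem_erase hi) j (Finset.mem_of_mem_erase hj) hne)
        hQ0v hun'
      constructor
      · intro f
        rw [← Finset.add_sum_erase s _ hi₀s, ← hs', Hf f, hP0]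
        ring
      · intro e he i hi
        have he0 : e (P i₀) = e u := by rw [hP0]
        have heQ0 : e (Q i₀) = e u := by rw [← he i₀ hi₀s, hP0]
        by_cases hii : i = i₀
        · subst hii; exact ⟨he0, heQ0⟩
        · have hi' : i ∈ s' := Finset.mem_erase.mpr ⟨hii, hi⟩
          obtain ⟨h1, h2⟩ := He e (fun j hj => he j (Finset.mem_of_mem_erase hj)) i hi'
          rw [heQ0] at h1 h2
          exact ⟨h1, h2⟩

lemma tiling_additive
    (a b c d : ℝ) (hab : a ≤ b) (hcd : c < d)
    (n : ℕ) (A B C D : Fin n → ℝ)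
    (hAB : ∀ i, A i < B i) (hCD : ∀ i, C i < D i)
    (hdisj : ∀ i j, i ≠ j →
      (Set.Ioo (A i) (B i) ×ˢ Set.Ioo (C i) (D i)) ∩
      (Set.Ioo (A j) (B j) ×ˢ Set.Ioo (C j) (D j)) = ∅)
    (hunion : (⋃ i, Set.Icc (A i) (B i) ×ˢ Set.Icc (C i) (D i))
      = Set.Icc a b ×ˢ Set.Icc c d)
    (f g : ℝ → ℝ) :
    ∑ i, (f (B i) - f (A i)) * (g (D i) - g (C i)) = (f b - f a) * (g d - g c) := by
  classical
  -- tiles lie inside the big rectangle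
  have htile : ∀ i, Set.Icc (A i) (B i) ×ˢ Set.Icc (C i) (D i) ⊆ Set.Icc a b ×ˢ Set.Icc c d := by
    intro i
    rw [← hunion]
    exact Set.subset_iUnion (fun i => Set.Icc (A i) (B i) ×ˢ Set.Icc (C i) (D i)) i
  have hbnd : ∀ i, a ≤ A i ∧ B i ≤ b ∧ c ≤ C i ∧ D i ≤ d := by
    intro i
    have h1 := htile i (Set.mk_mem_prod ⟨le_refl (A i), (hAB i).le⟩ ⟨le_refl (C i), (hCD i).le⟩)
    have h2 := htile i (Set.mk_mem_prod ⟨(hAB i).le, le_refl (B i)⟩ ⟨(hCD i).le, le_refl (D i)⟩)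
    exact ⟨h1.1.1, h2.1.2, h1.2.1, h2.2.2⟩
  -- the grid of y-values
  set Y : Finset ℝ := insert c (insert d ((Finset.image C Finset.univ) ∪ (Finset.image D Finset.univ))) with hY
  have hcY : c ∈ Y := Finset.mem_insert_self _ _
  have hdY : d ∈ Y := Finset.mem_insert_of_mem (Finset.mem_insert_self _ _)
  have hCY : ∀ i, C i ∈ Y := fun i => Finset.mem_insert_of_mem (Finset.mem_insert_of_mem
    (Finset.mem_union_left _ (Finset.mem_image_of_mem C (Finset.mem_univ i))))
  have hDY : ∀ i, D i ∈ Y := fun i => Finset.mem_insert_of_mem (Finset.mem_insert_of_mem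
    (Finset.mem_union_right _ (Finset.mem_image_of_mem D (Finset.mem_univ i))))
  have hYbd : ∀ y ∈ Y, c ≤ y ∧ y ≤ d := by
    intro y hy
    rw [hY] at hy
    simp only [Finset.mem_insert, Finset.mem_union, Finset.mem_image] at hy
    rcases hy with rfl | rfl | ⟨i, _, rfl⟩ | ⟨i, _, rfl⟩
    · exact ⟨le_refl _, hcd.le⟩
    · exact ⟨hcd.le, le_refl _⟩
    · exact ⟨(hbnd i).2.2.1, le_trans (hCD i).le (hbnd i).2.2.2⟩
    · exact ⟨le_trans (hbnd i).2.2.1 (hCD i).le, (hbnd i).2.2.2⟩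
  set m : ℕ := Y.card with hm
  have hw := Y.orderIsoOfFin (rfl : Y.card = m)
  set w : Fin m ≃o Y := Y.orderIsoOfFin rfl with hwdef
  set W : ℕ → ℝ := fun k => if h : k < m then (w ⟨k, h⟩ : ℝ) else d with hWdef
  have hWval : ∀ k (h : k < m), W k = (w ⟨k, h⟩ : ℝ) := fun k h => dif_pos h
  have hWmem : ∀ k, k < m → W k ∈ Y := by
    intro k h; rw [hWval k h]; exact (w ⟨k, h⟩).2
  have hWlt : ∀ {k l : ℕ}, k < m → l < m → (W k < W l ↔ k < l) := by
    intro k l hk hl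
    rw [hWval k hk, hWval l hl]
    rw [show ((w ⟨k, hk⟩ : Y) : ℝ) < ((w ⟨l, hl⟩ : Y) : ℝ) ↔ (w ⟨k, hk⟩) < (w ⟨l, hl⟩) from Iff.rfl]
    rw [w.lt_iff_lt]
    exact Fin.mk_lt_mk
  have hWle : ∀ {k l : ℕ}, k < m → l < m → (W k ≤ W l ↔ k ≤ l) := by
    intro k l hk hl
    constructor
    · intro h
      by_contra hc
      push_neg at hc
      exact absurd ((hWlt hl hk).mpr hc) (not_lt.mpr h)
    · intro h
      rcases eq_or_lt_of_le h with rfl | h'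
      · exact le_refl _
      · exact ((hWlt hk hl).mpr h').le
  have hWsurj : ∀ y ∈ Y, ∃ k, ∃ h : k < m, W k = y := by
    intro y hy
    refine ⟨(w.symm ⟨y, hy⟩ : Fin m).1, (w.symm ⟨y, hy⟩).2, ?_⟩
    rw [hWval _ (w.symm ⟨y, hy⟩).2]
    have : w (w.symm ⟨y, hy⟩) = ⟨y, hy⟩ := w.apply_symm_apply _
    rw [show (⟨(w.symm ⟨y, hy⟩ : Fin m).1, (w.symm ⟨y, hy⟩).2⟩ : Fin m) = w.symm ⟨y, hy⟩ from rfl, this]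
  have hm0 : 0 < m := Finset.card_pos.mpr ⟨c, hcY⟩
  have hW0 : W 0 = c := by
    obtain ⟨k, hk, hkc⟩ := hWsurj c hcY
    have h1 : W 0 ≤ W k := (hWle hm0 hk).mpr (Nat.zero_le k)
    have h2 : c ≤ W 0 := (hYbd _ (hWmem 0 hm0)).1
    rw [hkc] at h1; linarith
  have hWlast : W (m - 1) = d := by
    obtain ⟨k, hk, hkd⟩ := hWsurj d hdY
    have hm1 : m - 1 < m := Nat.sub_lt hm0 one_pos
    have h1 : W k ≤ W (m - 1) := (hWle hk hm1).mpr (Nat.le_sub_one_of_lt hk)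
    have h2 : W (m - 1) ≤ d := (hYbd _ (hWmem _ hm1)).2
    rw [hkd] at h1; linarith
  -- per-tile decomposition into cells
  have hdecomp : ∀ i : Fin n, (f (B i) - f (A i)) * (g (D i) - g (C i)) =
      ∑ k ∈ (Finset.range (m - 1)).filter (fun k => C i ≤ W k ∧ W (k + 1) ≤ D i),
        (f (B i) - f (A i)) * (g (W (k + 1)) - g (W k)) := by
    intro i
    obtain ⟨k₁, hk₁, hWk₁⟩ := hWsurj (C i) (hCY i)
    obtain ⟨k₂, hk₂, hWk₂⟩ := hWsurj (D i) (hDY i)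
    have hk₁₂ : k₁ < k₂ := by
      apply (hWlt hk₁ hk₂).mp
      rw [hWk₁, hWk₂]; exact hCD i
    have hfilter : (Finset.range (m - 1)).filter (fun k => C i ≤ W k ∧ W (k + 1) ≤ D i)
        = Finset.Ico k₁ k₂ := by
      ext k
      simp only [Finset.mem_filter, Finset.mem_range, Finset.mem_Ico]
      constructor
      · rintro ⟨hkm, h1, h2⟩
        have hkm' : k < m := lt_of_lt_of_le hkm (Nat.sub_le m 1)
        have hkm1 : k + 1 < m := by omega
        constructor
        · apply (hWle hk₁ hkm').mp; rw [hWk₁]; exact h1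
        · have : k + 1 ≤ k₂ := by
            apply (hWle hkm1 hk₂).mp; rw [hWk₂]; exact h2
          omega
      · rintro ⟨h1, h2⟩
        have hkm' : k < m := by omega
        have hkm1 : k + 1 < m := by omega
        refine ⟨by omega, ?_, ?_⟩
        · rw [← hWk₁]; exact (hWle hk₁ hkm').mpr h1
        · rw [← hWk₂]; exact (hWle hkm1 hk₂).mpr (by omega)
    rw [hfilter, ← Finset.mul_sum, tele_Ico (fun k => g (W k)) k₂ k₁ hk₁₂.le, hWk₁, hWk₂]
  -- swap the sums
  rw [Finset.sum_congr rfl (fun i _ => hdecomp i)]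
  rw [show (∑ i : Fin n, ∑ k ∈ (Finset.range (m - 1)).filter (fun k => C i ≤ W k ∧ W (k + 1) ≤ D i),
        (f (B i) - f (A i)) * (g (W (k + 1)) - g (W k)))
      = ∑ k ∈ Finset.range (m - 1), ∑ i ∈ Finset.univ.filter (fun i => C i ≤ W k ∧ W (k + 1) ≤ D i),
        (f (B i) - f (A i)) * (g (W (k + 1)) - g (W k)) from by
    simp only [Finset.sum_filter]
    exact Finset.sum_comm]
  -- evaluate each cell sum via the 1-D lemma
  have hcell : ∀ k ∈ Finset.range (m - 1),
      ∑ i ∈ Finset.univ.filter (fun i => C i ≤ W k ∧ W (k + 1) ≤ D i),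
        (f (B i) - f (A i)) * (g (W (k + 1)) - g (W k))
      = (f b - f a) * (g (W (k + 1)) - g (W k)) := by
    intro k hk
    rw [Finset.mem_range] at hk
    have hkm : k < m := by omega
    have hkm1 : k + 1 < m := by omega
    have hWk : W k < W (k + 1) := (hWlt hkm hkm1).mpr (Nat.lt_succ_self k)
    set mid : ℝ := (W k + W (k + 1)) / 2 with hmid
    have hmid1 : W k < mid := by rw [hmid]; linarith
    have hmid2 : mid < W (k + 1) := by rw [hmid]; linarith
    have hmidc : c ≤ W k := (hYbd _ (hWmem k hkm)).1
    have hmidd : W (k + 1) ≤ d := (hYbd _ (hWmem _ hkm1)).2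
    set s := Finset.univ.filter (fun i : Fin n => C i ≤ W k ∧ W (k + 1) ≤ D i) with hs
    have hmidCD : ∀ i ∈ s, C i < mid ∧ mid < D i := by
      intro i hi
      rw [hs, Finset.mem_filter] at hi
      exact ⟨lt_of_le_of_lt hi.2.1 hmid1, lt_of_lt_of_le hmid2 hi.2.2⟩
    have huni : (⋃ i ∈ s, Set.Icc (A i) (B i)) = Set.Icc a b := by
      apply Set.Subset.antisymm
      · intro x hx
        obtain ⟨i, hi, hxi⟩ := Set.mem_iUnion₂.mp hx
        exact ⟨le_trans (hbnd i).1 hxi.1, le_trans hxi.2 (hbnd i).2.1⟩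
      · intro x hx
        have hxm : ((x, mid) : ℝ × ℝ) ∈ Set.Icc a b ×ˢ Set.Icc c d :=
          Set.mk_mem_prod hx ⟨le_trans hmidc hmid1.le, le_trans hmid2.le hmidd⟩
        rw [← hunion] at hxm
        obtain ⟨i, hi⟩ := Set.mem_iUnion.mp hxm
        have hCi : C i ≤ W k := by
          by_contra hc
          push_neg at hc
          obtain ⟨j, hj, hWj⟩ := hWsurj (C i) (hCY i)
          rw [← hWj] at hc
          have : k < j := (hWlt hkm hj).mp hc
          have : W (k + 1) ≤ W j := (hWle hkm1 hj).mpr this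
          rw [hWj] at this
          have := hi.2.1
          linarith
        have hDi : W (k + 1) ≤ D i := by
          by_contra hc
          push_neg at hc
          obtain ⟨j, hj, hWj⟩ := hWsurj (D i) (hDY i)
          rw [← hWj] at hc
          have : j < k + 1 := (hWlt hj hkm1).mp hc
          have : W j ≤ W k := (hWle hj hkm).mpr (by omega)
          rw [hWj] at this
          have := hi.2.2
          linarith
        have his : i ∈ s := by rw [hs, Finset.mem_filter]; exact ⟨Finset.mem_univ i, hCi, hDi⟩
        exact Set.mem_biUnion his hi.1
    have hdsj : ∀ i ∈ s, ∀ j ∈ s, i ≠ j → Set.Ioo (A i) (B i) ∩ Set.Ioo (A j) (B j) = ∅ := by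
      intro i hi j hj hne
      by_contra hne'
      obtain ⟨x, hxi, hxj⟩ := Set.nonempty_iff_ne_empty.mpr hne'
      have h1 := hmidCD i hi
      have h2 := hmidCD j hj
      have : ((x, mid) : ℝ × ℝ) ∈ (Set.Ioo (A i) (B i) ×ˢ Set.Ioo (C i) (D i)) ∩
          (Set.Ioo (A j) (B j) ×ˢ Set.Ioo (C j) (D j)) :=
        Set.mem_inter (Set.mk_mem_prod hxi ⟨h1.1, h1.2⟩) (Set.mk_mem_prod hxj ⟨h2.1, h2.2⟩)
      rw [hdisj i j hne] at this
      exact this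
    obtain ⟨Hf, _⟩ := tile1d s A B a b (fun i _ => hAB i) hdsj hab huni
    rw [← Finset.sum_mul, Hf f]
  rw [Finset.sum_congr rfl hcell, ← Finset.mul_sum,
    Finset.sum_range_sub (fun k => g (W k)) (m - 1)]
  have hm1 : (m - 1) - 1 + 1 = m - 1 := by
    have : 2 ≤ m := Finset.one_lt_card.mpr ⟨c, hcY, d, hdY, ne_of_lt hcd⟩
    omega
  rw [hW0]
  rw [show W (m-1) = d from hWlast]


/-- If a rectangle [a,b]×[c,d] is tiled by rectangles Rᵢ = [aᵢ,bᵢ]×[cᵢ,dᵢ] and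
r : ℝ → ℝ satisfies r(c)=c, r(d)=d and
(bᵢ-aᵢ)(r(dᵢ)-r(cᵢ)) = (r(bᵢ)-r(aᵢ))(dᵢ-cᵢ) for all i, then r(cᵢ)=cᵢ and r(dᵢ)=dᵢ. -/
theorem rect_tiling_function_fixed
    (a b c d : ℝ) (hab : a < b) (hcd : c < d)
    (n : ℕ) (A B C D : Fin n → ℝ)
    (hAB : ∀ i, A i < B i) (hCD : ∀ i, C i < D i)
    (hdisj : ∀ i j, i ≠ j →
      (Set.Ioo (A i) (B i) ×ˢ Set.Ioo (C i) (D i)) ∩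
      (Set.Ioo (A j) (B j) ×ˢ Set.Ioo (C j) (D j)) = ∅)
    (hunion : (⋃ i, Set.Icc (A i) (B i) ×ˢ Set.Icc (C i) (D i))
      = Set.Icc a b ×ˢ Set.Icc c d)
    (r : ℝ → ℝ) (hrc : r c = c) (hrd : r d = d)
    (hr : ∀ i, (B i - A i) * (r (D i) - r (C i)) = (r (B i) - r (A i)) * (D i - C i)) :
    ∀ i, r (C i) = C i ∧ r (D i) = D i := by
  classical
  have htile : ∀ i, Set.Icc (A i) (B i) ×ˢ Set.Icc (C i) (D i) ⊆ Set.Icc a b ×ˢ Set.Icc c d := by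
    intro i
    rw [← hunion]
    exact Set.subset_iUnion (fun i => Set.Icc (A i) (B i) ×ˢ Set.Icc (C i) (D i)) i
  have hbnd : ∀ i, a ≤ A i ∧ B i ≤ b ∧ c ≤ C i ∧ D i ≤ d := by
    intro i
    have h1 := htile i (Set.mk_mem_prod ⟨le_refl (A i), (hAB i).le⟩ ⟨le_refl (C i), (hCD i).le⟩)
    have h2 := htile i (Set.mk_mem_prod ⟨(hAB i).le, le_refl (B i)⟩ ⟨(hCD i).le, le_refl (D i)⟩)
    exact ⟨h1.1.1, h2.1.2, h1.2.1, h2.2.2⟩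
  -- the four additivity identities
  have H0 := tiling_additive a b c d hab.le hcd n A B C D hAB hCD hdisj hunion (fun x => x) (fun x => x)
  have H1 := tiling_additive a b c d hab.le hcd n A B C D hAB hCD hdisj hunion (fun x => x) r
  have H2 := tiling_additive a b c d hab.le hcd n A B C D hAB hCD hdisj hunion r (fun x => x)
  have H3 := tiling_additive a b c d hab.le hcd n A B C D hAB hCD hdisj hunion r r
  -- termwise equality of the two mixed sums gives r b - r a = b - a
  have hmix : (b - a) * (r d - r c) = (r b - r a) * (d - c) := by
    rw [← H1, ← H2]
    exact Finset.sum_congr rfl (fun i _ => hr i)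
  have hba : r b - r a = b - a := by
    rw [hrc, hrd] at hmix
    have hdc : d - c ≠ 0 := by linarith
    exact (mul_right_cancel₀ hdc hmix).symm
  -- the quadratic identity: the sum of the nonnegative terms is zero
  have hterm : ∀ i : Fin n,
      ((r (B i) - r (A i)) - (B i - A i)) * ((r (D i) - r (C i)) - (D i - C i))
      = (r (B i) - r (A i)) * (r (D i) - r (C i))
        - 2 * ((B i - A i) * (r (D i) - r (C i))) + (B i - A i) * (D i - C i) := by
    intro i
    linear_combination hr i
  have hsum0 : ∑ i : Fin n,
      ((r (B i) - r (A i)) - (B i - A i)) * ((r (D i) - r (C i)) - (D i - C i)) = 0 := by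
    rw [Finset.sum_congr rfl (fun i _ => hterm i)]
    rw [Finset.sum_add_distrib, Finset.sum_sub_distrib, ← Finset.mul_sum]
    rw [H3, H1, H0, hrc, hrd, hba]
    ring
  have hkey : ∀ i : Fin n,
      ((r (B i) - r (A i)) - (B i - A i)) * ((r (D i) - r (C i)) - (D i - C i)) * (D i - C i)
      = (B i - A i) * ((r (D i) - r (C i)) - (D i - C i)) ^ 2 := by
    intro i
    linear_combination (-(r (D i) - r (C i) - (D i - C i))) * hr i
  have hnonneg : ∀ i ∈ Finset.univ, (0 : ℝ) ≤
      ((r (B i) - r (A i)) - (B i - A i)) * ((r (D i) - r (C i)) - (D i - C i)) := by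
    intro i _
    have hy : (0 : ℝ) < D i - C i := by linarith [hCD i]
    have hx : (0 : ℝ) < B i - A i := by linarith [hAB i]
    nlinarith [hkey i, sq_nonneg ((r (D i) - r (C i)) - (D i - C i))]
  have hzero := (Finset.sum_eq_zero_iff_of_nonneg hnonneg).mp hsum0
  have hvy : ∀ i : Fin n, r (D i) - r (C i) = D i - C i := by
    intro i
    have hz := hzero i (Finset.mem_univ i)
    have hy : (0 : ℝ) < D i - C i := by linarith [hCD i]
    have hx : (0 : ℝ) < B i - A i := by linarith [hAB i]
    have h1 : (B i - A i) * ((r (D i) - r (C i)) - (D i - C i)) ^ 2 = 0 := by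
      rw [← hkey i, hz]; ring
    have h2 : ((r (D i) - r (C i)) - (D i - C i)) ^ 2 = 0 := by
      rcases mul_eq_zero.mp h1 with h | h
      · linarith
      · exact h
    have := pow_eq_zero_iff (n := 2) (by norm_num) |>.mp h2
    linarith
  -- propagation along vertical lines
  intro i
  set E : Finset ℝ := (Finset.image A Finset.univ) ∪ (Finset.image B Finset.univ) with hE
  obtain ⟨x₀, hx₀, hx₀E⟩ := (Set.Ioo_infinite (hAB i)).exists_notMem_finset E
  have hxne : ∀ j, x₀ ≠ A j ∧ x₀ ≠ B j := by
    intro j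
    constructor
    · intro h
      exact hx₀E (Finset.mem_union_left _ (h ▸ Finset.mem_image_of_mem A (Finset.mem_univ j)))
    · intro h
      exact hx₀E (Finset.mem_union_right _ (h ▸ Finset.mem_image_of_mem B (Finset.mem_univ j)))
  set s : Finset (Fin n) := Finset.univ.filter (fun j => A j < x₀ ∧ x₀ < B j) with hs
  have his : i ∈ s := by
    rw [hs, Finset.mem_filter]
    exact ⟨Finset.mem_univ i, hx₀.1, hx₀.2⟩
  have hxab : x₀ ∈ Set.Icc a b :=
    ⟨le_trans (hbnd i).1 hx₀.1.le, le_trans hx₀.2.le (hbnd i).2.1⟩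
  have hun : (⋃ j ∈ s, Set.Icc (C j) (D j)) = Set.Icc c d := by
    apply Set.Subset.antisymm
    · intro y hy
      obtain ⟨j, hj, hyj⟩ := Set.mem_iUnion₂.mp hy
      exact ⟨le_trans (hbnd j).2.2.1 hyj.1, le_trans hyj.2 (hbnd j).2.2.2⟩
    · intro y hy
      have hxm : ((x₀, y) : ℝ × ℝ) ∈ Set.Icc a b ×ˢ Set.Icc c d := Set.mk_mem_prod hxab hy
      rw [← hunion] at hxm
      obtain ⟨j, hj⟩ := Set.mem_iUnion.mp hxm
      have h1 : A j < x₀ := lt_of_le_of_ne hj.1.1 (Ne.symm (hxne j).1)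
      have h2 : x₀ < B j := lt_of_le_of_ne hj.1.2 (hxne j).2
      have hjs : j ∈ s := by rw [hs, Finset.mem_filter]; exact ⟨Finset.mem_univ j, h1, h2⟩
      exact Set.mem_biUnion hjs hj.2
  have hdsj : ∀ j ∈ s, ∀ j' ∈ s, j ≠ j' → Set.Ioo (C j) (D j) ∩ Set.Ioo (C j') (D j') = ∅ := by
    intro j hj j' hj' hne
    by_contra hne'
    obtain ⟨y, hyj, hyj'⟩ := Set.nonempty_iff_ne_empty.mpr hne'
    rw [hs, Finset.mem_filter] at hj hj'
    have : ((x₀, y) : ℝ × ℝ) ∈ (Set.Ioo (A j) (B j) ×ˢ Set.Ioo (C j) (D j)) ∩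
        (Set.Ioo (A j') (B j') ×ˢ Set.Ioo (C j') (D j')) :=
      Set.mem_inter (Set.mk_mem_prod ⟨hj.2.1, hj.2.2⟩ hyj)
        (Set.mk_mem_prod ⟨hj'.2.1, hj'.2.2⟩ hyj')
    rw [hdisj j j' hne] at this
    exact this
  obtain ⟨_, He⟩ := tile1d s C D c d (fun j _ => hCD j) hdsj hcd.le hun
  have heq : ∀ j ∈ s, (fun y => r y - y) (C j) = (fun y => r y - y) (D j) := by
    intro j _
    have := hvy j
    dsimp only
    linarith
  obtain ⟨h1, h2⟩ := He (fun y => r y - y) heq i his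
  simp only [hrc] at h1 h2
  constructor <;> linarith
end

section
/- Consider a rectangle tiled by finitely many axis-parallel squares such that: (1) the y-coordinates of the top and bottom sides of the rectangle are integers; (2) no vertex of any square tile lies on a line x = k + 1/2 or y = k + 1/2 for integer k; and (3) each square tile is crossed by an equal number of 1/2-shifted vertical grid lines x = k+1/2 and 1/2-shifted horizontal grid lines y = k+1/2. Then each square tile has side length equal to the number of 1/2-shifted horizontal grid lines passing through it; in particular, all square tiles have integer side lengths. -/
open MeasureTheory Set

noncomputable def halfDirac : Measure ℝ := Measure.sum (fun k : ℤ => Measure.dirac ((k : ℝ) + 1/2))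

instance : SFinite halfDirac := by unfold halfDirac; infer_instance

lemma halfDirac_apply (A : Set ℝ) (hA : MeasurableSet A)
    (hfin : {k : ℤ | (k : ℝ) + 1/2 ∈ A}.Finite) :
    halfDirac A = ({k : ℤ | (k : ℝ) + 1/2 ∈ A}.ncard : ENNReal) := by
  rw [halfDirac, Measure.sum_apply _ hA]
  have h1 : ∀ k : ℤ, Measure.dirac ((k : ℝ) + 1/2) A
      = {k : ℤ | (k : ℝ) + 1/2 ∈ A}.indicator (fun _ => (1 : ENNReal)) k := by
    intro k
    rw [Measure.dirac_apply' _ hA]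
    by_cases h : (k : ℝ) + 1/2 ∈ A <;> simp [indicator, h]
  rw [tsum_congr h1, tsum_eq_sum (s := hfin.toFinset)
    (fun k hk => indicator_of_notMem (by simpa using hk) _)]
  rw [Set.ncard_eq_toFinset_card _ hfin]
  calc ∑ k ∈ hfin.toFinset, {k : ℤ | (k : ℝ) + 1/2 ∈ A}.indicator (fun _ => (1:ENNReal)) k
      = ∑ _k ∈ hfin.toFinset, (1:ENNReal) :=
        Finset.sum_congr rfl (fun k hk => indicator_of_mem (hfin.mem_toFinset.mp hk) _)
    _ = (hfin.toFinset.card : ENNReal) := by simp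

lemma halfPoints_Icc_finite (u v : ℝ) : {k : ℤ | (k : ℝ) + 1/2 ∈ Icc u v}.Finite := by
  apply Set.Finite.subset (Set.finite_Icc (⌈u - 1⌉) ⌊v⌋)
  rintro k ⟨h1, h2⟩
  constructor
  · exact Int.ceil_le.mpr (by linarith)
  · exact Int.le_floor.mpr (by linarith)

lemma halfDirac_singleton (t : ℝ) (h : ∀ k : ℤ, t ≠ (k : ℝ) + 1/2) : halfDirac {t} = 0 := by
  rw [halfDirac_apply _ (measurableSet_singleton t)]
  · have : {k : ℤ | (k : ℝ) + 1/2 ∈ ({t} : Set ℝ)} = ∅ := by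
      ext k; simp only [mem_setOf_eq, mem_singleton_iff, mem_empty_iff_false, iff_false]
      exact fun hk => h k hk.symm
    rw [this]; simp
  · apply Set.Finite.subset (Set.finite_empty)
    intro k hk; exact absurd (hk : _ ∈ ({t}:Set ℝ)) (fun hh => h k hh.symm)

lemma halfDirac_Icc (u v : ℝ) (hu : ∀ k : ℤ, u ≠ (k : ℝ) + 1/2) (hv : ∀ k : ℤ, v ≠ (k : ℝ) + 1/2) :
    halfDirac (Icc u v) = ({k : ℤ | u < (k : ℝ) + 1/2 ∧ (k : ℝ) + 1/2 < v}.ncard : ENNReal) := by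
  rw [halfDirac_apply _ measurableSet_Icc (halfPoints_Icc_finite u v)]
  congr 2
  ext k
  simp only [mem_setOf_eq, mem_Icc]
  constructor
  · rintro ⟨h1, h2⟩
    exact ⟨lt_of_le_of_ne h1 (hu k), lt_of_le_of_ne h2 (fun hh => hv k hh.symm)⟩
  · rintro ⟨h1, h2⟩; exact ⟨h1.le, h2.le⟩

lemma halfDirac_Icc_int (m m' : ℤ) (hle : m ≤ m') :
    halfDirac (Icc (m : ℝ) (m' : ℝ)) = ((m' - m).toNat : ENNReal) := by
  rw [halfDirac_apply _ measurableSet_Icc (halfPoints_Icc_finite _ _)]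
  have hset : {k : ℤ | (k : ℝ) + 1/2 ∈ Icc (m : ℝ) (m' : ℝ)} = ↑(Finset.Icc m (m' - 1)) := by
    ext k
    simp only [mem_setOf_eq, mem_Icc, Finset.coe_Icc]
    constructor
    · rintro ⟨h1, h2⟩
      constructor
      · have : (m : ℝ) < k + 1 := by linarith
        have := Int.lt_add_one_iff.mp (by exact_mod_cast this)
        exact this
      · have : (k : ℝ) < m' := by linarith
        have := (Int.lt_iff_add_one_le).mp (by exact_mod_cast this)
        omega
    · rintro ⟨h1, h2⟩
      constructor
      · have : (m : ℝ) ≤ k := by exact_mod_cast h1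
        linarith
      · have : (k : ℝ) ≤ (m' : ℝ) - 1 := by
          have : k ≤ m' - 1 := h2
          exact_mod_cast (by exact_mod_cast this : (k:ℝ) ≤ ((m' - 1 : ℤ) : ℝ))
        linarith
  rw [hset, Set.ncard_coe_finset, Int.card_Icc]
  congr 2
  omega

lemma rect_boundary_null (μ₁ μ₂ : Measure ℝ) [SFinite μ₂] {u v w z : ℝ}
    (hu : μ₁ {u} = 0) (hv : μ₁ {v} = 0) (hw : μ₂ {w} = 0) (hz : μ₂ {z} = 0) :
    (μ₁.prod μ₂) ((Icc u v ×ˢ Icc w z) \ (Ioo u v ×ˢ Ioo w z)) = 0 := by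
  refine measure_mono_null (t := (({u} : Set ℝ) ×ˢ Icc w z) ∪ (({v} : Set ℝ) ×ˢ Icc w z)
    ∪ (Icc u v ×ˢ ({w} : Set ℝ)) ∪ (Icc u v ×ˢ ({z} : Set ℝ))) ?_ ?_
  · rintro ⟨p, q⟩ ⟨⟨hp, hq⟩, hn⟩
    simp only [mem_prod, mem_Icc, mem_Ioo] at hp hq hn
    simp only [mem_union, mem_prod, mem_singleton_iff, mem_Icc]
    by_cases hpu : p = u
    · exact Or.inl (Or.inl (Or.inl ⟨hpu, hq⟩))
    by_cases hpv : p = v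
    · exact Or.inl (Or.inl (Or.inr ⟨hpv, hq⟩))
    have hpo : u < p ∧ p < v := ⟨lt_of_le_of_ne hp.1 (Ne.symm hpu), lt_of_le_of_ne hp.2 hpv⟩
    by_cases hqw : q = w
    · exact Or.inl (Or.inr ⟨hp, hqw⟩)
    by_cases hqz : q = z
    · exact Or.inr ⟨hp, hqz⟩
    exact absurd ⟨hpo, ⟨lt_of_le_of_ne hq.1 (Ne.symm hqw), lt_of_le_of_ne hq.2 hqz⟩⟩ hn
  · refine measure_union_null (measure_union_null (measure_union_null ?_ ?_) ?_) ?_ <;>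
      rw [Measure.prod_prod]
    · rw [hu, zero_mul]
    · rw [hv, zero_mul]
    · rw [hw, mul_zero]
    · rw [hz, mul_zero]

lemma sum_tiles_eq (ν : Measure (ℝ × ℝ)) {n : ℕ} (x y s : Fin n → ℝ) (a b c d : ℝ)
    (hdisj : ∀ i j, i ≠ j →
      (Set.Ioo (x i) (x i + s i) ×ˢ Set.Ioo (y i) (y i + s i)) ∩
      (Set.Ioo (x j) (x j + s j) ×ˢ Set.Ioo (y j) (y j + s j)) = ∅)
    (hunion : (⋃ i, Set.Icc (x i) (x i + s i) ×ˢ Set.Icc (y i) (y i + s i))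
      = Set.Icc a b ×ˢ Set.Icc c d)
    (hnull : ∀ i, ν ((Icc (x i) (x i + s i) ×ˢ Icc (y i) (y i + s i))
      \ (Ioo (x i) (x i + s i) ×ˢ Ioo (y i) (y i + s i))) = 0) :
    ∑ i, ν (Icc (x i) (x i + s i) ×ˢ Icc (y i) (y i + s i)) = ν (Icc a b ×ˢ Icc c d) := by
  set C : Fin n → Set (ℝ × ℝ) := fun i => Icc (x i) (x i + s i) ×ˢ Icc (y i) (y i + s i) with hC
  set O : Fin n → Set (ℝ × ℝ) := fun i => Ioo (x i) (x i + s i) ×ˢ Ioo (y i) (y i + s i) with hO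
  have hOC : ∀ i, O i ⊆ C i := fun i =>
    Set.prod_mono Ioo_subset_Icc_self Ioo_subset_Icc_self
  have hCO : ∀ i, ν (C i) = ν (O i) := by
    intro i
    refine le_antisymm ?_ (measure_mono (hOC i))
    calc ν (C i) ≤ ν (O i ∪ (C i \ O i)) := measure_mono (fun p hp => by
          by_cases h : p ∈ O i
          · exact Or.inl h
          · exact Or.inr ⟨hp, h⟩)
      _ ≤ ν (O i) + ν (C i \ O i) := measure_union_le _ _
      _ = ν (O i) := by rw [hnull i, add_zero]
  have hOmeas : ∀ i, MeasurableSet (O i) := fun i =>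
    measurableSet_Ioo.prod measurableSet_Ioo
  have hdisj' : Pairwise (Function.onFun Disjoint O) := by
    intro i j hij
    rw [Function.onFun, Set.disjoint_iff_inter_eq_empty]
    exact hdisj i j hij
  have hsumO : ν (⋃ i, O i) = ∑ i, ν (O i) := by
    rw [measure_iUnion hdisj' hOmeas, tsum_fintype]
  refine le_antisymm ?_ ?_
  · calc ∑ i, ν (C i) = ∑ i, ν (O i) := Finset.sum_congr rfl (fun i _ => hCO i)
      _ = ν (⋃ i, O i) := hsumO.symm
      _ ≤ ν (Icc a b ×ˢ Icc c d) := by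
          apply measure_mono
          rw [← hunion]
          exact Set.iUnion_mono hOC
  · calc ν (Icc a b ×ˢ Icc c d) = ν (⋃ i, C i) := by rw [hunion]
      _ ≤ ∑' i, ν (C i) := measure_iUnion_le C
      _ = ∑ i, ν (C i) := tsum_fintype _

lemma sum_ofReal_cancel {n : ℕ} (f : Fin n → ℝ) (r : ℝ) (hf : ∀ i, 0 ≤ f i) (hr : 0 ≤ r)
    (h : ∑ i, ENNReal.ofReal (f i) = ENNReal.ofReal r) : ∑ i, f i = r := by
  rw [← ENNReal.ofReal_sum_of_nonneg (fun i _ => hf i)] at h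
  exact (ENNReal.ofReal_eq_ofReal_iff (Finset.sum_nonneg (fun i _ => hf i)) hr).mp h

/-- If a rectangle with integer top and bottom y-coordinates is tiled by squares such that
no vertex of any tile lies on a 1/2-shifted grid line and each tile is crossed by equally
many 1/2-shifted vertical and horizontal grid lines, then each square's side length equals
the number of 1/2-shifted horizontal grid lines through it; in particular all side lengths
are integers. -/
theorem square_tiling_side_eq_horizontal_lines
    (a b c d : ℝ) (hab : a < b) (hcd : c < d)
    (hc : ∃ m : ℤ, c = m) (hd : ∃ m : ℤ, d = m)
    (n : ℕ) (x y s : Fin n → ℝ) (hs : ∀ i, 0 < s i)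
    (hdisj : ∀ i j, i ≠ j →
      (Set.Ioo (x i) (x i + s i) ×ˢ Set.Ioo (y i) (y i + s i)) ∩
      (Set.Ioo (x j) (x j + s j) ×ˢ Set.Ioo (y j) (y j + s j)) = ∅)
    (hunion : (⋃ i, Set.Icc (x i) (x i + s i) ×ˢ Set.Icc (y i) (y i + s i))
      = Set.Icc a b ×ˢ Set.Icc c d)
    (hii : ∀ i, ∀ k : ℤ,
      x i ≠ (k : ℝ) + 1/2 ∧ x i + s i ≠ (k : ℝ) + 1/2 ∧
      y i ≠ (k : ℝ) + 1/2 ∧ y i + s i ≠ (k : ℝ) + 1/2)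
    (hiii : ∀ i,
      {k : ℤ | x i < (k : ℝ) + 1/2 ∧ (k : ℝ) + 1/2 < x i + s i}.ncard =
      {k : ℤ | y i < (k : ℝ) + 1/2 ∧ (k : ℝ) + 1/2 < y i + s i}.ncard) :
    ∀ i, s i =
      ({k : ℤ | y i < (k : ℝ) + 1/2 ∧ (k : ℝ) + 1/2 < y i + s i}.ncard : ℝ) := by
  obtain ⟨m, hm⟩ := hc
  obtain ⟨m', hm'⟩ := hd
  set H : Fin n → ℕ :=
    fun i => {k : ℤ | y i < (k : ℝ) + 1/2 ∧ (k : ℝ) + 1/2 < y i + s i}.ncard with hHdef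
  have hvolx : ∀ i, (volume : Measure ℝ) (Icc (x i) (x i + s i)) = ENNReal.ofReal (s i) := by
    intro i; rw [Real.volume_Icc]; congr 1; ring
  have hvoly : ∀ i, (volume : Measure ℝ) (Icc (y i) (y i + s i)) = ENNReal.ofReal (s i) := by
    intro i; rw [Real.volume_Icc]; congr 1; ring
  have hDx : ∀ i, halfDirac (Icc (x i) (x i + s i)) = (H i : ENNReal) := by
    intro i
    rw [halfDirac_Icc _ _ (fun k => (hii i k).1) (fun k => (hii i k).2.1)]
    norm_cast
    exact hiii i
  have hDy : ∀ i, halfDirac (Icc (y i) (y i + s i)) = (H i : ENNReal) := by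
    intro i
    rw [halfDirac_Icc _ _ (fun k => (hii i k).2.2.1) (fun k => (hii i k).2.2.2)]
  have hmm' : m ≤ m' := by
    have h := hcd; rw [hm, hm'] at h; exact_mod_cast h.le
  set N : ℕ := (m' - m).toNat with hN
  have hDcd : halfDirac (Icc c d) = (N : ENNReal) := by
    rw [hm, hm']; exact halfDirac_Icc_int m m' hmm'
  have hNreal : (N : ℝ) = d - c := by
    have h1 : ((m' - m).toNat : ℤ) = m' - m := Int.toNat_of_nonneg (by omega)
    have h2 := congrArg (fun z : ℤ => (z : ℝ)) h1
    rw [hm, hm', hN]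
    push_cast at h2 ⊢
    linarith
  set M : ℕ := {k : ℤ | (k : ℝ) + 1/2 ∈ Icc a b}.ncard with hM
  have hDab : halfDirac (Icc a b) = (M : ENNReal) :=
    halfDirac_apply _ measurableSet_Icc (halfPoints_Icc_finite a b)
  have hDptx : ∀ i, halfDirac {x i} = 0 := fun i => halfDirac_singleton _ (fun k => (hii i k).1)
  have hDptx' : ∀ i, halfDirac {x i + s i} = 0 :=
    fun i => halfDirac_singleton _ (fun k => (hii i k).2.1)
  have hDpty : ∀ i, halfDirac {y i} = 0 :=
    fun i => halfDirac_singleton _ (fun k => (hii i k).2.2.1)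
  have hDpty' : ∀ i, halfDirac {y i + s i} = 0 :=
    fun i => halfDirac_singleton _ (fun k => (hii i k).2.2.2)
  have E1 : ∑ i, s i * s i = (b - a) * (d - c) := by
    apply sum_ofReal_cancel _ _ (fun i => mul_nonneg (hs i).le (hs i).le)
      (mul_nonneg (by linarith) (by linarith))
    have Q := sum_tiles_eq ((volume : Measure ℝ).prod volume) x y s a b c d hdisj hunion
      (fun i => rect_boundary_null _ _ Real.volume_singleton Real.volume_singleton
        Real.volume_singleton Real.volume_singleton)
    simp only [Measure.prod_prod] at Q
    calc ∑ i, ENNReal.ofReal (s i * s i)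
        = ∑ i, volume (Icc (x i) (x i + s i)) * volume (Icc (y i) (y i + s i)) := by
          refine Finset.sum_congr rfl fun i _ => ?_
          rw [hvolx i, hvoly i, ← ENNReal.ofReal_mul (hs i).le]
      _ = volume (Icc a b) * volume (Icc c d) := Q
      _ = ENNReal.ofReal ((b - a) * (d - c)) := by
          rw [Real.volume_Icc, Real.volume_Icc, ← ENNReal.ofReal_mul (by linarith)]
  have E2 : ∑ i, s i * (H i : ℝ) = (b - a) * (N : ℝ) := by
    apply sum_ofReal_cancel _ _ (fun i => mul_nonneg (hs i).le (Nat.cast_nonneg _))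
      (mul_nonneg (by linarith) (Nat.cast_nonneg _))
    have Q := sum_tiles_eq ((volume : Measure ℝ).prod halfDirac) x y s a b c d hdisj hunion
      (fun i => rect_boundary_null _ _ Real.volume_singleton Real.volume_singleton
        (hDpty i) (hDpty' i))
    simp only [Measure.prod_prod] at Q
    calc ∑ i, ENNReal.ofReal (s i * (H i : ℝ))
        = ∑ i, volume (Icc (x i) (x i + s i)) * halfDirac (Icc (y i) (y i + s i)) := by
          refine Finset.sum_congr rfl fun i _ => ?_
          rw [hvolx i, hDy i, ENNReal.ofReal_mul (hs i).le, ENNReal.ofReal_natCast]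
      _ = volume (Icc a b) * halfDirac (Icc c d) := Q
      _ = ENNReal.ofReal ((b - a) * (N : ℝ)) := by
          rw [Real.volume_Icc, hDcd, ENNReal.ofReal_mul (by linarith), ENNReal.ofReal_natCast]
  have E3 : ∑ i, (H i : ℝ) * s i = (M : ℝ) * (d - c) := by
    apply sum_ofReal_cancel _ _ (fun i => mul_nonneg (Nat.cast_nonneg _) (hs i).le)
      (mul_nonneg (Nat.cast_nonneg _) (by linarith))
    have Q := sum_tiles_eq (halfDirac.prod (volume : Measure ℝ)) x y s a b c d hdisj hunion
      (fun i => rect_boundary_null _ _ (hDptx i) (hDptx' i)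
        Real.volume_singleton Real.volume_singleton)
    simp only [Measure.prod_prod] at Q
    calc ∑ i, ENNReal.ofReal ((H i : ℝ) * s i)
        = ∑ i, halfDirac (Icc (x i) (x i + s i)) * volume (Icc (y i) (y i + s i)) := by
          refine Finset.sum_congr rfl fun i _ => ?_
          rw [hDx i, hvoly i, ENNReal.ofReal_mul (Nat.cast_nonneg _), ENNReal.ofReal_natCast]
      _ = halfDirac (Icc a b) * volume (Icc c d) := Q
      _ = ENNReal.ofReal ((M : ℝ) * (d - c)) := by
          rw [Real.volume_Icc, hDab, ENNReal.ofReal_mul (Nat.cast_nonneg _),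
            ENNReal.ofReal_natCast]
  have E4 : ∑ i, (H i : ℝ) * (H i : ℝ) = (M : ℝ) * (N : ℝ) := by
    apply sum_ofReal_cancel _ _ (fun i => mul_nonneg (Nat.cast_nonneg _) (Nat.cast_nonneg _))
      (mul_nonneg (Nat.cast_nonneg _) (Nat.cast_nonneg _))
    have Q := sum_tiles_eq (halfDirac.prod halfDirac) x y s a b c d hdisj hunion
      (fun i => rect_boundary_null _ _ (hDptx i) (hDptx' i) (hDpty i) (hDpty' i))
    simp only [Measure.prod_prod] at Q
    calc ∑ i, ENNReal.ofReal ((H i : ℝ) * (H i : ℝ))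
        = ∑ i, halfDirac (Icc (x i) (x i + s i)) * halfDirac (Icc (y i) (y i + s i)) := by
          refine Finset.sum_congr rfl fun i _ => ?_
          rw [hDx i, hDy i, ENNReal.ofReal_mul (Nat.cast_nonneg _), ENNReal.ofReal_natCast]
      _ = halfDirac (Icc a b) * halfDirac (Icc c d) := Q
      _ = ENNReal.ofReal ((M : ℝ) * (N : ℝ)) := by
          rw [hDab, hDcd, ENNReal.ofReal_mul (Nat.cast_nonneg _), ENNReal.ofReal_natCast,
            ENNReal.ofReal_natCast]
  have hsum0 : ∑ i, (s i - (H i : ℝ))^2 = 0 := by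
    calc ∑ i, (s i - (H i : ℝ))^2
        = ∑ i, (s i * s i - s i * (H i : ℝ) - (H i : ℝ) * s i + (H i : ℝ) * (H i : ℝ)) :=
          Finset.sum_congr rfl fun i _ => by ring
      _ = ∑ i, s i * s i - ∑ i, s i * (H i : ℝ) - ∑ i, (H i : ℝ) * s i
          + ∑ i, (H i : ℝ) * (H i : ℝ) := by
          rw [Finset.sum_add_distrib, Finset.sum_sub_distrib, Finset.sum_sub_distrib]
      _ = 0 := by rw [E1, E2, E3, E4, hNreal]; ring
  intro i
  have h := (Finset.sum_eq_zero_iff_of_nonneg (fun i _ => sq_nonneg _)).mp hsum0 i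
    (Finset.mem_univ i)
  have h2 : s i - (H i : ℝ) = 0 := by
    have := sq_eq_zero_iff.mp h
    exact this
  have : s i = (H i : ℝ) := by linarith
  simpa [hHdef] using this
end

section
/- Suppose a rectangle is tiled by finitely many axis-parallel squares, and either both x-coordinates or both y-coordinates of the vertices of the rectangle are integers. If every coordinate of every vertex of each square tile has distance less than 1/4 to an integer, then all square tiles have integer side lengths. -/
open MeasureTheory Real Set

lemma myIccIntegral (p q : ℝ) (h : p ≤ q) :
    ∫ u in Set.Icc p q, Real.cos (2*π*u) = (Real.sin (2*π*q) - Real.sin (2*π*p))/(2*π) := by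
  rw [MeasureTheory.integral_Icc_eq_integral_Ioc, ← intervalIntegral.integral_of_le h]
  have h2 : (2*π) ≠ 0 := by positivity
  rw [show (fun u => Real.cos (2*π*u)) = (fun u => Real.cos ((2*π)*u)) from rfl]
  rw [intervalIntegral.integral_comp_mul_left Real.cos h2, integral_cos]
  simp [smul_eq_mul]; ring

lemma mySinShift (u : ℝ) (m : ℤ) : Real.sin (2*π*u) = Real.sin (2*π*(u - m)) := by
  rw [show 2*π*u = 2*π*(u-m) + m * (2*π) by ring, Real.sin_add_int_mul_two_pi]

lemma mySinInt (m : ℤ) : Real.sin (2*π*m) = 0 := by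
  rw [show 2*π*(m:ℝ) = ((2*m : ℤ):ℝ) * π by push_cast; ring, Real.sin_int_mul_pi]

lemma mySinMono {α β : ℝ} (hα : |α| < 1/4) (hβ : |β| < 1/4) (h : α < β) :
    Real.sin (2*π*α) < Real.sin (2*π*β) := by
  have hπ := Real.pi_gt_three
  apply Real.strictMonoOn_sin ?_ ?_ (by nlinarith)
  · constructor <;> [nlinarith [abs_lt.1 hα]; nlinarith [abs_lt.1 hα]]
  · constructor <;> [nlinarith [abs_lt.1 hβ]; nlinarith [abs_lt.1 hβ]]

/-- If a rectangle tiled by squares has both x-coordinates or both y-coordinates of its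
vertices integers, and every coordinate of every vertex of every square tile is within
distance less than 1/4 of an integer, then all square tiles have integer side lengths. -/
theorem square_tiling_almost_integer_coords
    (a b c d : ℝ) (hab : a < b) (hcd : c < d)
    (hint : (∃ m m' : ℤ, a = m ∧ b = m') ∨ (∃ m m' : ℤ, c = m ∧ d = m'))
    (n : ℕ) (x y s : Fin n → ℝ) (hs : ∀ i, 0 < s i)
    (hdisj : ∀ i j, i ≠ j →
      (Set.Ioo (x i) (x i + s i) ×ˢ Set.Ioo (y i) (y i + s i)) ∩
      (Set.Ioo (x j) (x j + s j) ×ˢ Set.Ioo (y j) (y j + s j)) = ∅)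
    (hunion : (⋃ i, Set.Icc (x i) (x i + s i) ×ˢ Set.Icc (y i) (y i + s i))
      = Set.Icc a b ×ˢ Set.Icc c d)
    (hclose : ∀ i,
      (∃ m : ℤ, |x i - m| < 1/4) ∧ (∃ m : ℤ, |x i + s i - m| < 1/4) ∧
      (∃ m : ℤ, |y i - m| < 1/4) ∧ (∃ m : ℤ, |y i + s i - m| < 1/4)) :
    ∀ i, ∃ m : ℤ, s i = m := by
  set T : Fin n → Set (ℝ × ℝ) :=
    fun i => Set.Icc (x i) (x i + s i) ×ˢ Set.Icc (y i) (y i + s i) with hT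
  set O : Fin n → Set (ℝ × ℝ) :=
    fun i => Set.Ioo (x i) (x i + s i) ×ˢ Set.Ioo (y i) (y i + s i) with hO
  set f : ℝ × ℝ → ℝ := fun z => Real.cos (2*π*z.1) * Real.cos (2*π*z.2) with hf
  have hfcont : Continuous f := by fun_prop
  -- null boundary
  have hnull : ∀ i, volume (T i \ O i) = 0 := by
    intro i
    have hOsub : O i ⊆ T i := Set.prod_mono Set.Ioo_subset_Icc_self Set.Ioo_subset_Icc_self
    have hvT : volume (T i) = ENNReal.ofReal (s i) * ENNReal.ofReal (s i) := by
      rw [hT]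
      rw [MeasureTheory.Measure.volume_eq_prod, MeasureTheory.Measure.prod_prod,
        Real.volume_Icc, Real.volume_Icc]
      ring_nf
    have hvO : volume (O i) = ENNReal.ofReal (s i) * ENNReal.ofReal (s i) := by
      rw [hO]
      rw [MeasureTheory.Measure.volume_eq_prod, MeasureTheory.Measure.prod_prod,
        Real.volume_Ioo, Real.volume_Ioo]
      ring_nf
    have hOfin : volume (O i) ≠ ⊤ := by rw [hvO]; exact ENNReal.mul_ne_top ENNReal.ofReal_ne_top ENNReal.ofReal_ne_top
    have hOm : NullMeasurableSet (O i) volume :=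
      (measurableSet_Ioo.prod measurableSet_Ioo).nullMeasurableSet
    rw [measure_diff hOsub hOm hOfin, hvT, hvO, tsub_self]
  have hTm : ∀ i, MeasurableSet (T i) := fun i => measurableSet_Icc.prod measurableSet_Icc
  have haedisj : Pairwise (Function.onFun (MeasureTheory.AEDisjoint volume) T) := by
    intro i j hij
    have hsub : T i ∩ T j ⊆ (O i ∩ O j) ∪ ((T i \ O i) ∪ (T j \ O j)) := by
      intro p hp
      by_cases h1 : p ∈ O i
      · by_cases h2 : p ∈ O j
        · exact Or.inl ⟨h1, h2⟩
        · exact Or.inr (Or.inr ⟨hp.2, h2⟩)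
      · exact Or.inr (Or.inl ⟨hp.1, h1⟩)
    refine measure_mono_null hsub ?_
    rw [hdisj i j hij]
    simp only [Set.empty_union]
    exact measure_union_null (hnull i) (hnull j)
  have hInt : MeasureTheory.IntegrableOn f (⋃ i, T i) volume := by
    rw [hunion]
    exact hfcont.continuousOn.integrableOn_compact (isCompact_Icc.prod isCompact_Icc)
  have hsum : ∑ i, ∫ z in T i, f z = ∫ z in Set.Icc a b ×ˢ Set.Icc c d, f z := by
    rw [← hunion, MeasureTheory.integral_iUnion_ae (fun i => (hTm i).nullMeasurableSet)
      haedisj hInt, tsum_fintype]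
  have hrect : ∀ (p q r t : ℝ), p ≤ q → r ≤ t →
      ∫ z in Set.Icc p q ×ˢ Set.Icc r t, f z
        = ((Real.sin (2*π*q) - Real.sin (2*π*p))/(2*π)) *
          ((Real.sin (2*π*t) - Real.sin (2*π*r))/(2*π)) := by
    intro p q r t hpq hrt
    rw [hf]
    rw [MeasureTheory.Measure.volume_eq_prod,
      MeasureTheory.setIntegral_prod_mul (fun u => Real.cos (2*π*u)) (fun u => Real.cos (2*π*u)),
      myIccIntegral p q hpq, myIccIntegral r t hrt]
  have hzero : ∑ i, ∫ z in T i, f z = 0 := by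
    rw [hsum, hrect a b c d hab.le hcd.le]
    rcases hint with ⟨m, m', hm, hm'⟩ | ⟨m, m', hm, hm'⟩
    · rw [hm, hm', mySinInt, mySinInt]; ring
    · rw [hm, hm', mySinInt, mySinInt]; ring
  -- per-tile analysis
  have key : ∀ i, (0 ≤ ∫ z in T i, f z) ∧ ((∫ z in T i, f z) = 0 → ∃ m : ℤ, s i = m) := by
    intro i
    obtain ⟨⟨p, hp⟩, ⟨q, hq⟩, ⟨r, hr⟩, ⟨t, ht⟩⟩ := hclose i
    have hsx : x i ≤ x i + s i := by linarith [hs i]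
    have hsy : y i ≤ y i + s i := by linarith [hs i]
    have hTi : ∫ z in T i, f z
        = ((Real.sin (2*π*(x i + s i - q)) - Real.sin (2*π*(x i - p)))/(2*π)) *
          ((Real.sin (2*π*(y i + s i - t)) - Real.sin (2*π*(y i - r)))/(2*π)) := by
      rw [hT, hrect _ _ _ _ hsx hsy, mySinShift (x i + s i) q, mySinShift (x i) p,
        mySinShift (y i + s i) t, mySinShift (y i) r]
    -- the two deviations are equal
    have heq : (x i + s i - q) - (x i - p) = (y i + s i - t) - (y i - r) := by
      have hD : ((t - r) - (q - p) : ℤ) = 0 := by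
        have h1 : |(((t - r) - (q - p) : ℤ) : ℝ)| < 1 := by
          push_cast
          rw [abs_lt]
          constructor <;> [nlinarith [abs_lt.1 hp, abs_lt.1 hq, abs_lt.1 hr, abs_lt.1 ht];
            nlinarith [abs_lt.1 hp, abs_lt.1 hq, abs_lt.1 hr, abs_lt.1 ht]]
        have h2 : |((t - r) - (q - p) : ℤ)| < 1 := by exact_mod_cast h1
        rcases abs_lt.1 h2 with ⟨h3, h4⟩
        omega
      have : ((t : ℝ) - r) - ((q : ℝ) - p) = 0 := by exact_mod_cast hD
      linarith
    rcases lt_trichotomy ((x i + s i - q) - (x i - p)) 0 with he | he | he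
    · have hx' : Real.sin (2*π*(x i + s i - q)) < Real.sin (2*π*(x i - p)) :=
        mySinMono hq hp (by linarith)
      have hy' : Real.sin (2*π*(y i + s i - t)) < Real.sin (2*π*(y i - r)) :=
        mySinMono ht hr (by linarith)
      have h2π : (0:ℝ) < 2*π := by positivity
      have f1 : (Real.sin (2*π*(x i + s i - q)) - Real.sin (2*π*(x i - p)))/(2*π) < 0 :=
        div_neg_of_neg_of_pos (by linarith) h2π
      have f2 : (Real.sin (2*π*(y i + s i - t)) - Real.sin (2*π*(y i - r)))/(2*π) < 0 :=
        div_neg_of_neg_of_pos (by linarith) h2π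
      have hpos : 0 < (∫ z in T i, f z) := by rw [hTi]; exact mul_pos_of_neg_of_neg f1 f2
      exact ⟨hpos.le, fun h0 => absurd h0 (by positivity)⟩
    · refine ⟨?_, fun _ => ⟨q - p, by push_cast; linarith⟩⟩
      rw [hTi]
      have : (x i + s i - q) = (x i - p) := by linarith
      rw [this]
      simp
    · have hx' : Real.sin (2*π*(x i - p)) < Real.sin (2*π*(x i + s i - q)) :=
        mySinMono hp hq (by linarith)
      have hy' : Real.sin (2*π*(y i - r)) < Real.sin (2*π*(y i + s i - t)) :=
        mySinMono hr ht (by linarith)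
      have h2π : (0:ℝ) < 2*π := by positivity
      have f1 : 0 < (Real.sin (2*π*(x i + s i - q)) - Real.sin (2*π*(x i - p)))/(2*π) :=
        div_pos (by linarith) h2π
      have f2 : 0 < (Real.sin (2*π*(y i + s i - t)) - Real.sin (2*π*(y i - r)))/(2*π) :=
        div_pos (by linarith) h2π
      have hpos : 0 < (∫ z in T i, f z) := by rw [hTi]; exact mul_pos f1 f2
      exact ⟨hpos.le, fun h0 => absurd h0 (by positivity)⟩
  intro i
  have hzero' : ∀ j ∈ Finset.univ, (∫ z in T j, f z) = 0 := by
    rw [← Finset.sum_eq_zero_iff_of_nonneg (fun j _ => (key j).1)]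
    exact hzero
  exact (key i).2 (hzero' i (Finset.mem_univ i))
end

section
/- Suppose a rectangle R = [a,b]×[c,d] is tiled by n rectangles Rᵢ = [aᵢ,bᵢ]×[cᵢ,dᵢ], i = 1,…,n. Then the number of distinct values among {a₁,…,aₙ,b₁,…,bₙ} plus the number of distinct values among {c₁,…,cₙ,d₁,…,dₙ} is at most n + 3. -/
open Set

/-- For a finite set of reals `V` and a point `x`, there is an `ε > 0` such that
no element of `V` other than `x` itself lies within `ε` of `x`. -/
private lemma exists_eps_aux (V : Set ℝ) (hV : V.Finite) (x : ℝ) :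
    ∃ ε : ℝ, 0 < ε ∧ ∀ v ∈ V, (x < v → x + ε < v) ∧ (v < x → v < x - ε) := by
  classical
  refine Set.Finite.induction_on (motive := fun V _ => ∃ ε : ℝ, 0 < ε ∧ ∀ v ∈ V,
    (x < v → x + ε < v) ∧ (v < x → v < x - ε)) V hV ⟨1, one_pos, by simp⟩ ?_
  intro v s hvs hsf ih
  · obtain ⟨ε, hε, h⟩ := ih
    rcases eq_or_ne v x with rfl | hvx
    · refine ⟨ε, hε, ?_⟩
      intro w hw
      rcases Set.mem_insert_iff.mp hw with rfl | hw
      · exact ⟨fun h' => absurd h' (lt_irrefl _), fun h' => absurd h' (lt_irrefl _)⟩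
      · exact h w hw
    · have habs : 0 < |v - x| := abs_pos.mpr (sub_ne_zero.mpr hvx)
      refine ⟨min ε (|v - x| / 2), lt_min hε (by linarith), ?_⟩
      intro w hw
      rcases Set.mem_insert_iff.mp hw with rfl | hw
      · constructor
        · intro hlt
          have h1 : |w - x| = w - x := abs_of_pos (by linarith)
          have h2 : min ε (|w - x| / 2) ≤ |w - x| / 2 := min_le_right _ _
          linarith
        · intro hlt
          have h1 : |w - x| = -(w - x) := abs_of_neg (by linarith)
          have h2 : min ε (|w - x| / 2) ≤ |w - x| / 2 := min_le_right _ _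
          linarith
      · have h1 := h w hw
        have h2 : min ε (|v - x| / 2) ≤ ε := min_le_left _ _
        exact ⟨fun hlt => by have := h1.1 hlt; linarith,
               fun hlt => by have := h1.2 hlt; linarith⟩

/-- In a tiling of a rectangle by n rectangles, the number of distinct x-coordinates plus
the number of distinct y-coordinates of vertices of tiles is at most n + 3. -/
theorem rect_tiling_coord_count
    (a b c d : ℝ) (hab : a < b) (hcd : c < d)
    (n : ℕ) (A B C D : Fin n → ℝ)
    (hAB : ∀ i, A i < B i) (hCD : ∀ i, C i < D i)
    (hdisj : ∀ i j, i ≠ j →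
      (Set.Ioo (A i) (B i) ×ˢ Set.Ioo (C i) (D i)) ∩
      (Set.Ioo (A j) (B j) ×ˢ Set.Ioo (C j) (D j)) = ∅)
    (hunion : (⋃ i, Set.Icc (A i) (B i) ×ˢ Set.Icc (C i) (D i))
      = Set.Icc a b ×ˢ Set.Icc c d) :
    (Set.range A ∪ Set.range B).ncard + (Set.range C ∪ Set.range D).ncard ≤ n + 3 := by
  classical
  -- every point of the rectangle lies in some tile
  have hkey : ∀ x y : ℝ, a ≤ x → x ≤ b → c ≤ y → y ≤ d →
      ∃ i, A i ≤ x ∧ x ≤ B i ∧ C i ≤ y ∧ y ≤ D i := by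
    intro x y h1 h2 h3 h4
    have hmem : (x, y) ∈ Set.Icc a b ×ˢ Set.Icc c d := ⟨⟨h1, h2⟩, ⟨h3, h4⟩⟩
    rw [← hunion] at hmem
    obtain ⟨i, hi⟩ := Set.mem_iUnion.mp hmem
    exact ⟨i, hi.1.1, hi.1.2, hi.2.1, hi.2.2⟩
  -- every tile lies inside the rectangle
  have hsub : ∀ i, a ≤ A i ∧ B i ≤ b ∧ c ≤ C i ∧ D i ≤ d := by
    intro i
    have h1 : (A i, C i) ∈ Set.Icc a b ×ˢ Set.Icc c d := by
      rw [← hunion]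
      exact Set.mem_iUnion.mpr ⟨i, ⟨⟨le_refl _, (hAB i).le⟩, ⟨le_refl _, (hCD i).le⟩⟩⟩
    have h2 : (B i, D i) ∈ Set.Icc a b ×ˢ Set.Icc c d := by
      rw [← hunion]
      exact Set.mem_iUnion.mpr ⟨i, ⟨⟨(hAB i).le, le_refl _⟩, ⟨(hCD i).le, le_refl _⟩⟩⟩
    exact ⟨h1.1.1, h2.1.2, h1.2.1, h2.2.2⟩
  -- interiors are disjoint, pointwise form
  have hdisj' : ∀ i j : Fin n, i ≠ j → ∀ x y : ℝ,
      A i < x → x < B i → C i < y → y < D i →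
      A j < x → x < B j → C j < y → y < D j → False := by
    intro i j hij x y h1 h2 h3 h4 h5 h6 h7 h8
    have h := hdisj i j hij
    have hm : (x, y) ∈ (Set.Ioo (A i) (B i) ×ˢ Set.Ioo (C i) (D i)) ∩
        (Set.Ioo (A j) (B j) ×ˢ Set.Ioo (C j) (D j)) :=
      ⟨⟨⟨h1, h2⟩, ⟨h3, h4⟩⟩, ⟨⟨h5, h6⟩, ⟨h7, h8⟩⟩⟩
    rw [h] at hm
    exact hm
  have hXfin : (Set.range A ∪ Set.range B).Finite :=
    (Set.finite_range A).union (Set.finite_range B)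
  have hYfin : (Set.range C ∪ Set.range D).Finite :=
    (Set.finite_range C).union (Set.finite_range D)
  -- separation epsilon at any point
  have eps : ∀ x y : ℝ, ∃ ε : ℝ, 0 < ε ∧
      (∀ v ∈ insert a (insert b (Set.range A ∪ Set.range B)),
        (x < v → x + ε < v) ∧ (v < x → v < x - ε)) ∧
      (∀ v ∈ insert c (insert d (Set.range C ∪ Set.range D)),
        (y < v → y + ε < v) ∧ (v < y → v < y - ε)) := by
    intro x y
    obtain ⟨ε1, hε1, h1⟩ := exists_eps_aux _ ((hXfin.insert b).insert a) x
    obtain ⟨ε2, hε2, h2⟩ := exists_eps_aux _ ((hYfin.insert d).insert c) y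
    refine ⟨min ε1 ε2, lt_min hε1 hε2, ?_, ?_⟩
    · intro v hv
      have h := h1 v hv
      have hle : min ε1 ε2 ≤ ε1 := min_le_left _ _
      exact ⟨fun hlt => by have := h.1 hlt; linarith,
             fun hlt => by have := h.2 hlt; linarith⟩
    · intro v hv
      have h := h2 v hv
      have hle : min ε1 ε2 ≤ ε2 := min_le_right _ _
      exact ⟨fun hlt => by have := h.1 hlt; linarith,
             fun hlt => by have := h.2 hlt; linarith⟩
  -- corner tile at (b, d)
  obtain ⟨i₀, hi₀A, hi₀B, hi₀C, hi₀D⟩ := hkey b d hab.le le_rfl hcd.le le_rfl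
  have hBi₀ : B i₀ = b := le_antisymm (hsub i₀).2.1 hi₀B
  have hDi₀ : D i₀ = d := le_antisymm (hsub i₀).2.2.2 hi₀D
  set Xi := (Set.range A ∪ Set.range B) ∩ Set.Ioo a b with hXidef
  set Yi := (Set.range C ∪ Set.range D) ∩ Set.Ioo c d with hYidef
  -- every interior x-value is the right edge of some tile
  have rightedge : ∀ t ∈ Xi, ∃ i : Fin n, B i = t := by
    rintro t ⟨hmem, hta, htb⟩
    rcases hmem with ⟨j, rfl⟩ | ⟨j, rfl⟩
    swap
    · exact ⟨j, rfl⟩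
    -- t = A j with a < A j
    obtain ⟨y0, hy0I, hy0N⟩ :=
      ((Set.Ioo_infinite (hCD j)).diff hYfin).nonempty
    have hy0c : c < y0 := lt_of_le_of_lt (hsub j).2.2.1 hy0I.1
    have hy0d : y0 < d := lt_of_lt_of_le hy0I.2 (hsub j).2.2.2
    obtain ⟨ε, hε, hx, hy⟩ := eps (A j) y0
    have haε : a < A j - ε := (hx a (by simp)).2 hta
    have hdε : y0 + ε < d := (hy d (by simp)).1 hy0d
    obtain ⟨i, h1, h2, h3, h4⟩ := hkey (A j - ε) (y0 + ε)
      (by linarith) (by linarith) (by linarith) (by linarith)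
    have hiA : A i < A j := by linarith
    have hiB : A j ≤ B i := by
      by_contra h
      push_neg at h
      have := (hx (B i) (by simp)).2 h
      linarith
    have hiCle : C i ≤ y0 := by
      by_contra h
      push_neg at h
      have := (hy (C i) (by simp)).1 h
      linarith
    have hiC : C i < y0 := lt_of_le_of_ne hiCle (fun h => hy0N (Or.inl ⟨i, h⟩))
    have hiD : y0 < D i := by linarith
    rcases eq_or_lt_of_le hiB with heq | hlt
    · exact ⟨i, heq.symm⟩
    · have hij : i ≠ j := fun h => by rw [h] at hiA; exact lt_irrefl _ hiA
      have hm : A j < min (B i) (B j) := lt_min hlt (hAB j)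
      have e1 := min_le_left (B i) (B j)
      have e2 := min_le_right (B i) (B j)
      exact (hdisj' i j hij ((A j + min (B i) (B j)) / 2) y0
        (by linarith) (by linarith) hiC hiD
        (by linarith) (by linarith) hy0I.1 hy0I.2).elim
  -- every interior y-value is the top edge of some tile
  have topedge : ∀ s ∈ Yi, ∃ i : Fin n, D i = s := by
    rintro s ⟨hmem, hsc, hsd⟩
    rcases hmem with ⟨j, rfl⟩ | ⟨j, rfl⟩
    swap
    · exact ⟨j, rfl⟩
    -- s = C j with c < C j
    obtain ⟨x0, hx0I, hx0N⟩ :=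
      ((Set.Ioo_infinite (hAB j)).diff hXfin).nonempty
    have hx0a : a < x0 := lt_of_le_of_lt (hsub j).1 hx0I.1
    have hx0b : x0 < b := lt_of_lt_of_le hx0I.2 (hsub j).2.1
    obtain ⟨ε, hε, hx, hy⟩ := eps x0 (C j)
    have hcε : c < C j - ε := (hy c (by simp)).2 hsc
    have hbε : x0 + ε < b := (hx b (by simp)).1 hx0b
    obtain ⟨i, h1, h2, h3, h4⟩ := hkey x0 (C j - ε)
      (by linarith) (by linarith) (by linarith) (by linarith)
    have hiC : C i < C j := by linarith
    have hiD : C j ≤ D i := by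
      by_contra h
      push_neg at h
      have := (hy (D i) (by simp)).2 h
      linarith
    have hiAle : A i ≤ x0 := h1
    have hiA : A i < x0 := lt_of_le_of_ne hiAle (fun h => hx0N (Or.inl ⟨i, h⟩))
    have hiB : x0 < B i := lt_of_le_of_ne h2 (fun h => hx0N (Or.inr ⟨i, h.symm⟩))
    rcases eq_or_lt_of_le hiD with heq | hlt
    · exact ⟨i, heq.symm⟩
    · have hij : i ≠ j := fun h => by rw [h] at hiC; exact lt_irrefl _ hiC
      have hm : C j < min (D i) (D j) := lt_min hlt (hCD j)
      have e1 := min_le_left (D i) (D j)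
      have e2 := min_le_right (D i) (D j)
      exact (hdisj' i j hij x0 ((C j + min (D i) (D j)) / 2)
        hiA hiB (by linarith) (by linarith)
        hx0I.1 hx0I.2 (by linarith) (by linarith)).elim
  -- choose, for each interior x-value, a tile with that right edge and maximal top edge
  have hFex : ∀ t : ℝ, ∃ i : Fin n, t ∈ Xi → (B i = t ∧ ∀ j, B j = t → D j ≤ D i) := by
    intro t
    by_cases ht : t ∈ Xi
    · obtain ⟨i, hi⟩ := rightedge t ht
      obtain ⟨k, hk, hmax⟩ := Set.exists_max_image {j : Fin n | B j = t} D
        (Set.toFinite _) ⟨i, hi⟩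
      exact ⟨k, fun _ => ⟨hk, fun j hj => hmax j hj⟩⟩
    · exact ⟨i₀, fun h => absurd h ht⟩
  choose F hF using hFex
  have hGex : ∀ s : ℝ, ∃ i : Fin n, s ∈ Yi → (D i = s ∧ ∀ j, D j = s → B j ≤ B i) := by
    intro s
    by_cases hs : s ∈ Yi
    · obtain ⟨i, hi⟩ := topedge s hs
      obtain ⟨k, hk, hmax⟩ := Set.exists_max_image {j : Fin n | D j = s} B
        (Set.toFinite _) ⟨i, hi⟩
      exact ⟨k, fun _ => ⟨hk, fun j hj => hmax j hj⟩⟩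
    · exact ⟨i₀, fun h => absurd h hs⟩
  choose G hG using hGex
  -- the main disjointness claim : F and G have disjoint images
  have hFG : ∀ t ∈ Xi, ∀ s ∈ Yi, F t ≠ G s := by
    intro t ht s hs hFGeq
    obtain ⟨hBt, hmaxD⟩ := hF t ht
    obtain ⟨hDs, hmaxB⟩ := hG s hs
    rw [hFGeq] at hBt hmaxD
    have hta : a < t := ht.2.1
    have htb : t < b := ht.2.2
    have hsc : c < s := hs.2.1
    have hsd : s < d := hs.2.2
    -- approach (t,s) from the upper right
    obtain ⟨ε, hε, hx, hy⟩ := eps t s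
    have hbε : t + ε < b := (hx b (by simp)).1 htb
    have hdε : s + ε < d := (hy d (by simp)).1 hsd
    obtain ⟨j, hj1, hj2, hj3, hj4⟩ := hkey (t + ε) (s + ε)
      (by linarith) (by linarith) (by linarith) (by linarith)
    have hjA : A j ≤ t := by
      by_contra h
      push_neg at h
      have := (hx (A j) (by simp)).1 h
      linarith
    have hjB : t < B j := by linarith
    have hjC : C j ≤ s := by
      by_contra h
      push_neg at h
      have := (hy (C j) (by simp)).1 h
      linarith
    have hjD : s < D j := by linarith
    by_cases hAj : A j = t
    · -- approach (t,s) from the upper left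
      obtain ⟨ε', hε', hx', hy'⟩ := eps t s
      have haε' : a < t - ε' := (hx' a (by simp)).2 hta
      have hdε' : s + ε' < d := (hy' d (by simp)).1 hsd
      obtain ⟨k, hk1, hk2, hk3, hk4⟩ := hkey (t - ε') (s + ε')
        (by linarith) (by linarith) (by linarith) (by linarith)
      have hkA : A k < t := by linarith
      have hkB : t ≤ B k := by
        by_contra h
        push_neg at h
        have := (hx' (B k) (by simp)).2 h
        linarith
      have hkC : C k ≤ s := by
        by_contra h
        push_neg at h
        have := (hy' (C k) (by simp)).1 h
        linarith
      have hkD : s < D k := by linarith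
      rcases eq_or_lt_of_le hkB with heq | hlt
      · have := hmaxD k heq.symm
        rw [hDs] at this
        linarith
      · have hkj : k ≠ j := by
          intro h
          rw [h] at hkA
          rw [hAj] at hkA
          exact lt_irrefl _ hkA
        have hm : t < min (B k) (B j) := lt_min hlt hjB
        have hm' : s < min (D k) (D j) := lt_min hkD hjD
        have e1 := min_le_left (B k) (B j)
        have e2 := min_le_right (B k) (B j)
        have e3 := min_le_left (D k) (D j)
        have e4 := min_le_right (D k) (D j)
        exact hdisj' k j hkj ((t + min (B k) (B j)) / 2) ((s + min (D k) (D j)) / 2)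
          (by linarith) (by linarith) (by linarith) (by linarith)
          (by linarith) (by linarith) (by linarith) (by linarith)
    · have hjA' : A j < t := lt_of_le_of_ne hjA hAj
      by_cases hCj : C j = s
      · -- approach (t,s) from the lower right
        obtain ⟨ε', hε', hx', hy'⟩ := eps t s
        have hcε' : c < s - ε' := (hy' c (by simp)).2 hsc
        have hbε' : t + ε' < b := (hx' b (by simp)).1 htb
        obtain ⟨k, hk1, hk2, hk3, hk4⟩ := hkey (t + ε') (s - ε')
          (by linarith) (by linarith) (by linarith) (by linarith)
        have hkC : C k < s := by linarith
        have hkD : s ≤ D k := by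
          by_contra h
          push_neg at h
          have := (hy' (D k) (by simp)).2 h
          linarith
        have hkA : A k ≤ t := by
          by_contra h
          push_neg at h
          have := (hx' (A k) (by simp)).1 h
          linarith
        have hkB : t < B k := by linarith
        rcases eq_or_lt_of_le hkD with heq | hlt
        · have := hmaxB k heq.symm
          rw [hBt] at this
          linarith
        · have hkj : k ≠ j := by
            intro h
            rw [h] at hkC
            rw [hCj] at hkC
            exact lt_irrefl _ hkC
          have hm : t < min (B k) (B j) := lt_min hkB hjB
          have hm' : s < min (D k) (D j) := lt_min hlt hjD
          have e1 := min_le_left (B k) (B j)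
          have e2 := min_le_right (B k) (B j)
          have e3 := min_le_left (D k) (D j)
          have e4 := min_le_right (D k) (D j)
          exact hdisj' k j hkj ((t + min (B k) (B j)) / 2) ((s + min (D k) (D j)) / 2)
            (by linarith) (by linarith) (by linarith) (by linarith)
            (by linarith) (by linarith) (by linarith) (by linarith)
      · have hjC' : C j < s := lt_of_le_of_ne hjC hCj
        -- the tile i = G s overlaps tile j
        have hiA : A (G s) < t := by
          have := hAB (G s)
          linarith [hBt]
        have hiC : C (G s) < s := by
          have := hCD (G s)
          linarith [hDs]
        have hij : G s ≠ j := by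
          intro h
          rw [h] at hBt
          linarith
        have hm : max (A (G s)) (A j) < t := max_lt hiA hjA'
        have hm' : max (C (G s)) (C j) < s := max_lt hiC hjC'
        have e1 := le_max_left (A (G s)) (A j)
        have e2 := le_max_right (A (G s)) (A j)
        have e3 := le_max_left (C (G s)) (C j)
        have e4 := le_max_right (C (G s)) (C j)
        exact hdisj' (G s) j hij ((max (A (G s)) (A j) + t) / 2)
          ((max (C (G s)) (C j) + s) / 2)
          (by linarith) (by linarith [hBt]) (by linarith) (by linarith [hDs])
          (by linarith) (by linarith) (by linarith) (by linarith)
  -- counting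
  have hXiFin : Xi.Finite := hXfin.subset Set.inter_subset_left
  have hYiFin : Yi.Finite := hYfin.subset Set.inter_subset_left
  have hFinj : Set.InjOn F Xi := by
    intro t1 h1 t2 h2 he
    have e1 := (hF t1 h1).1
    have e2 := (hF t2 h2).1
    rw [← e1, ← e2, he]
  have hGinj : Set.InjOn G Yi := by
    intro s1 h1 s2 h2 he
    have e1 := (hG s1 h1).1
    have e2 := (hG s2 h2).1
    rw [← e1, ← e2, he]
  have hni : i₀ ∉ F '' Xi := by
    rintro ⟨t, ht, hFt⟩
    have h1 := (hF t ht).1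
    rw [hFt, hBi₀] at h1
    exact absurd h1.symm (ne_of_lt ht.2.2)
  have hni' : i₀ ∉ G '' Yi := by
    rintro ⟨s, hs, hGs⟩
    have h1 := (hG s hs).1
    rw [hGs, hDi₀] at h1
    exact absurd h1.symm (ne_of_lt hs.2.2)
  have hdisjFG : Disjoint (F '' Xi) (G '' Yi) := by
    rw [Set.disjoint_left]
    rintro x ⟨t, ht, rfl⟩ ⟨s, hs, hGs⟩
    exact hFG t ht s hs hGs.symm
  have c1 : (F '' Xi).ncard = Xi.ncard := Set.ncard_image_of_injOn hFinj
  have c2 : (G '' Yi).ncard = Yi.ncard := Set.ncard_image_of_injOn hGinj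
  have cU : (F '' Xi ∪ G '' Yi).ncard = Xi.ncard + Yi.ncard := by
    rw [Set.ncard_union_eq hdisjFG (hXiFin.image F) (hYiFin.image G), c1, c2]
  have hnm : i₀ ∉ F '' Xi ∪ G '' Yi := by
    intro h
    rcases h with h | h
    · exact hni h
    · exact hni' h
  have cI : (insert i₀ (F '' Xi ∪ G '' Yi)).ncard = Xi.ncard + Yi.ncard + 1 := by
    rw [Set.ncard_insert_of_notMem hnm ((hXiFin.image F).union (hYiFin.image G)), cU]
  have hle : (insert i₀ (F '' Xi ∪ G '' Yi)).ncard ≤ n := by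
    have h := Set.ncard_le_ncard (Set.subset_univ (insert i₀ (F '' Xi ∪ G '' Yi)))
      Set.finite_univ
    simpa [Set.ncard_univ, Nat.card_eq_fintype_card] using h
  have main : Xi.ncard + Yi.ncard + 1 ≤ n := cI ▸ hle
  -- boundary values
  have hXsub : (Set.range A ∪ Set.range B) ⊆ insert a (insert b Xi) := by
    intro x hx
    have hax : a ≤ x ∧ x ≤ b := by
      rcases hx with ⟨i, rfl⟩ | ⟨i, rfl⟩
      · exact ⟨(hsub i).1, (hAB i).le.trans (hsub i).2.1⟩
      · exact ⟨(hsub i).1.trans (hAB i).le, (hsub i).2.1⟩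
    rcases eq_or_lt_of_le hax.1 with h | h
    · exact Set.mem_insert_iff.mpr (Or.inl h.symm)
    rcases eq_or_lt_of_le hax.2 with h' | h'
    · exact Set.mem_insert_iff.mpr (Or.inr (Set.mem_insert_iff.mpr (Or.inl h')))
    · exact Set.mem_insert_iff.mpr (Or.inr (Set.mem_insert_iff.mpr
        (Or.inr ⟨hx, h, h'⟩)))
  have hYsub : (Set.range C ∪ Set.range D) ⊆ insert c (insert d Yi) := by
    intro y hy
    have hay : c ≤ y ∧ y ≤ d := by
      rcases hy with ⟨i, rfl⟩ | ⟨i, rfl⟩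
      · exact ⟨(hsub i).2.2.1, (hCD i).le.trans (hsub i).2.2.2⟩
      · exact ⟨(hsub i).2.2.1.trans (hCD i).le, (hsub i).2.2.2⟩
    rcases eq_or_lt_of_le hay.1 with h | h
    · exact Set.mem_insert_iff.mpr (Or.inl h.symm)
    rcases eq_or_lt_of_le hay.2 with h' | h'
    · exact Set.mem_insert_iff.mpr (Or.inr (Set.mem_insert_iff.mpr (Or.inl h')))
    · exact Set.mem_insert_iff.mpr (Or.inr (Set.mem_insert_iff.mpr
        (Or.inr ⟨hy, h, h'⟩)))
  have hXcard : (Set.range A ∪ Set.range B).ncard ≤ Xi.ncard + 2 := by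
    have h1 := Set.ncard_le_ncard hXsub ((hXiFin.insert b).insert a)
    have h2 := Set.ncard_insert_le a (insert b Xi)
    have h3 := Set.ncard_insert_le b Xi
    omega
  have hYcard : (Set.range C ∪ Set.range D).ncard ≤ Yi.ncard + 2 := by
    have h1 := Set.ncard_le_ncard hYsub ((hYiFin.insert d).insert c)
    have h2 := Set.ncard_insert_le c (insert d Yi)
    have h3 := Set.ncard_insert_le d Yi
    omega
  omega
end

section
/- Suppose a d-dimensional axis-parallel hypercuboid C is tiled by n hypercuboids C₁,…,Cₙ. Then the intersection of the interior of C with the union of the boundaries of C₁,…,Cₙ can be covered by at most n−1 hyperplanes, each perpendicular to one of the coordinate axes. -/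
open Finset

namespace HTBaux

open scoped Classical

variable {ι : Type*} {d : ℕ}

/-- Combinatorial description of a tiling of a box by boxes. -/
structure IsT (L U : Fin d → ℝ) (lo hi : ι → Fin d → ℝ) (P : Finset ι) : Prop where
  hLU : ∀ j, L j < U j
  leL : ∀ i ∈ P, ∀ j, L j ≤ lo i j
  lth : ∀ i ∈ P, ∀ j, lo i j < hi i j
  leU : ∀ i ∈ P, ∀ j, hi i j ≤ U j
  sep : ∀ i ∈ P, ∀ i' ∈ P, i ≠ i' → ∃ j, hi i j ≤ lo i' j ∨ hi i' j ≤ lo i j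
  cover : ∀ x : Fin d → ℝ, (∀ j, L j ≤ x j ∧ x j ≤ U j) →
      ∃ i ∈ P, ∀ j, lo i j ≤ x j ∧ x j ≤ hi i j

/-- All endpoint values occurring in direction `j`. -/
noncomputable def Dset (L U : Fin d → ℝ) (lo hi : ι → Fin d → ℝ) (P : Finset ι) (j : Fin d) :
    Finset ℝ :=
  P.image (fun i => lo i j) ∪ P.image (fun i => hi i j) ∪ {L j, U j}

lemma mem_Dset {L U : Fin d → ℝ} {lo hi : ι → Fin d → ℝ} {P : Finset ι} {j : Fin d} {v : ℝ} :
    v ∈ Dset L U lo hi P j ↔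
      (∃ i ∈ P, lo i j = v) ∨ (∃ i ∈ P, hi i j = v) ∨ v = L j ∨ v = U j := by
  simp only [Dset, Finset.mem_union, Finset.mem_image, Finset.mem_insert,
    Finset.mem_singleton, or_assoc]

lemma Dset_le {L U : Fin d → ℝ} {lo hi : ι → Fin d → ℝ} {P : Finset ι}
    (T : IsT L U lo hi P) {j : Fin d} {v : ℝ} (hv : v ∈ Dset L U lo hi P j) :
    L j ≤ v ∧ v ≤ U j := by
  rcases mem_Dset.mp hv with ⟨i, hiP, rfl⟩ | ⟨i, hiP, rfl⟩ | rfl | rfl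
  · exact ⟨T.leL i hiP j, le_trans (le_of_lt (T.lth i hiP j)) (T.leU i hiP j)⟩
  · exact ⟨le_trans (T.leL i hiP j) (le_of_lt (T.lth i hiP j)), T.leU i hiP j⟩
  · exact ⟨le_refl _, le_of_lt (T.hLU j)⟩
  · exact ⟨le_of_lt (T.hLU j), le_refl _⟩

noncomputable def meas (L U : Fin d → ℝ) (lo hi : ι → Fin d → ℝ) (P : Finset ι) : ℕ :=
  ∑ j, (Dset L U lo hi P j).card

/-- Walls: internal hyperplanes carrying a facet, all of whose "witnesses" lie in `Q`. -/
noncomputable def wallSet (L U : Fin d → ℝ) (lo hi : ι → Fin d → ℝ) (P Q : Finset ι) :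
    Finset (Fin d × ℝ) :=
  ((Finset.univ : Finset (Fin d)).biUnion fun j =>
      ((P.image fun i => lo i j) ∪ (P.image fun i => hi i j)).image fun v => (j, v)).filter
    fun w => (L w.1 < w.2 ∧ w.2 < U w.1) ∧
      ∀ i ∈ P, (lo i w.1 = w.2 ∨ hi i w.1 = w.2) → i ∈ Q

lemma mem_wallSet {L U : Fin d → ℝ} {lo hi : ι → Fin d → ℝ} {P Q : Finset ι}
    {j : Fin d} {v : ℝ} :
    (j, v) ∈ wallSet L U lo hi P Q ↔
      (∃ i ∈ P, lo i j = v ∨ hi i j = v) ∧ (L j < v ∧ v < U j) ∧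
        ∀ i ∈ P, (lo i j = v ∨ hi i j = v) → i ∈ Q := by
  constructor
  · rintro h
    simp only [wallSet, Finset.mem_filter] at h
    obtain ⟨hmem, hint, hQ⟩ := h
    refine ⟨?_, hint, hQ⟩
    rw [Finset.mem_biUnion] at hmem
    obtain ⟨j', -, hj'⟩ := hmem
    rw [Finset.mem_image] at hj'
    obtain ⟨v', hv', heq⟩ := hj'
    obtain ⟨rfl, rfl⟩ : j' = j ∧ v' = v := by
      constructor <;> [exact congrArg Prod.fst heq; exact congrArg Prod.snd heq]
    rw [Finset.mem_union, Finset.mem_image, Finset.mem_image] at hv'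
    rcases hv' with ⟨i, hiP, hv⟩ | ⟨i, hiP, hv⟩
    · exact ⟨i, hiP, Or.inl hv⟩
    · exact ⟨i, hiP, Or.inr hv⟩
  · rintro ⟨⟨i, hiP, hw⟩, hint, hQ⟩
    simp only [wallSet, Finset.mem_filter]
    refine ⟨?_, hint, hQ⟩
    rw [Finset.mem_biUnion]
    refine ⟨j, Finset.mem_univ _, ?_⟩
    rw [Finset.mem_image]
    refine ⟨v, ?_, rfl⟩
    rw [Finset.mem_union, Finset.mem_image, Finset.mem_image]
    rcases hw with hw | hw
    · exact Or.inl ⟨i, hiP, hw⟩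
    · exact Or.inr ⟨i, hiP, hw⟩

lemma nonempty_of_mem_wallSet {L U : Fin d → ℝ} {lo hi : ι → Fin d → ℝ} {P Q : Finset ι}
    {w : Fin d × ℝ} (h : w ∈ wallSet L U lo hi P Q) : Q.Nonempty := by
  obtain ⟨j, v⟩ := w
  obtain ⟨⟨i, hiP, hw⟩, -, hQ⟩ := mem_wallSet.mp h
  exact ⟨i, hQ i hiP hw⟩

section LemA

variable {L U : Fin d → ℝ} {lo hi : ι → Fin d → ℝ} {P : Finset ι}

lemma exists_hi_witness (T : IsT L U lo hi P) {j : Fin d} {c : ℝ}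
    (h1 : L j < c) (h2 : c < U j) (hw : ∃ i ∈ P, lo i j = c ∨ hi i j = c) :
    ∃ t ∈ P, hi t j = c := by
  obtain ⟨i, hiP, hcase⟩ := hw
  have hloi : lo i j ≤ c := by
    rcases hcase with h | h
    · exact le_of_eq h
    · exact le_of_lt (h ▸ T.lth i hiP j)
  have hhii : c ≤ hi i j := by
    rcases hcase with h | h
    · exact le_of_lt (h ▸ T.lth i hiP j)
    · exact le_of_eq h.symm
  set A : Finset ℝ := (Dset L U lo hi P j).filter (fun v => v < c) with hA
  have hLA : L j ∈ A := by
    rw [hA, Finset.mem_filter]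
    exact ⟨mem_Dset.mpr (Or.inr (Or.inr (Or.inl rfl))), h1⟩
  have hAne : A.Nonempty := ⟨L j, hLA⟩
  set c' := A.max' hAne with hc'
  have hc'c : c' < c := (Finset.mem_filter.mp (A.max'_mem hAne)).2
  have hc'L : L j ≤ c' := A.le_max' _ hLA
  set y : Fin d → ℝ := fun k => if k = j then (c' + c) / 2 else (lo i k + hi i k) / 2 with hy
  have hyj : y j = (c' + c) / 2 := by simp [hy]
  have hybox : ∀ k, L k ≤ y k ∧ y k ≤ U k := by
    intro k
    by_cases hk : k = j
    · subst hk
      rw [hyj]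
      constructor
      · nlinarith
      · nlinarith
    · have h3 := T.leL i hiP k
      have h4 := T.lth i hiP k
      have h5 := T.leU i hiP k
      simp only [hy, if_neg hk]
      constructor <;> nlinarith
  obtain ⟨t, htP, hty⟩ := T.cover y hybox
  have hty_j := hty j
  rw [hyj] at hty_j
  have hhitD : hi t j ∈ Dset L U lo hi P j := mem_Dset.mpr (Or.inr (Or.inl ⟨t, htP, rfl⟩))
  have hhitc : c ≤ hi t j := by
    by_contra hcon
    push_neg at hcon
    have : hi t j ∈ A := Finset.mem_filter.mpr ⟨hhitD, hcon⟩
    have := A.le_max' _ this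
    nlinarith [hty_j.2]
  refine ⟨t, htP, ?_⟩
  by_contra hne
  have hgt : c < hi t j := lt_of_le_of_ne hhitc (Ne.symm hne)
  have htne : t ≠ i := by
    rcases hcase with h | h
    · intro he; subst he; nlinarith [hty_j.1]
    · intro he; subst he; exact absurd h (by nlinarith)
  obtain ⟨j'', hsep⟩ := T.sep t htP i hiP htne
  by_cases hj : j'' = j
  · subst hj
    rcases hsep with h | h
    · nlinarith
    · nlinarith [hty_j.1]
  · have hty_k := hty j''
    simp only [hy, if_neg hj] at hty_k
    have h4 := T.lth i hiP j''
    rcases hsep with h | h <;> nlinarith [hty_k.1, hty_k.2]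

lemma exists_lo_witness (T : IsT L U lo hi P) {j : Fin d} {c : ℝ}
    (h1 : L j < c) (h2 : c < U j) (hw : ∃ i ∈ P, lo i j = c ∨ hi i j = c) :
    ∃ t ∈ P, lo t j = c := by
  obtain ⟨i, hiP, hcase⟩ := hw
  have hloi : lo i j ≤ c := by
    rcases hcase with h | h
    · exact le_of_eq h
    · exact le_of_lt (h ▸ T.lth i hiP j)
  have hhii : c ≤ hi i j := by
    rcases hcase with h | h
    · exact le_of_lt (h ▸ T.lth i hiP j)
    · exact le_of_eq h.symm
  set A : Finset ℝ := (Dset L U lo hi P j).filter (fun v => c < v) with hA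
  have hLA : U j ∈ A := by
    rw [hA, Finset.mem_filter]
    exact ⟨mem_Dset.mpr (Or.inr (Or.inr (Or.inr rfl))), h2⟩
  have hAne : A.Nonempty := ⟨U j, hLA⟩
  set c' := A.min' hAne with hc'
  have hc'c : c < c' := (Finset.mem_filter.mp (A.min'_mem hAne)).2
  have hc'L : c' ≤ U j := A.min'_le _ hLA
  set y : Fin d → ℝ := fun k => if k = j then (c + c') / 2 else (lo i k + hi i k) / 2 with hy
  have hyj : y j = (c + c') / 2 := by simp [hy]
  have hybox : ∀ k, L k ≤ y k ∧ y k ≤ U k := by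
    intro k
    by_cases hk : k = j
    · subst hk
      rw [hyj]
      constructor
      · nlinarith
      · nlinarith
    · have h3 := T.leL i hiP k
      have h4 := T.lth i hiP k
      have h5 := T.leU i hiP k
      simp only [hy, if_neg hk]
      constructor <;> nlinarith
  obtain ⟨t, htP, hty⟩ := T.cover y hybox
  have hty_j := hty j
  rw [hyj] at hty_j
  have hlotD : lo t j ∈ Dset L U lo hi P j := mem_Dset.mpr (Or.inl ⟨t, htP, rfl⟩)
  have hlotc : lo t j ≤ c := by
    by_contra hcon
    push_neg at hcon
    have : lo t j ∈ A := Finset.mem_filter.mpr ⟨hlotD, hcon⟩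
    have := A.min'_le _ this
    nlinarith [hty_j.1]
  refine ⟨t, htP, ?_⟩
  by_contra hne
  have hgt : lo t j < c := lt_of_le_of_ne hlotc hne
  have htne : t ≠ i := by
    rcases hcase with h | h
    · intro he; subst he; nlinarith
    · intro he; subst he; nlinarith [hty_j.2]
  obtain ⟨j'', hsep⟩ := T.sep t htP i hiP htne
  by_cases hj : j'' = j
  · subst hj
    rcases hsep with h | h
    · nlinarith [hty_j.2]
    · nlinarith
  · have hty_k := hty j''
    simp only [hy, if_neg hj] at hty_k
    have h4 := T.lth i hiP j''
    rcases hsep with h | h <;> nlinarith [hty_k.1, hty_k.2]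

end LemA

section Peel

variable {L U : Fin d → ℝ} {lo hi : ι → Fin d → ℝ} {P : Finset ι} {j : Fin d} {c : ℝ}

/-- truncated upper bounds for the bottom part -/
noncomputable def hib (hi : ι → Fin d → ℝ) (j : Fin d) (c : ℝ) : ι → Fin d → ℝ :=
  fun i k => if k = j then min (hi i k) c else hi i k

/-- stretched lower bounds for the top part -/
noncomputable def lot (L : Fin d → ℝ) (lo : ι → Fin d → ℝ) (j : Fin d) : ι → Fin d → ℝ :=
  fun i k => if k = j then L j else lo i k

noncomputable def Pbot (lo : ι → Fin d → ℝ) (P : Finset ι) (j : Fin d) (c : ℝ) : Finset ι :=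
  P.filter fun i => lo i j < c

noncomputable def Ptop (hi : ι → Fin d → ℝ) (P : Finset ι) (j : Fin d) (c : ℝ) : Finset ι :=
  P.filter fun i => c < hi i j


lemma mem_Pbot {i : ι} : i ∈ Pbot lo P j c ↔ i ∈ P ∧ lo i j < c := by
  unfold Pbot; rw [Finset.mem_filter]

lemma mem_Ptop {i : ι} : i ∈ Ptop hi P j c ↔ i ∈ P ∧ c < hi i j := by
  unfold Ptop; rw [Finset.mem_filter]

lemma isT_bot (T : IsT L U lo hi P) (hcL : L j < c) (hcU : c < U j) :
    IsT L (Function.update U j c) lo (hib hi j c) (Pbot lo P j c) := by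
  constructor
  · intro k
    by_cases hk : k = j
    · subst hk; rw [Function.update_self]; exact hcL
    · rw [Function.update_of_ne hk]; exact T.hLU k
  · intro i hiP k
    exact T.leL i (mem_Pbot.mp hiP).1 k
  · intro i hiP k
    obtain ⟨hiP2, hlt⟩ := mem_Pbot.mp hiP
    by_cases hk : k = j
    · subst hk; simp only [hib, if_pos rfl]; exact lt_min (T.lth i hiP2 k) hlt
    · simp only [hib, if_neg hk]; exact T.lth i hiP2 k
  · intro i hiP k
    obtain ⟨hiP2, hlt⟩ := mem_Pbot.mp hiP
    by_cases hk : k = j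
    · subst hk; simp only [hib, if_pos rfl, Function.update_self]; exact min_le_right _ _
    · simp only [hib, if_neg hk]; rw [Function.update_of_ne hk]; exact T.leU i hiP2 k
  · intro i hiP i' hi'P hne
    obtain ⟨hiP, -⟩ := mem_Pbot.mp hiP
    obtain ⟨hi'P, -⟩ := mem_Pbot.mp hi'P
    obtain ⟨j'', hsep⟩ := T.sep i hiP i' hi'P hne
    have hle : ∀ a, hib hi j c a j'' ≤ hi a j'' := by
      intro a
      simp only [hib]
      by_cases hk : j'' = j
      · rw [if_pos hk]; exact min_le_left _ _
      · rw [if_neg hk]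
    refine ⟨j'', ?_⟩
    rcases hsep with h | h
    · exact Or.inl (le_trans (hle i) h)
    · exact Or.inr (le_trans (hle i') h)
  · intro x hx
    have hxU : ∀ k, k ≠ j → x k ≤ U k := by
      intro k hk
      have := (hx k).2
      rwa [Function.update_of_ne hk] at this
    have hxc : x j ≤ c := by
      have := (hx j).2
      rwa [Function.update_self] at this
    by_cases hxj : x j < c
    · have hxbox : ∀ k, L k ≤ x k ∧ x k ≤ U k := by
        intro k
        by_cases hk : k = j
        · subst hk; exact ⟨(hx k).1, le_of_lt (lt_trans hxj hcU)⟩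
        · exact ⟨(hx k).1, hxU k hk⟩
      obtain ⟨t, htP, hty⟩ := T.cover x hxbox
      refine ⟨t, mem_Pbot.mpr ⟨htP, lt_of_le_of_lt (hty j).1 hxj⟩, ?_⟩
      intro k
      by_cases hk : k = j
      · subst hk
        simp only [hib, if_pos rfl]
        exact ⟨(hty k).1, le_min (hty k).2 (le_of_lt hxj)⟩
      · simp only [hib, if_neg hk]
        exact hty k
    · have hxjc : x j = c := le_antisymm hxc (not_lt.mp hxj)
      set A : Finset ℝ := (Dset L U lo hi P j).filter (fun v => v < c) with hA
      have hLA : L j ∈ A := by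
        rw [hA, Finset.mem_filter]
        exact ⟨mem_Dset.mpr (Or.inr (Or.inr (Or.inl rfl))), hcL⟩
      have hAne : A.Nonempty := ⟨L j, hLA⟩
      set c' := A.max' hAne with hc'
      have hc'c : c' < c := (Finset.mem_filter.mp (A.max'_mem hAne)).2
      have hc'L : L j ≤ c' := A.le_max' _ hLA
      set y := Function.update x j ((c' + c) / 2) with hy
      have hyj : y j = (c' + c) / 2 := by rw [hy, Function.update_self]
      have hybox : ∀ k, L k ≤ y k ∧ y k ≤ U k := by
        intro k
        by_cases hk : k = j
        · subst hk
          rw [hyj]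
          constructor
          · nlinarith
          · nlinarith
        · rw [hy, Function.update_of_ne hk]
          exact ⟨(hx k).1, hxU k hk⟩
      obtain ⟨t, htP, hty⟩ := T.cover y hybox
      have hty_j := hty j
      rw [hyj] at hty_j
      have htb : lo t j < c := by nlinarith [hty_j.1]
      have hhitc : c ≤ hi t j := by
        by_contra hcon
        push_neg at hcon
        have hD : hi t j ∈ Dset L U lo hi P j :=
          mem_Dset.mpr (Or.inr (Or.inl ⟨t, htP, rfl⟩))
        have : hi t j ∈ A := Finset.mem_filter.mpr ⟨hD, hcon⟩
        have := A.le_max' _ this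
        nlinarith [hty_j.2]
      refine ⟨t, mem_Pbot.mpr ⟨htP, htb⟩, ?_⟩
      intro k
      by_cases hk : k = j
      · subst hk
        simp only [hib, if_pos rfl]
        rw [hxjc]
        exact ⟨le_of_lt htb, le_min hhitc (le_refl c)⟩
      · simp only [hib, if_neg hk]
        have := hty k
        rwa [hy, Function.update_of_ne hk] at this

lemma top_hi_eq (T : IsT L U lo hi P)
    (hmax : ∀ v ∈ Dset L U lo hi P j, v < U j → v ≤ c) :
    ∀ i ∈ Ptop hi P j c, hi i j = U j := by
  intro i hiPt
  obtain ⟨hiP, hlt⟩ := mem_Ptop.mp hiPt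
  have hD : hi i j ∈ Dset L U lo hi P j := mem_Dset.mpr (Or.inr (Or.inl ⟨i, hiP, rfl⟩))
  have hle : hi i j ≤ U j := T.leU i hiP j
  rcases lt_or_eq_of_le hle with h | h
  · exact absurd (hmax _ hD h) (not_le.mpr hlt)
  · exact h

lemma lo_lt_U (T : IsT L U lo hi P) {i : ι} (hiP : i ∈ P) (k : Fin d) : lo i k < U k :=
  lt_of_lt_of_le (T.lth i hiP k) (T.leU i hiP k)

lemma isT_top (T : IsT L U lo hi P) (hcL : L j < c) (hcU : c < U j)
    (hmax : ∀ v ∈ Dset L U lo hi P j, v < U j → v ≤ c) :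
    IsT L U (lot L lo j) hi (Ptop hi P j c) := by
  have hUt := top_hi_eq (j := j) (c := c) T hmax
  constructor
  · exact T.hLU
  · intro i hiPt k
    obtain ⟨hiP, -⟩ := mem_Ptop.mp hiPt
    by_cases hk : k = j
    · subst hk; simp [lot]
    · simp only [lot, if_neg hk]; exact T.leL i hiP k
  · intro i hiPt k
    have hiPt' := hiPt
    obtain ⟨hiP, -⟩ := mem_Ptop.mp hiPt
    by_cases hk : k = j
    · subst hk
      simp only [lot, if_pos]
      rw [hUt i hiPt']
      exact T.hLU k
    · simp only [lot, if_neg hk]; exact T.lth i hiP k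
  · intro i hiPt k
    exact T.leU i (mem_Ptop.mp hiPt).1 k
  · intro i hiPt i' hi'Pt hne
    obtain ⟨hiP, hic⟩ := mem_Ptop.mp hiPt
    obtain ⟨hi'P, hi'c⟩ := mem_Ptop.mp hi'Pt
    obtain ⟨j'', hsep⟩ := T.sep i hiP i' hi'P hne
    have hj : j'' ≠ j := by
      intro he
      subst he
      have h1 : lo i j'' ≤ c := hmax _ (mem_Dset.mpr (Or.inl ⟨i, hiP, rfl⟩)) (lo_lt_U T hiP j'')
      have h2 : lo i' j'' ≤ c := hmax _ (mem_Dset.mpr (Or.inl ⟨i', hi'P, rfl⟩)) (lo_lt_U T hi'P j'')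
      rcases hsep with h | h
      · nlinarith
      · nlinarith
    refine ⟨j'', ?_⟩
    simp only [lot, if_neg hj]
    exact hsep
  · intro x hx
    set y := Function.update x j ((c + U j) / 2) with hy
    have hyj : y j = (c + U j) / 2 := by rw [hy, Function.update_self]
    have hybox : ∀ k, L k ≤ y k ∧ y k ≤ U k := by
      intro k
      by_cases hk : k = j
      · subst hk
        rw [hyj]
        constructor
        · nlinarith
        · nlinarith
      · rw [hy, Function.update_of_ne hk]
        exact hx k
    obtain ⟨t, htP, hty⟩ := T.cover y hybox
    have hty_j := hty j
    rw [hyj] at hty_j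
    have htt : t ∈ Ptop hi P j c := mem_Ptop.mpr ⟨htP, by nlinarith [hty_j.2]⟩
    refine ⟨t, htt, ?_⟩
    intro k
    by_cases hk : k = j
    · subst hk
      simp only [lot, if_pos]
      rw [hUt t htt]
      exact hx k
    · simp only [lot, if_neg hk]
      have := hty k
      rwa [hy, Function.update_of_ne hk] at this

lemma wall_cases (T : IsT L U lo hi P) (hcU : c < U j)
    (hmax : ∀ v ∈ Dset L U lo hi P j, v < U j → v ≤ c)
    {Q : Finset ι} (_hQP : Q ⊆ P) :
    ∀ w ∈ wallSet L U lo hi P Q, w = (j, c) ∨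
      w ∈ wallSet L (Function.update U j c) lo (hib hi j c) (Pbot lo P j c)
          (Q.filter fun i => lo i j < c) ∨
      w ∈ wallSet L U (lot L lo j) hi (Ptop hi P j c) (Q.filter fun i => ¬ lo i j < c) := by
  rintro ⟨j', v⟩ hw
  obtain ⟨⟨i₁, hi₁P, hwit⟩, ⟨hv1, hv2⟩, hQc⟩ := mem_wallSet.mp hw
  by_cases hj : j' = j
  · subst hj
    have hvD : v ∈ Dset L U lo hi P j' := by
      rcases hwit with h | h
      · exact mem_Dset.mpr (Or.inl ⟨i₁, hi₁P, h⟩)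
      · exact mem_Dset.mpr (Or.inr (Or.inl ⟨i₁, hi₁P, h⟩))
    rcases lt_trichotomy v c with hvc | hvc | hvc
    · right; left
      refine mem_wallSet.mpr ⟨?_, ⟨hv1, ?_⟩, ?_⟩
      · rcases hwit with h | h
        · exact ⟨i₁, mem_Pbot.mpr ⟨hi₁P, h ▸ hvc⟩, Or.inl h⟩
        · refine ⟨i₁, mem_Pbot.mpr ⟨hi₁P, lt_trans (h ▸ T.lth i₁ hi₁P j') hvc⟩, Or.inr ?_⟩
          simp only [hib, eq_self_iff_true, if_true]
          rw [h, min_eq_left (le_of_lt hvc)]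
      · rw [Function.update_self]; exact hvc
      · intro i hiPb hw'
        obtain ⟨hiP, hilt⟩ := mem_Pbot.mp hiPb
        have hPwit : lo i j' = v ∨ hi i j' = v := by
          rcases hw' with h | h
          · exact Or.inl h
          · simp only [hib, eq_self_iff_true, if_true] at h
            rcases le_or_gt (hi i j') c with hle | hgt
            · rw [min_eq_left hle] at h; exact Or.inr h
            · rw [min_eq_right (le_of_lt hgt)] at h; exact absurd (h ▸ hvc) (lt_irrefl c)
        exact Finset.mem_filter.mpr ⟨hQc i hiP hPwit, hilt⟩
    · left; rw [hvc]
    · exact absurd (hmax v hvD hv2) (not_le.mpr hvc)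
  · by_cases hb : ∃ i ∈ P, (lo i j' = v ∨ hi i j' = v) ∧ lo i j < c
    · right; left
      obtain ⟨i₂, hi₂P, hwit₂, hlt₂⟩ := hb
      refine mem_wallSet.mpr ⟨?_, ⟨hv1, ?_⟩, ?_⟩
      · refine ⟨i₂, mem_Pbot.mpr ⟨hi₂P, hlt₂⟩, ?_⟩
        rcases hwit₂ with h | h
        · exact Or.inl h
        · refine Or.inr ?_
          simp only [hib, if_neg hj]
          exact h
      · rw [Function.update_of_ne hj]; exact hv2
      · intro i hiPb hw'
        obtain ⟨hiP, hilt⟩ := mem_Pbot.mp hiPb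
        have hPwit : lo i j' = v ∨ hi i j' = v := by
          rcases hw' with h | h
          · exact Or.inl h
          · simp only [hib, if_neg hj] at h; exact Or.inr h
        exact Finset.mem_filter.mpr ⟨hQc i hiP hPwit, hilt⟩
    · right; right
      push_neg at hb
      refine mem_wallSet.mpr ⟨?_, ⟨hv1, hv2⟩, ?_⟩
      · have hc1 : c ≤ lo i₁ j := hb i₁ hi₁P hwit
        refine ⟨i₁, mem_Ptop.mpr ⟨hi₁P, lt_of_le_of_lt hc1 (T.lth i₁ hi₁P j)⟩, ?_⟩
        rcases hwit with h | h
        · refine Or.inl ?_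
          simp only [lot, if_neg hj]
          exact h
        · exact Or.inr h
      · intro i hiPt hw'
        obtain ⟨hiP, -⟩ := mem_Ptop.mp hiPt
        have hPwit : lo i j' = v ∨ hi i j' = v := by
          rcases hw' with h | h
          · simp only [lot, if_neg hj] at h; exact Or.inl h
          · exact Or.inr h
        exact Finset.mem_filter.mpr ⟨hQc i hiP hPwit, not_lt.mpr (hb i hiP hPwit)⟩

lemma wall_top_nonempty (T : IsT L U lo hi P) {Q : Finset ι}
    (hjc : (j, c) ∈ wallSet L U lo hi P Q) :
    (Q.filter fun i => lo i j < c).Nonempty ∧ (Q.filter fun i => ¬ lo i j < c).Nonempty := by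
  obtain ⟨hwit, ⟨h1, h2⟩, hQc⟩ := mem_wallSet.mp hjc
  obtain ⟨t, htP, ht⟩ := exists_hi_witness T h1 h2 hwit
  obtain ⟨t', ht'P, ht'⟩ := exists_lo_witness T h1 h2 hwit
  constructor
  · refine ⟨t, Finset.mem_filter.mpr ⟨hQc t htP (Or.inr ht), ht ▸ T.lth t htP j⟩⟩
  · refine ⟨t', Finset.mem_filter.mpr ⟨hQc t' ht'P (Or.inl ht'), ?_⟩⟩
    rw [ht']
    exact lt_irrefl c

lemma meas_bot_lt (T : IsT L U lo hi P) (hcU : c < U j)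
    (hcD : c ∈ Dset L U lo hi P j) :
    meas L (Function.update U j c) lo (hib hi j c) (Pbot lo P j c) < meas L U lo hi P := by
  unfold meas
  refine Finset.sum_lt_sum ?_ ⟨j, Finset.mem_univ j, ?_⟩
  · intro k _
    apply Finset.card_le_card
    intro v hv
    rcases mem_Dset.mp hv with ⟨i, hiPb, h⟩ | ⟨i, hiPb, h⟩ | h | h
    · exact mem_Dset.mpr (Or.inl ⟨i, (mem_Pbot.mp hiPb).1, h⟩)
    · have hiP := (mem_Pbot.mp hiPb).1
      by_cases hk : k = j
      · subst hk
        simp only [hib, eq_self_iff_true, if_true] at h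
        rcases le_total (hi i k) c with hle | hge
        · rw [min_eq_left hle] at h
          exact mem_Dset.mpr (Or.inr (Or.inl ⟨i, hiP, h⟩))
        · rw [min_eq_right hge] at h
          exact h ▸ hcD
      · simp only [hib, if_neg hk] at h
        exact mem_Dset.mpr (Or.inr (Or.inl ⟨i, hiP, h⟩))
    · exact mem_Dset.mpr (Or.inr (Or.inr (Or.inl h)))
    · by_cases hk : k = j
      · subst hk
        rw [Function.update_self] at h
        exact h ▸ hcD
      · rw [Function.update_of_ne hk] at h
        exact mem_Dset.mpr (Or.inr (Or.inr (Or.inr h)))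
  · have hsub : Dset L (Function.update U j c) lo (hib hi j c) (Pbot lo P j c) j ⊆
        (Dset L U lo hi P j).erase (U j) := by
      intro v hv
      have hvlt : v < U j := by
        rcases mem_Dset.mp hv with ⟨i, hiPb, h⟩ | ⟨i, hiPb, h⟩ | h | h
        · obtain ⟨hiP, hilt⟩ := mem_Pbot.mp hiPb
          exact lt_trans (h ▸ hilt) hcU
        · simp only [hib, eq_self_iff_true, if_true] at h
          exact lt_of_le_of_lt (h ▸ min_le_right (hi i j) c) hcU
        · exact h ▸ T.hLU j
        · rw [Function.update_self] at h
          exact h ▸ hcU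
      refine Finset.mem_erase.mpr ⟨ne_of_lt hvlt, ?_⟩
      rcases mem_Dset.mp hv with ⟨i, hiPb, h⟩ | ⟨i, hiPb, h⟩ | h | h
      · exact mem_Dset.mpr (Or.inl ⟨i, (mem_Pbot.mp hiPb).1, h⟩)
      · have hiP := (mem_Pbot.mp hiPb).1
        simp only [hib, eq_self_iff_true, if_true] at h
        rcases le_total (hi i j) c with hle | hge
        · rw [min_eq_left hle] at h
          exact mem_Dset.mpr (Or.inr (Or.inl ⟨i, hiP, h⟩))
        · rw [min_eq_right hge] at h
          exact h ▸ hcD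
      · exact mem_Dset.mpr (Or.inr (Or.inr (Or.inl h)))
      · rw [Function.update_self] at h
        exact h ▸ hcD
    have hUD : U j ∈ Dset L U lo hi P j := mem_Dset.mpr (Or.inr (Or.inr (Or.inr rfl)))
    calc (Dset L (Function.update U j c) lo (hib hi j c) (Pbot lo P j c) j).card
        ≤ ((Dset L U lo hi P j).erase (U j)).card := Finset.card_le_card hsub
      _ < (Dset L U lo hi P j).card := Finset.card_erase_lt_of_mem hUD

lemma meas_top_lt (T : IsT L U lo hi P) (hcL : L j < c) (hcU : c < U j)
    (hcD : c ∈ Dset L U lo hi P j)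
    (hmax : ∀ v ∈ Dset L U lo hi P j, v < U j → v ≤ c) :
    meas L U (lot L lo j) hi (Ptop hi P j c) < meas L U lo hi P := by
  have hUt := top_hi_eq (j := j) (c := c) T hmax
  unfold meas
  refine Finset.sum_lt_sum ?_ ⟨j, Finset.mem_univ j, ?_⟩
  · intro k _
    apply Finset.card_le_card
    intro v hv
    rcases mem_Dset.mp hv with ⟨i, hiPt, h⟩ | ⟨i, hiPt, h⟩ | h | h
    · by_cases hk : k = j
      · subst hk
        simp only [lot, eq_self_iff_true, if_true] at h
        exact mem_Dset.mpr (Or.inr (Or.inr (Or.inl h.symm)))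
      · simp only [lot, if_neg hk] at h
        exact mem_Dset.mpr (Or.inl ⟨i, (mem_Ptop.mp hiPt).1, h⟩)
    · exact mem_Dset.mpr (Or.inr (Or.inl ⟨i, (mem_Ptop.mp hiPt).1, h⟩))
    · exact mem_Dset.mpr (Or.inr (Or.inr (Or.inl h)))
    · exact mem_Dset.mpr (Or.inr (Or.inr (Or.inr h)))
  · have hsub : Dset L U (lot L lo j) hi (Ptop hi P j c) j ⊆ {L j, U j} := by
      intro v hv
      rcases mem_Dset.mp hv with ⟨i, hiPt, h⟩ | ⟨i, hiPt, h⟩ | h | h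
      · simp only [lot, eq_self_iff_true, if_true] at h
        simp [h.symm]
      · rw [hUt i hiPt] at h
        simp [h.symm]
      · simp [h]
      · simp [h]
    have h3 : ({L j, c, U j} : Finset ℝ) ⊆ Dset L U lo hi P j := by
      intro v hv
      rcases Finset.mem_insert.mp hv with h | hv
      · exact h ▸ mem_Dset.mpr (Or.inr (Or.inr (Or.inl rfl)))
      rcases Finset.mem_insert.mp hv with h | hv
      · exact h ▸ hcD
      · rw [Finset.mem_singleton] at hv
        exact hv ▸ mem_Dset.mpr (Or.inr (Or.inr (Or.inr rfl)))
    have hc3 : ({L j, c, U j} : Finset ℝ).card = 3 := by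
      rw [Finset.card_eq_three]
      exact ⟨L j, c, U j, ne_of_lt hcL, ne_of_lt (T.hLU j), ne_of_lt hcU, rfl⟩
    calc (Dset L U (lot L lo j) hi (Ptop hi P j c) j).card
        ≤ ({L j, U j} : Finset ℝ).card := Finset.card_le_card hsub
      _ ≤ 2 := Finset.card_insert_le _ _ |>.trans (by simp)
      _ < 3 := by norm_num
      _ = ({L j, c, U j} : Finset ℝ).card := hc3.symm
      _ ≤ (Dset L U lo hi P j).card := Finset.card_le_card h3

end Peel

lemma wallSet_deg {L U : Fin d → ℝ} {lo hi : ι → Fin d → ℝ} {P Q : Finset ι}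
    (hdeg : ∀ i ∈ P, ∀ k, lo i k = L k ∧ hi i k = U k) :
    wallSet L U lo hi P Q = ∅ := by
  rw [Finset.eq_empty_iff_forall_notMem]
  rintro ⟨j', v⟩ hw
  obtain ⟨⟨i, hiP, hwit⟩, ⟨hv1, hv2⟩, -⟩ := mem_wallSet.mp hw
  rcases hwit with h | h
  · rw [(hdeg i hiP j').1] at h
    exact absurd (h ▸ hv1) (lt_irrefl _)
  · rw [(hdeg i hiP j').2] at h
    exact absurd (h ▸ hv2) (lt_irrefl _)

lemma key : ∀ (N : ℕ) (L U : Fin d → ℝ) (lo hi : ι → Fin d → ℝ) (P Q : Finset ι),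
    meas L U lo hi P ≤ N → IsT L U lo hi P → Q ⊆ P → Q.Nonempty →
    (wallSet L U lo hi P Q).card + 1 ≤ Q.card := by
  intro N
  induction N with
  | zero =>
    intro L U lo hi P Q hm T hQP hQne
    by_cases hdeg : ∀ i ∈ P, ∀ k, lo i k = L k ∧ hi i k = U k
    · rw [wallSet_deg hdeg]
      simpa using Finset.card_pos.mpr hQne
    · exfalso
      push_neg at hdeg
      obtain ⟨i0, hi0P, k, -⟩ := hdeg
      have h1 : (Dset L U lo hi P k).Nonempty :=
        ⟨L k, mem_Dset.mpr (Or.inr (Or.inr (Or.inl rfl)))⟩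
      have h2 : 1 ≤ (Dset L U lo hi P k).card := Finset.card_pos.mpr h1
      have h3 : (Dset L U lo hi P k).card ≤ meas L U lo hi P :=
        Finset.single_le_sum (f := fun j => (Dset L U lo hi P j).card)
          (fun _ _ => Nat.zero_le _) (Finset.mem_univ k)
      omega
  | succ N ih =>
    intro L U lo hi P Q hm T hQP hQne
    by_cases hdeg : ∀ i ∈ P, ∀ k, lo i k = L k ∧ hi i k = U k
    · rw [wallSet_deg hdeg]
      simpa using Finset.card_pos.mpr hQne
    · push_neg at hdeg
      obtain ⟨i0, hi0P, j, hne0⟩ := hdeg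
      have hne0' : lo i0 j ≠ L j ∨ hi i0 j ≠ U j := by
        by_cases h : lo i0 j = L j
        · exact Or.inr (hne0 h)
        · exact Or.inl h
      have hv : ∃ v ∈ Dset L U lo hi P j, L j < v ∧ v < U j := by
        rcases hne0' with h | h
        · exact ⟨lo i0 j, mem_Dset.mpr (Or.inl ⟨i0, hi0P, rfl⟩),
            lt_of_le_of_ne (T.leL i0 hi0P j) (Ne.symm h), lo_lt_U T hi0P j⟩
        · exact ⟨hi i0 j, mem_Dset.mpr (Or.inr (Or.inl ⟨i0, hi0P, rfl⟩)),
            lt_of_le_of_lt (T.leL i0 hi0P j) (T.lth i0 hi0P j),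
            lt_of_le_of_ne (T.leU i0 hi0P j) h⟩
      obtain ⟨v0, hv0D, hv0L, hv0U⟩ := hv
      set E : Finset ℝ := (Dset L U lo hi P j).filter (fun u => u < U j) with hE
      have hv0E : v0 ∈ E := Finset.mem_filter.mpr ⟨hv0D, hv0U⟩
      have hEne : E.Nonempty := ⟨v0, hv0E⟩
      set c := E.max' hEne with hc
      have hcD : c ∈ Dset L U lo hi P j := (Finset.mem_filter.mp (E.max'_mem hEne)).1
      have hcU : c < U j := (Finset.mem_filter.mp (E.max'_mem hEne)).2
      have hcL : L j < c := lt_of_lt_of_le hv0L (E.le_max' _ hv0E)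
      have hmax : ∀ u ∈ Dset L U lo hi P j, u < U j → u ≤ c := by
        intro u hu hlt
        exact E.le_max' u (Finset.mem_filter.mpr ⟨hu, hlt⟩)
      have Tb := isT_bot (j := j) (c := c) T hcL hcU
      have Tt := isT_top (j := j) (c := c) T hcL hcU hmax
      set Qb : Finset ι := Q.filter (fun i => lo i j < c) with hQb
      set Qt : Finset ι := Q.filter (fun i => ¬ lo i j < c) with hQt
      have hQbP : Qb ⊆ Pbot lo P j c := by
        intro i hi'
        obtain ⟨h1, h2⟩ := Finset.mem_filter.mp hi'
        exact mem_Pbot.mpr ⟨hQP h1, h2⟩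
      have hQtP : Qt ⊆ Ptop hi P j c := by
        intro i hi'
        obtain ⟨h1, h2⟩ := Finset.mem_filter.mp hi'
        exact mem_Ptop.mpr ⟨hQP h1, lt_of_le_of_lt (not_lt.mp h2) (T.lth i (hQP h1) j)⟩
      have hsplit : Qb.card + Qt.card = Q.card :=
        Finset.card_filter_add_card_filter_not (p := fun i => lo i j < c)
      have hmb : meas L (Function.update U j c) lo (hib hi j c) (Pbot lo P j c) ≤ N := by
        have := meas_bot_lt (j := j) (c := c) T hcU hcD
        omega
      have hmt : meas L U (lot L lo j) hi (Ptop hi P j c) ≤ N := by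
        have := meas_top_lt (j := j) (c := c) T hcL hcU hcD hmax
        omega
      have hsub := wall_cases (j := j) (c := c) T hcU hmax hQP
      
      set Wb := wallSet L (Function.update U j c) lo (hib hi j c) (Pbot lo P j c) Qb with hWb
      set Wt := wallSet L U (lot L lo j) hi (Ptop hi P j c) Qt with hWt
      by_cases hjc : (j, c) ∈ wallSet L U lo hi P Q
      · obtain ⟨hQbne, hQtne⟩ := wall_top_nonempty T hjc
        have h1 := ih L (Function.update U j c) lo (hib hi j c) (Pbot lo P j c) Qb
          hmb Tb hQbP hQbne
        have h2 := ih L U (lot L lo j) hi (Ptop hi P j c) Qt hmt Tt hQtP hQtne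
        rw [← hWb] at h1
        rw [← hWt] at h2
        have hcard : (wallSet L U lo hi P Q).card ≤ Wb.card + Wt.card + 1 := by
          have hsub2 : wallSet L U lo hi P Q ⊆ (Wb ∪ Wt) ∪ {(j, c)} := by
            intro w hw
            rcases hsub w hw with h | h | h
            · exact Finset.mem_union.mpr (Or.inr (Finset.mem_singleton.mpr h))
            · exact Finset.mem_union.mpr (Or.inl (Finset.mem_union.mpr (Or.inl h)))
            · exact Finset.mem_union.mpr (Or.inl (Finset.mem_union.mpr (Or.inr h)))
          calc (wallSet L U lo hi P Q).card ≤ ((Wb ∪ Wt) ∪ {(j, c)}).card :=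
                Finset.card_le_card hsub2
            _ ≤ (Wb ∪ Wt).card + ({(j, c)} : Finset (Fin d × ℝ)).card :=
                Finset.card_union_le _ _
            _ ≤ (Wb.card + Wt.card) + 1 := by
                have := Finset.card_union_le Wb Wt
                simp only [Finset.card_singleton]
                omega
        omega
      · have hcard : (wallSet L U lo hi P Q).card ≤ Wb.card + Wt.card := by
          have hsub2 : wallSet L U lo hi P Q ⊆ Wb ∪ Wt := by
            intro w hw
            rcases hsub w hw with h | h | h
            · exact absurd (h ▸ hw) hjc
            · exact Finset.mem_union.mpr (Or.inl h)
            · exact Finset.mem_union.mpr (Or.inr h)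
          calc (wallSet L U lo hi P Q).card ≤ (Wb ∪ Wt).card := Finset.card_le_card hsub2
            _ ≤ Wb.card + Wt.card := Finset.card_union_le _ _
        rcases Qb.eq_empty_or_nonempty with hQbe | hQbne
        · have hWbe : Wb = ∅ := by
            rw [Finset.eq_empty_iff_forall_notMem]
            intro w hw
            obtain ⟨i, hi'⟩ := nonempty_of_mem_wallSet hw
            rw [hQbe] at hi'
            exact absurd hi' (Finset.notMem_empty i)
          have hQtne : Qt.Nonempty := by
            rw [← Finset.card_pos]
            have := Finset.card_pos.mpr hQne
            rw [hQbe] at hsplit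
            simp at hsplit
            omega
          have h2 := ih L U (lot L lo j) hi (Ptop hi P j c) Qt hmt Tt hQtP hQtne
          rw [← hWt] at h2
          rw [hWbe] at hcard
          simp at hcard
          omega
        · rcases Qt.eq_empty_or_nonempty with hQte | hQtne
          · have hWte : Wt = ∅ := by
              rw [Finset.eq_empty_iff_forall_notMem]
              intro w hw
              obtain ⟨i, hi'⟩ := nonempty_of_mem_wallSet hw
              rw [hQte] at hi'
              exact absurd hi' (Finset.notMem_empty i)
            have h1 := ih L (Function.update U j c) lo (hib hi j c) (Pbot lo P j c) Qb
              hmb Tb hQbP hQbne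
            rw [← hWb] at h1
            rw [hWte] at hcard
            simp at hcard
            omega
          · have h1 := ih L (Function.update U j c) lo (hib hi j c) (Pbot lo P j c) Qb
              hmb Tb hQbP hQbne
            have h2 := ih L U (lot L lo j) hi (Ptop hi P j c) Qt hmt Tt hQtP hQtne
            rw [← hWb] at h1
            rw [← hWt] at h2
            omega

end HTBaux

/-- If a d-dimensional hypercuboid is tiled by n hypercuboids, the intersection of the
interior of the big hypercuboid with the union of the boundaries of the tiles can be
covered by at most n-1 axis-perpendicular hyperplanes. -/
theorem hypercuboid_tiling_boundary_cover
    (d n : ℕ) (L U : Fin d → ℝ) (hLU : ∀ j, L j < U j)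
    (lo hi : Fin n → Fin d → ℝ) (hlohi : ∀ i j, lo i j < hi i j)
    (hdisj : ∀ i i', i ≠ i' →
      (Set.univ.pi fun j => Set.Ioo (lo i j) (hi i j)) ∩
      (Set.univ.pi fun j => Set.Ioo (lo i' j) (hi i' j)) = ∅)
    (hunion : (⋃ i, Set.univ.pi fun j => Set.Icc (lo i j) (hi i j))
      = Set.univ.pi fun j => Set.Icc (L j) (U j)) :
    ∃ (ax : Fin (n - 1) → Fin d) (t : Fin (n - 1) → ℝ),
      (Set.univ.pi fun j => Set.Ioo (L j) (U j)) ∩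
        (⋃ i, frontier (Set.univ.pi fun j => Set.Icc (lo i j) (hi i j))) ⊆
      ⋃ k, {x : Fin d → ℝ | x (ax k) = t k} := by
  classical
  rcases Nat.eq_zero_or_pos n with rfl | hn
  · exfalso
    have hLmem : L ∈ Set.univ.pi fun j => Set.Icc (L j) (U j) :=
      fun j _ => ⟨le_refl _, le_of_lt (hLU j)⟩
    rw [← hunion] at hLmem
    rcases Set.mem_iUnion.mp hLmem with ⟨i, -⟩
    exact i.elim0
  rcases Nat.eq_zero_or_pos d with rfl | hd
  · have hn1 : n = 1 := by
      by_contra hne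
      have h2 : 2 ≤ n := by omega
      have hkey := hdisj ⟨0, by omega⟩ ⟨1, by omega⟩ (by simp [Fin.ext_iff])
      have hz : (fun j : Fin 0 => j.elim0) ∈
          ((Set.univ.pi fun j : Fin 0 => Set.Ioo (lo ⟨0, by omega⟩ j) (hi ⟨0, by omega⟩ j)) ∩
           (Set.univ.pi fun j : Fin 0 => Set.Ioo (lo ⟨1, by omega⟩ j) (hi ⟨1, by omega⟩ j))) :=
        ⟨fun j _ => j.elim0, fun j _ => j.elim0⟩
      rw [hkey] at hz
      exact hz
    subst hn1
    refine ⟨Fin.elim0, Fin.elim0, ?_⟩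
    intro x hx
    obtain ⟨-, hx2⟩ := hx
    rcases Set.mem_iUnion.mp hx2 with ⟨i, hxi⟩
    have htile : (Set.univ.pi fun j : Fin 0 => Set.Icc (lo i j) (hi i j)) = Set.univ :=
      Set.eq_univ_iff_forall.mpr (fun y j _ => j.elim0)
    rw [htile, frontier_univ] at hxi
    exact hxi.elim
  · have hsub : ∀ i, (Set.univ.pi fun j => Set.Icc (lo i j) (hi i j)) ⊆
        Set.univ.pi fun j => Set.Icc (L j) (U j) := by
      intro i
      rw [← hunion]
      exact Set.subset_iUnion (fun i => Set.univ.pi fun j => Set.Icc (lo i j) (hi i j)) i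
    have T : HTBaux.IsT L U lo hi (Finset.univ : Finset (Fin n)) := by
      constructor
      · exact hLU
      · intro i _ j
        have hmem : (fun k => lo i k) ∈ Set.univ.pi fun k => Set.Icc (lo i k) (hi i k) :=
          fun k _ => ⟨le_refl _, le_of_lt (hlohi i k)⟩
        exact ((hsub i hmem) j (Set.mem_univ j)).1
      · intro i _ j
        exact hlohi i j
      · intro i _ j
        have hmem : (fun k => hi i k) ∈ Set.univ.pi fun k => Set.Icc (lo i k) (hi i k) :=
          fun k _ => ⟨le_of_lt (hlohi i k), le_refl _⟩
        exact ((hsub i hmem) j (Set.mem_univ j)).2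
      · intro i _ i' _ hne
        by_contra hcon
        push_neg at hcon
        have hcon' : ∀ j, lo i' j < hi i j ∧ lo i j < hi i' j := hcon
        set z : Fin d → ℝ :=
          fun j => (max (lo i j) (lo i' j) + min (hi i j) (hi i' j)) / 2 with hz
        have hzmem : ∀ (a : Fin n), (∀ j, lo a j ≤ max (lo i j) (lo i' j)) →
            (∀ j, min (hi i j) (hi i' j) ≤ hi a j) → z ∈ Set.univ.pi fun j =>
              Set.Ioo (lo a j) (hi a j) := by
          intro a hmax hmin j _
          have hlt : max (lo i j) (lo i' j) < min (hi i j) (hi i' j) :=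
            max_lt (lt_min (hlohi i j) (hcon' j).2) (lt_min (hcon' j).1 (hlohi i' j))
          have h1 := hmax j
          have h2 := hmin j
          constructor
          · simp only [hz]; linarith
          · simp only [hz]; linarith
        have hzi := hzmem i (fun j => le_max_left _ _) (fun j => min_le_left _ _)
        have hzi' := hzmem i' (fun j => le_max_right _ _) (fun j => min_le_right _ _)
        have := hdisj i i' hne
        rw [Set.eq_empty_iff_forall_notMem] at this
        exact this z ⟨hzi, hzi'⟩
      · intro x hx
        have hmem : x ∈ Set.univ.pi fun j => Set.Icc (L j) (U j) :=
          fun j _ => ⟨(hx j).1, (hx j).2⟩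
        rw [← hunion] at hmem
        rcases Set.mem_iUnion.mp hmem with ⟨i, hxi⟩
        exact ⟨i, Finset.mem_univ i, fun j => hxi j (Set.mem_univ j)⟩
    have hQne : (Finset.univ : Finset (Fin n)).Nonempty := ⟨⟨0, hn⟩, Finset.mem_univ _⟩
    have hkey := HTBaux.key (HTBaux.meas L U lo hi Finset.univ) L U lo hi
      Finset.univ Finset.univ (le_refl _) T (subset_refl _) hQne
    set W := HTBaux.wallSet L U lo hi (Finset.univ : Finset (Fin n))
      (Finset.univ : Finset (Fin n)) with hW
    have hWcard : W.card ≤ n - 1 := by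
      have hcu : (Finset.univ : Finset (Fin n)).card = n := by
        rw [Finset.card_univ, Fintype.card_fin]
      omega
    set l := W.toList with hl
    have hlen : l.length = W.card := Finset.length_toList W
    refine ⟨fun k => if h : (k : ℕ) < l.length then (l.get ⟨k, h⟩).1 else ⟨0, hd⟩,
            fun k => if h : (k : ℕ) < l.length then (l.get ⟨k, h⟩).2 else 0, ?_⟩
    intro x hx
    obtain ⟨hx1, hx2⟩ := hx
    rcases Set.mem_iUnion.mp hx2 with ⟨i, hxi⟩
    have hclosed : IsClosed (Set.univ.pi fun j => Set.Icc (lo i j) (hi i j)) :=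
      isClosed_set_pi (fun j _ => isClosed_Icc)
    rw [hclosed.frontier_eq] at hxi
    obtain ⟨hxIcc, hxnIoo⟩ := hxi
    rw [interior_pi_set Set.finite_univ] at hxnIoo
    have hex : ∃ j, x j = lo i j ∨ x j = hi i j := by
      by_contra hcon
      push_neg at hcon
      apply hxnIoo
      intro j _
      show x j ∈ interior (Set.Icc (lo i j) (hi i j))
      rw [interior_Icc]
      have h1 := hxIcc j (Set.mem_univ j)
      obtain ⟨hc1, hc2⟩ := hcon j
      exact ⟨lt_of_le_of_ne h1.1 (Ne.symm hc1), lt_of_le_of_ne h1.2 hc2⟩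
    obtain ⟨j, hwj⟩ := hex
    have hwall : (j, x j) ∈ W := by
      rw [hW]
      refine HTBaux.mem_wallSet.mpr ⟨⟨i, Finset.mem_univ i, ?_⟩,
        ⟨(hx1 j (Set.mem_univ j)).1, (hx1 j (Set.mem_univ j)).2⟩,
        fun a _ _ => Finset.mem_univ a⟩
      rcases hwj with h | h
      · exact Or.inl h.symm
      · exact Or.inr h.symm
    have hmeml : (j, x j) ∈ l := (Finset.mem_toList).mpr hwall
    obtain ⟨m, hm, hgetm⟩ := List.mem_iff_getElem.mp hmeml
    have hk : m < n - 1 := by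
      rw [hlen] at hm
      omega
    refine Set.mem_iUnion.mpr ⟨⟨m, hk⟩, ?_⟩
    simp only [Set.mem_setOf_eq]
    rw [dif_pos hm, dif_pos hm]
    have hget : l.get ⟨m, hm⟩ = (j, x j) := by
      rw [List.get_eq_getElem]
      exact hgetm
    rw [hget]
end

section
/- Suppose a d-dimensional axis-parallel hypercuboid C (d ≥ 2) is tiled by n hypercuboids C₁,…,Cₙ. Then there exist distinct indices i, j ∈ {1,…,d} such that the number of distinct i-th coordinates of vertices of the tiles plus the number of distinct j-th coordinates of vertices of the tiles is at most 2(n−1)/d + 4. -/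
/-- If a d-dimensional hypercuboid (d ≥ 2) is tiled by n hypercuboids, there exist two
distinct coordinate directions i, j such that the number of distinct i-th coordinates of
vertices of the tiles plus the number of distinct j-th coordinates is at most
2(n-1)/d + 4. -/
theorem hypercuboid_tiling_two_directions_few_coords
    (d n : ℕ) (hd : 2 ≤ d) (L U : Fin d → ℝ) (hLU : ∀ j, L j < U j)
    (lo hi : Fin n → Fin d → ℝ) (hlohi : ∀ i j, lo i j < hi i j)
    (hdisj : ∀ i i', i ≠ i' →
      (Set.univ.pi fun j => Set.Ioo (lo i j) (hi i j)) ∩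
      (Set.univ.pi fun j => Set.Ioo (lo i' j) (hi i' j)) = ∅)
    (hunion : (⋃ i, Set.univ.pi fun j => Set.Icc (lo i j) (hi i j))
      = Set.univ.pi fun j => Set.Icc (L j) (U j)) :
    ∃ i j : Fin d, i ≠ j ∧
      ((((Set.range fun k => lo k i) ∪ (Set.range fun k => hi k i)).ncard : ℝ) +
       (((Set.range fun k => lo k j) ∪ (Set.range fun k => hi k j)).ncard : ℝ)
        ≤ 2 * ((n : ℝ) - 1) / d + 4) := by
  classical
  -- every point of C is covered by some tile
  have hcover : ∀ x : Fin d → ℝ, (∀ j, L j ≤ x j ∧ x j ≤ U j) →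
      ∃ k : Fin n, ∀ j, lo k j ≤ x j ∧ x j ≤ hi k j := by
    intro x hx
    have hxC : x ∈ Set.univ.pi fun j => Set.Icc (L j) (U j) :=
      fun j _ => ⟨(hx j).1, (hx j).2⟩
    rw [← hunion] at hxC
    obtain ⟨k, hk⟩ := Set.mem_iUnion.mp hxC
    exact ⟨k, fun j => hk j (Set.mem_univ j)⟩
  -- every point of a tile is in C
  have hmemC : ∀ (k : Fin n) (x : Fin d → ℝ), (∀ j, lo k j ≤ x j ∧ x j ≤ hi k j) →
      ∀ j, L j ≤ x j ∧ x j ≤ U j := by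
    intro k x hx
    have h1 : x ∈ (⋃ i, Set.univ.pi fun j => Set.Icc (lo i j) (hi i j)) :=
      Set.mem_iUnion.mpr ⟨k, fun j _ => ⟨(hx j).1, (hx j).2⟩⟩
    rw [hunion] at h1
    exact fun j => h1 j (Set.mem_univ j)
  have hsub : ∀ (k : Fin n) (j : Fin d), L j ≤ lo k j ∧ hi k j ≤ U j := by
    intro k j
    have h1 := hmemC k (lo k) (fun j => ⟨le_rfl, (hlohi k j).le⟩) j
    have h2 := hmemC k (hi k) (fun j => ⟨(hlohi k j).le, le_rfl⟩) j
    exact ⟨h1.1, h2.2⟩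
  -- two tiles whose open boxes overlap are equal
  have heq : ∀ k k' : Fin n,
      (∀ j, max (lo k j) (lo k' j) < min (hi k j) (hi k' j)) → k = k' := by
    intro k k' h
    by_contra hne
    have h0 := hdisj k k' hne
    have hz : (fun j => (max (lo k j) (lo k' j) + min (hi k j) (hi k' j)) / 2) ∈
        (Set.univ.pi fun j => Set.Ioo (lo k j) (hi k j)) ∩
        (Set.univ.pi fun j => Set.Ioo (lo k' j) (hi k' j)) := by
      constructor
      · intro j _
        have h1 := le_max_left (lo k j) (lo k' j)
        have h2 := min_le_left (hi k j) (hi k' j)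
        have h3 := h j
        exact ⟨by linarith, by linarith⟩
      · intro j _
        have h1 := le_max_right (lo k j) (lo k' j)
        have h2 := min_le_right (hi k j) (hi k' j)
        have h3 := h j
        exact ⟨by linarith, by linarith⟩
    rw [h0] at hz
    exact hz
  -- the corner tile
  obtain ⟨k₀, hk₀⟩ := hcover L (fun j => ⟨le_rfl, (hLU j).le⟩)
  have hn1 : 1 ≤ n := k₀.pos
  have hk₀lo : ∀ j, lo k₀ j = L j := fun j => le_antisymm (hk₀ j).1 (hsub k₀ j).1
  -- grid of coordinate values in each direction
  set G : Fin d → Finset ℝ := fun j => insert (L j) (insert (U j)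
    ((Finset.image (fun k => lo k j) Finset.univ) ∪
      Finset.image (fun k => hi k j) Finset.univ)) with hG
  have hGL : ∀ j, L j ∈ G j := by intro j; simp [hG]
  have hGU : ∀ j, U j ∈ G j := by intro j; simp [hG]
  have hGlo : ∀ (k : Fin n) j, lo k j ∈ G j := by
    intro k j
    simp only [hG, Finset.mem_insert, Finset.mem_union, Finset.mem_image]
    right; right; left; exact ⟨k, Finset.mem_univ k, rfl⟩
  have hGhi : ∀ (k : Fin n) j, hi k j ∈ G j := by
    intro k j
    simp only [hG, Finset.mem_insert, Finset.mem_union, Finset.mem_image]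
    right; right; right; exact ⟨k, Finset.mem_univ k, rfl⟩
  -- a positive ε smaller than a quarter of any grid gap
  have hgapex : ∃ ε : ℝ, 0 < ε ∧ ∀ (j : Fin d) (a b : ℝ),
      a ∈ G j → b ∈ G j → a < b → 4 * ε ≤ b - a := by
    set gapset : Finset ℝ := insert 1 (Finset.univ.biUnion fun j : Fin d =>
      ((G j ×ˢ G j).filter fun pr => pr.1 < pr.2).image fun pr => pr.2 - pr.1) with hgs
    have hne : gapset.Nonempty := ⟨1, by simp [hgs]⟩
    have hpos : ∀ x ∈ gapset, 0 < x := by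
      intro x hx
      rcases Finset.mem_insert.mp hx with h | h
      · rw [h]; norm_num
      · obtain ⟨j, -, hj⟩ := Finset.mem_biUnion.mp h
        obtain ⟨pr, hpr, hval⟩ := Finset.mem_image.mp hj
        have := (Finset.mem_filter.mp hpr).2
        rw [← hval]
        linarith
    refine ⟨gapset.min' hne / 4, ?_, ?_⟩
    · have := hpos _ (gapset.min'_mem hne)
      linarith
    · intro j a b ha hb hab
      have hmem : b - a ∈ gapset := by
        refine Finset.mem_insert_of_mem (Finset.mem_biUnion.mpr ⟨j, Finset.mem_univ _, ?_⟩)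
        exact Finset.mem_image.mpr ⟨(a, b), Finset.mem_filter.mpr
          ⟨Finset.mem_product.mpr ⟨ha, hb⟩, hab⟩, rfl⟩
      have := gapset.min'_le _ hmem
      linarith
  obtain ⟨ε, hεpos, hgap⟩ := hgapex
  have hround_le : ∀ (j : Fin d) (a c : ℝ), a ∈ G j → c ∈ G j → a ≤ c + ε → a ≤ c := by
    intro j a c ha hc h
    by_contra hlt
    push_neg at hlt
    have := hgap j c a hc ha hlt
    linarith
  have hround_ge : ∀ (j : Fin d) (a c : ℝ), a ∈ G j → c ∈ G j → c - ε ≤ a → c ≤ a := by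
    intro j a c ha hc h
    by_contra hlt
    push_neg at hlt
    have := hgap j a c ha hc hlt
    linarith
  -- interior grid values
  set I : Fin d → Finset ℝ := fun j =>
    ((Finset.image (fun k => lo k j) Finset.univ) ∪
      Finset.image (fun k => hi k j) Finset.univ).filter (fun c => L j < c ∧ c < U j)
    with hIdef
  have hImem : ∀ (j : Fin d) (c : ℝ), c ∈ I j ↔
      ((∃ k, lo k j = c) ∨ ∃ k, hi k j = c) ∧ (L j < c ∧ c < U j) := by
    intro j c
    simp [hIdef, Finset.mem_filter, Finset.mem_union, Finset.mem_image]
  -- each interior value is the lower coordinate of some tile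
  have cand : ∀ (j : Fin d) (c : ℝ), c ∈ I j → ∃ k, lo k j = c := by
    intro j c hcI
    have hc := (hImem j c).mp hcI
    have hLc := hc.2.1
    have hcU := hc.2.2
    rcases hc.1 with ⟨k, hk⟩ | ⟨t, ht⟩
    · exact ⟨k, hk⟩
    · have hcG : c ∈ G j := ht ▸ hGhi t j
      set q : Fin d → ℝ := fun i => if i = j then c + ε else (lo t i + hi t i) / 2 with hq
      have hqC : ∀ i, L i ≤ q i ∧ q i ≤ U i := by
        intro i
        by_cases hij : i = j
        · subst hij
          simp only [hq, if_pos rfl]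
          constructor
          · linarith
          · have := hgap i c (U i) hcG (hGU i) hcU
            linarith
        · simp only [hq, if_neg hij]
          have h1 := (hsub t i).1
          have h2 := (hsub t i).2
          have h3 := hlohi t i
          constructor <;> linarith
      obtain ⟨k, hkq⟩ := hcover q hqC
      have hqj : q j = c + ε := by simp [hq]
      have hkj1 : lo k j ≤ c := by
        refine hround_le j _ _ (hGlo k j) hcG ?_
        have := (hkq j).1
        rw [hqj] at this
        linarith
      have hkj2 : c < hi k j := by
        have := (hkq j).2
        rw [hqj] at this
        linarith
      rcases eq_or_lt_of_le hkj1 with heqc | hlt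
      · exact ⟨k, heqc⟩
      · exfalso
        have hkt : k = t := by
          apply heq
          intro i
          by_cases hij : i = j
          · subst hij
            rw [max_lt_iff, lt_min_iff, lt_min_iff]
            refine ⟨⟨hlohi k i, ?_⟩, ?_, hlohi t i⟩
            · rw [ht]; exact hlt
            · calc lo t i < hi t i := hlohi t i
                _ = c := ht
                _ < hi k i := hkj2
          · have hm := (hkq i).1
            have hM := (hkq i).2
            rw [hq] at hm hM
            simp only [if_neg hij] at hm hM
            have h3 := hlohi t i
            have h4 := hlohi k i
            rw [max_lt_iff, lt_min_iff, lt_min_iff]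
            exact ⟨⟨h4, by linarith⟩, by linarith, h3⟩
        rw [hkt, ht] at hkj2
        exact lt_irrefl _ hkj2
  -- per-direction bound on the number of coordinates
  have hcard : ∀ j : Fin d,
      ((Set.range fun k => lo k j) ∪ Set.range fun k => hi k j).ncard ≤ (I j).card + 2 := by
    intro j
    have hsubS : ((Set.range fun k => lo k j) ∪ Set.range fun k => hi k j) ⊆
        insert (L j) (insert (U j) (↑(I j) : Set ℝ)) := by
      rintro x (⟨k, rfl⟩ | ⟨k, rfl⟩)
      · have h1 := (hsub k j).1
        have h2 : lo k j ≤ U j := le_trans (hlohi k j).le (hsub k j).2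
        rcases eq_or_lt_of_le h1 with he | hlt
        · exact Set.mem_insert_iff.mpr (Or.inl he.symm)
        · rcases eq_or_lt_of_le h2 with he | hlt2
          · exact Set.mem_insert_iff.mpr (Or.inr (Set.mem_insert_iff.mpr (Or.inl he)))
          · refine Set.mem_insert_iff.mpr (Or.inr (Set.mem_insert_iff.mpr (Or.inr ?_)))
            exact Finset.mem_coe.mpr ((hImem j _).mpr ⟨Or.inl ⟨k, rfl⟩, hlt, hlt2⟩)
      · have h1 : L j ≤ hi k j := le_trans (hsub k j).1 (hlohi k j).le
        have h2 := (hsub k j).2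
        rcases eq_or_lt_of_le h1 with he | hlt
        · exact Set.mem_insert_iff.mpr (Or.inl he.symm)
        · rcases eq_or_lt_of_le h2 with he | hlt2
          · exact Set.mem_insert_iff.mpr (Or.inr (Set.mem_insert_iff.mpr (Or.inl he)))
          · refine Set.mem_insert_iff.mpr (Or.inr (Set.mem_insert_iff.mpr (Or.inr ?_)))
            exact Finset.mem_coe.mpr ((hImem j _).mpr ⟨Or.inr ⟨k, rfl⟩, hlt, hlt2⟩)
    have hfin : (insert (L j) (insert (U j) (↑(I j) : Set ℝ))).Finite :=
      (((I j).finite_toSet).insert _).insert _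
    calc ((Set.range fun k => lo k j) ∪ Set.range fun k => hi k j).ncard
        ≤ (insert (L j) (insert (U j) (↑(I j) : Set ℝ))).ncard :=
          Set.ncard_le_ncard hsubS hfin
      _ ≤ (insert (U j) (↑(I j) : Set ℝ)).ncard + 1 := Set.ncard_insert_le _ _
      _ ≤ ((↑(I j) : Set ℝ).ncard + 1) + 1 := by
          have := Set.ncard_insert_le (U j) (↑(I j) : Set ℝ)
          omega
      _ = (I j).card + 2 := by rw [Set.ncard_coe_finset]
  -- the set of (direction, interior value) pairs
  set P : Finset (Fin d × ℝ) :=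
    Finset.univ.biUnion (fun j => (I j).image fun c => (j, c)) with hPdef
  have hPmem : ∀ p : Fin d × ℝ, p ∈ P → p.2 ∈ I p.1 := by
    intro p hp
    obtain ⟨j, -, hj⟩ := Finset.mem_biUnion.mp hp
    obtain ⟨c, hc, rfl⟩ := Finset.mem_image.mp hj
    exact hc
  have hPcard : P.card = ∑ j, (I j).card := by
    rw [hPdef, Finset.card_biUnion]
    · exact Finset.sum_congr rfl fun j _ =>
        Finset.card_image_of_injective _ (fun a b h => by injection h)
    · intro x _ y _ hxy
      rw [Function.onFun, Finset.disjoint_left]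
      rintro p hp hq
      obtain ⟨c, -, rfl⟩ := Finset.mem_image.mp hp
      obtain ⟨c', -, h⟩ := Finset.mem_image.mp hq
      exact hxy (by injection h.symm)
  -- choice of a minimizing tile for each pair
  have hpick' : ∀ p : Fin d × ℝ, ∃ k : Fin n, p ∈ P →
      lo k p.1 = p.2 ∧ ∀ k' : Fin n, lo k' p.1 = p.2 →
        (∑ i, lo k i) ≤ ∑ i, lo k' i := by
    intro p
    by_cases hp : p ∈ P
    · obtain ⟨j, -, hj⟩ := Finset.mem_biUnion.mp hp
      obtain ⟨c, hc, rfl⟩ := Finset.mem_image.mp hj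
      obtain ⟨kc, hkc⟩ := cand j c hc
      have hKne : (Finset.univ.filter fun k : Fin n => lo k j = c).Nonempty :=
        ⟨kc, by simp [hkc]⟩
      obtain ⟨k, hkmem, hkmin⟩ := Finset.exists_min_image _ (fun k => ∑ i, lo k i) hKne
      exact ⟨k, fun _ => ⟨(Finset.mem_filter.mp hkmem).2,
        fun k' h' => hkmin k' (by simp [h'])⟩⟩
    · exact ⟨k₀, fun h => absurd h hp⟩
  choose pick hpickspec using hpick'
  -- the injection avoids the corner tile
  have hmaps : ∀ p ∈ P, pick p ∈ Finset.univ.erase k₀ := by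
    intro p hp
    obtain ⟨h1, -⟩ := hpickspec p hp
    have h2 := (hImem p.1 p.2).mp (hPmem p hp)
    refine Finset.mem_erase.mpr ⟨?_, Finset.mem_univ _⟩
    intro hcontra
    rw [hcontra, hk₀lo] at h1
    exact absurd h1.symm (ne_of_gt h2.2.1)
  -- the key geometric fact: a single tile cannot be minimal for two directions
  have hfalse : ∀ (k : Fin n) (j j' : Fin d) (c c' : ℝ), j ≠ j' →
      lo k j = c → lo k j' = c' →
      L j < c → c < U j → L j' < c' → c' < U j' →
      (∀ k', lo k' j = c → (∑ i, lo k i) ≤ ∑ i, lo k' i) →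
      (∀ k', lo k' j' = c' → (∑ i, lo k i) ≤ ∑ i, lo k' i) → False := by
    intro k j j' c c' hjj hkj hkj' hLc hcU hLc' hcU' hminj hminj'
    have hcG : c ∈ G j := hkj ▸ hGlo k j
    have hcG' : c' ∈ G j' := hkj' ▸ hGlo k j'
    have core : ∀ (a b : Fin d) (ca cb : ℝ) (s : Fin n), a ≠ b →
        lo k a = ca → lo k b = cb →
        L a < ca → ca < U a → L b < cb → cb < U b →
        (∀ k', lo k' a = ca → (∑ i, lo k i) ≤ ∑ i, lo k' i) →
        lo s a < ca → hi s a = ca → lo s b < cb → cb ≤ hi s b →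
        (∀ i, i ≠ a → i ≠ b → lo s i ≤ lo k i ∧ lo k i < hi s i) → False := by
      intro a b ca cb s hab hka hkb hLa hUa hLb hUb hmin hsa1 hsa2 hsb1 hsb2 hsi
      have hcaG : ca ∈ G a := hka ▸ hGlo k a
      have hcbG : cb ∈ G b := hkb ▸ hGlo k b
      set w : Fin d → ℝ := fun i => if i = a then ca + ε else
        if i = b then cb - ε else lo k i + ε with hw
      have hwa : w a = ca + ε := by simp [hw]
      have hwb : w b = cb - ε := by
        have : ¬ (b = a) := fun h => hab h.symm
        simp [hw, this]
      have hwi : ∀ i, i ≠ a → i ≠ b → w i = lo k i + ε := by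
        intro i h1 h2
        simp only [hw]
        rw [if_neg h1, if_neg h2]
      have hwC : ∀ i, L i ≤ w i ∧ w i ≤ U i := by
        intro i
        by_cases h1 : i = a
        · subst h1
          rw [hwa]
          have := hgap i ca (U i) hcaG (hGU i) hUa
          constructor <;> linarith
        · by_cases h2 : i = b
          · subst h2
            rw [hwb]
            have := hgap i (L i) cb (hGL i) hcbG hLb
            constructor <;> linarith
          · rw [hwi i h1 h2]
            have h3 := (hsub k i).1
            have h4 := (hsub k i).2
            have h5 := hgap i (lo k i) (hi k i) (hGlo k i) (hGhi k i) (hlohi k i)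
            constructor <;> linarith
      obtain ⟨u, hu⟩ := hcover w hwC
      have hua1 : lo u a ≤ ca := by
        refine hround_le a _ _ (hGlo u a) hcaG ?_
        have := (hu a).1; rw [hwa] at this; linarith
      have hua2 : ca < hi u a := by
        have := (hu a).2; rw [hwa] at this; linarith
      have hub1 : lo u b < cb := by
        have := (hu b).1; rw [hwb] at this; linarith
      have hub2 : cb ≤ hi u b := by
        refine hround_ge b _ _ (hGhi u b) hcbG ?_
        have := (hu b).2; rw [hwb] at this; linarith
      have hui : ∀ i, i ≠ a → i ≠ b → lo u i ≤ lo k i ∧ lo k i < hi u i := by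
        intro i h1 h2
        have hm := (hu i).1
        have hM := (hu i).2
        rw [hwi i h1 h2] at hm hM
        exact ⟨hround_le i _ _ (hGlo u i) (hGlo k i) hm, by linarith⟩
      have hua : lo u a = ca := by
        rcases eq_or_lt_of_le hua1 with he | hlt
        · exact he
        · exfalso
          have hus : u = s := by
            apply heq
            intro i
            rw [max_lt_iff, lt_min_iff, lt_min_iff]
            by_cases h1 : i = a
            · subst h1
              refine ⟨⟨hlohi u i, ?_⟩, ?_, hlohi s i⟩
              · rw [hsa2]; exact hlt
              · linarith
            · by_cases h2 : i = b
              · subst h2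
                refine ⟨⟨hlohi u i, ?_⟩, ?_, hlohi s i⟩
                · linarith
                · linarith
              · obtain ⟨h3, h4⟩ := hui i h1 h2
                obtain ⟨h5, h6⟩ := hsi i h1 h2
                exact ⟨⟨hlohi u i, by linarith⟩, by linarith, hlohi s i⟩
          rw [hus] at hua2
          rw [hsa2] at hua2
          exact lt_irrefl _ hua2
      have hle : ∀ i, lo u i ≤ lo k i := by
        intro i
        by_cases h1 : i = a
        · subst h1; rw [hua, hka]
        · by_cases h2 : i = b
          · subst h2; rw [hkb]; exact hub1.le
          · exact (hui i h1 h2).1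
      have hlt : (∑ i, lo u i) < ∑ i, lo k i := by
        refine Finset.sum_lt_sum (fun i _ => hle i) ⟨b, Finset.mem_univ b, ?_⟩
        rw [hkb]; exact hub1
      have := hmin u hua
      linarith
    -- the diagonal tile s below the corner of k
    set x : Fin d → ℝ := fun i => if i = j then c - ε else
      if i = j' then c' - ε else lo k i + ε with hx
    have hxj : x j = c - ε := by simp [hx]
    have hxj' : x j' = c' - ε := by
      have : ¬ (j' = j) := fun h => hjj h.symm
      simp [hx, this]
    have hxi : ∀ i, i ≠ j → i ≠ j' → x i = lo k i + ε := by
      intro i h1 h2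
      simp only [hx]
      rw [if_neg h1, if_neg h2]
    have hxC : ∀ i, L i ≤ x i ∧ x i ≤ U i := by
      intro i
      by_cases h1 : i = j
      · subst h1
        rw [hxj]
        have := hgap i (L i) c (hGL i) hcG hLc
        constructor <;> linarith
      · by_cases h2 : i = j'
        · subst h2
          rw [hxj']
          have := hgap i (L i) c' (hGL i) hcG' hLc'
          constructor <;> linarith
        · rw [hxi i h1 h2]
          have h3 := (hsub k i).1
          have h4 := (hsub k i).2
          have h5 := hgap i (lo k i) (hi k i) (hGlo k i) (hGhi k i) (hlohi k i)
          constructor <;> linarith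
    obtain ⟨s, hs⟩ := hcover x hxC
    have hsj1 : lo s j < c := by
      have := (hs j).1; rw [hxj] at this; linarith
    have hsj2 : c ≤ hi s j := by
      refine hround_ge j _ _ (hGhi s j) hcG ?_
      have := (hs j).2; rw [hxj] at this; linarith
    have hsj'1 : lo s j' < c' := by
      have := (hs j').1; rw [hxj'] at this; linarith
    have hsj'2 : c' ≤ hi s j' := by
      refine hround_ge j' _ _ (hGhi s j') hcG' ?_
      have := (hs j').2; rw [hxj'] at this; linarith
    have hsi : ∀ i, i ≠ j → i ≠ j' → lo s i ≤ lo k i ∧ lo k i < hi s i := by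
      intro i h1 h2
      have hm := (hs i).1
      have hM := (hs i).2
      rw [hxi i h1 h2] at hm hM
      exact ⟨hround_le i _ _ (hGlo s i) (hGlo k i) hm, by linarith⟩
    have hkey : hi s j = c ∨ hi s j' = c' := by
      by_contra hcon
      push_neg at hcon
      have h1 : c < hi s j := lt_of_le_of_ne hsj2 (Ne.symm hcon.1)
      have h2 : c' < hi s j' := lt_of_le_of_ne hsj'2 (Ne.symm hcon.2)
      have hsk : s = k := by
        apply heq
        intro i
        rw [max_lt_iff, lt_min_iff, lt_min_iff]
        by_cases hh1 : i = j
        · subst hh1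
          refine ⟨⟨hlohi s i, ?_⟩, ?_, hlohi k i⟩
          · linarith [hlohi k i, hkj]
          · linarith [hkj]
        · by_cases hh2 : i = j'
          · subst hh2
            refine ⟨⟨hlohi s i, ?_⟩, ?_, hlohi k i⟩
            · linarith [hlohi k i, hkj']
            · linarith [hkj']
          · obtain ⟨h5, h6⟩ := hsi i hh1 hh2
            exact ⟨⟨hlohi s i, by linarith [hlohi k i]⟩, by linarith, hlohi k i⟩
      rw [hsk, hkj] at hsj1
      exact lt_irrefl _ hsj1
    rcases hkey with hc1 | hc2
    · exact core j j' c c' s hjj hkj hkj' hLc hcU hLc' hcU' hminj hsj1 hc1 hsj'1 hsj'2 hsi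
    · exact core j' j c' c s (Ne.symm hjj) hkj' hkj hLc' hcU' hLc hcU hminj' hsj'1 hc2 hsj1 hsj2
        (fun i h1 h2 => hsi i h2 h1)
  -- injectivity
  have hinj : Set.InjOn pick ↑P := by
    intro p hp q hq hpq
    have hp' : p ∈ P := hp
    have hq' : q ∈ P := hq
    obtain ⟨hlop, hminp⟩ := hpickspec p hp'
    obtain ⟨hloq, hminq⟩ := hpickspec q hq'
    by_cases hjj : p.1 = q.1
    · have h2 : p.2 = q.2 := by rw [← hlop, hpq, hjj, hloq]
      exact Prod.ext hjj h2
    · exfalso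
      rw [hpq] at hlop hminp
      have hip := (hImem p.1 p.2).mp (hPmem p hp')
      have hiq := (hImem q.1 q.2).mp (hPmem q hq')
      exact hfalse (pick q) p.1 q.1 p.2 q.2 hjj hlop hloq hip.2.1 hip.2.2 hiq.2.1 hiq.2.2
        hminp hminq
  have hsumN : (∑ j, (I j).card) ≤ n - 1 := by
    have h1 := Finset.card_le_card_of_injOn pick hmaps hinj
    rwa [hPcard, Finset.card_erase_of_mem (Finset.mem_univ _), Finset.card_univ,
      Fintype.card_fin] at h1
  -- choose the two directions with fewest interior values
  have hdpos : 0 < d := by omega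
  obtain ⟨i₀, -, hi₀min⟩ := Finset.exists_min_image Finset.univ (fun j => (I j).card)
    ⟨⟨0, hdpos⟩, Finset.mem_univ _⟩
  have herased : (Finset.univ.erase i₀).Nonempty := by
    rw [← Finset.card_pos, Finset.card_erase_of_mem (Finset.mem_univ _),
      Finset.card_univ, Fintype.card_fin]
    omega
  obtain ⟨j₀, hj₀mem, hj₀min⟩ := Finset.exists_min_image _ (fun j => (I j).card) herased
  refine ⟨i₀, j₀, (Finset.ne_of_mem_erase hj₀mem).symm, ?_⟩
  -- final arithmetic
  have hcardA : ∀ j : Fin d,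
      ((((Set.range fun k => lo k j) ∪ Set.range fun k => hi k j).ncard : ℝ))
        ≤ ((I j).card : ℝ) + 2 := by
    intro j
    exact_mod_cast hcard j
  have hsumR : (∑ j, ((I j).card : ℝ)) ≤ (n : ℝ) - 1 := by
    have := (Nat.cast_le (α := ℝ)).mpr hsumN
    push_cast [Nat.cast_sub hn1] at this
    exact this
  set X : ℝ := ((I i₀).card : ℝ) + ((I j₀).card : ℝ) with hX
  set E : Finset (Fin d) := (Finset.univ.erase i₀).erase j₀ with hE
  have hXle : ∀ j ∈ E, X ≤ 2 * ((I j).card : ℝ) := by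
    intro j hj
    have h1 := hi₀min j (Finset.mem_univ _)
    have h2 := hj₀min j (Finset.mem_of_mem_erase hj)
    have h1' := (Nat.cast_le (α := ℝ)).mpr h1
    have h2' := (Nat.cast_le (α := ℝ)).mpr h2
    rw [hX]; linarith
  have hcard2 : ((E.card : ℝ)) = (d : ℝ) - 2 := by
    rw [hE, Finset.card_erase_of_mem hj₀mem,
      Finset.card_erase_of_mem (Finset.mem_univ _), Finset.card_univ, Fintype.card_fin]
    have : d - 1 - 1 = d - 2 := by omega
    rw [this, Nat.cast_sub hd]
    norm_num
  have hlow : ((d : ℝ) - 2) * X ≤ ∑ j ∈ E, 2 * ((I j).card : ℝ) := by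
    have := Finset.card_nsmul_le_sum E (fun j => 2 * ((I j).card : ℝ)) X hXle
    rwa [nsmul_eq_mul, hcard2] at this
  have hsplit : (∑ j, ((I j).card : ℝ))
      = ((I i₀).card : ℝ) + (((I j₀).card : ℝ) + ∑ j ∈ E, ((I j).card : ℝ)) := by
    rw [hE, ← Finset.add_sum_erase Finset.univ (fun j => (((I j).card : ℝ)))
      (Finset.mem_univ i₀), ← Finset.add_sum_erase _ _ hj₀mem]
  have hsum2 : (∑ j ∈ E, 2 * ((I j).card : ℝ)) = 2 * ∑ j ∈ E, ((I j).card : ℝ) := by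
    rw [Finset.mul_sum]
  have hdX : (d : ℝ) * X ≤ 2 * ((n : ℝ) - 1) := by
    have hring : (d : ℝ) * X = ((d : ℝ) - 2) * X + 2 * X := by ring
    rw [hX] at *
    nlinarith [hlow, hsumR, hsplit]
  have hd0 : (0 : ℝ) < d := by
    have : (0:ℕ) < d := by omega
    exact_mod_cast this
  have hXdiv : X ≤ 2 * ((n : ℝ) - 1) / d := by
    rw [le_div_iff₀ hd0]
    linarith [hdX]
  have h1 := hcardA i₀
  have h2 := hcardA j₀
  rw [hX] at hXdiv
  linarith
end
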